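/- arXiv:1811.07064 — 5 statements merged into one kernel-verified Lean document; each statement's English description precedes it below -/
import Mathlib

section
/- Let k ≥ 3, d ≥ 3 and ν ≥ 0 be fixed integers. For all sufficiently large n there exists a family F ⊆ binom([n],k) that is d-cluster-free, has matching number exactly ν+1, and satisfies |F| = C(n-kν-1, k-1) + ν. In particular, the maximum size of a d-cluster-free family in binom([n],k) with matching number at least ν+1 is at least C(n-kν-1, k-1) + ν. -/
open Finset

/-- `F` contains a `d`-cluster of `k`-sets: `d` distinct members whose union has size at most
`2k` and whose common intersection is empty. -/
def HasCluster (d k : ℕ) (F : Finset (Finset ℕ)) : Prop :=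
  ∃ A : Fin d → Finset ℕ, Function.Injective A ∧ (∀ i, A i ∈ F) ∧
    (Finset.univ.sup A).card ≤ 2 * k ∧ (⋂ i, (A i : Set ℕ)) = ∅

open scoped Classical in
/-- The matching number of a family: the maximum number of pairwise disjoint members. -/
noncomputable def matchingNumber (F : Finset (Finset ℕ)) : ℕ :=
  (F.powerset.filter
    (fun M : Finset (Finset ℕ) => (M : Set (Finset ℕ)).PairwiseDisjoint id)).sup Finset.card

theorem stmt0 (k d ν : ℕ) (hk : 3 ≤ k) (hd : 3 ≤ d) :
    ∃ N : ℕ, ∀ n ≥ N, ∃ F : Finset (Finset ℕ),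
      F ⊆ Finset.powersetCard k (Finset.range n) ∧
      ¬ HasCluster d k F ∧
      matchingNumber F = ν + 1 ∧
      F.card = Nat.choose (n - k * ν - 1) (k - 1) + ν := by
  classical
  refine ⟨k * ν + k + 1, fun n hn => ?_⟩
  set m : ℕ := k * ν + 1 with hm
  have hmn : m + k ≤ n := by omega
  -- the blocks
  set B : ℕ → Finset ℕ := fun i => Finset.Ico (k * i + 1) (k * i + k + 1) with hB
  -- the star
  set S : Finset (Finset ℕ) :=
    (Finset.powersetCard (k - 1) (Finset.Ico m n)).image (insert 0) with hS
  set T : Finset (Finset ℕ) := (Finset.range ν).image B with hT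
  -- basic facts about S
  have hSmem : ∀ s ∈ S, ∃ t : Finset ℕ, t ⊆ Finset.Ico m n ∧ t.card = k - 1 ∧ s = insert 0 t := by
    intro s hs
    simp only [hS, Finset.mem_image, Finset.mem_powersetCard] at hs
    obtain ⟨t, ⟨ht1, ht2⟩, rfl⟩ := hs
    exact ⟨t, ht1, ht2, rfl⟩
  have hS0 : ∀ s ∈ S, 0 ∈ s := by
    intro s hs; obtain ⟨t, -, -, rfl⟩ := hSmem s hs; exact Finset.mem_insert_self _ _
  have hScard : ∀ s ∈ S, s.card = k := by
    intro s hs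
    obtain ⟨t, ht1, ht2, rfl⟩ := hSmem s hs
    have h0 : (0:ℕ) ∉ t := by
      intro h; have := ht1 h; rw [Finset.mem_Ico] at this; omega
    rw [Finset.card_insert_of_notMem h0, ht2]; omega
  -- basic facts about T
  have hBcard : ∀ i, (B i).card = k := by
    intro i; rw [hB]; simp [Nat.card_Ico]
  have hBsub : ∀ i < ν, B i ⊆ Finset.Ico 1 m := by
    intro i hi x hx
    rw [hB] at hx; rw [Finset.mem_Ico] at hx ⊢
    have : k * (i + 1) ≤ k * ν := Nat.mul_le_mul_left k hi
    rw [Nat.mul_add, Nat.mul_one] at this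
    omega
  have hBinj : Function.Injective B := by
    intro i j hij
    have hi : k * i + 1 ∈ B i := by rw [hB]; rw [Finset.mem_Ico]; omega
    have hj : k * j + 1 ∈ B j := by rw [hB]; rw [Finset.mem_Ico]; omega
    rw [hij] at hi; rw [← hij] at hj
    rw [hB] at hi hj; rw [Finset.mem_Ico] at hi hj
    have : k * i = k * j := by omega
    exact Nat.eq_of_mul_eq_mul_left (by omega) this
  have hBdisj : ∀ i j : ℕ, i ≠ j → Disjoint (B i) (B j) := by
    intro i j hij
    rw [Finset.disjoint_left]
    intro x hxi hxj
    rw [hB, Finset.mem_Ico] at hxi hxj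
    rcases Nat.lt_or_ge i j with h | h
    · have : k * (i + 1) ≤ k * j := Nat.mul_le_mul_left k h
      rw [Nat.mul_add, Nat.mul_one] at this; omega
    · have h' : j < i := by omega
      have : k * (j + 1) ≤ k * i := Nat.mul_le_mul_left k h'
      rw [Nat.mul_add, Nat.mul_one] at this; omega
  have hTmem : ∀ t ∈ T, ∃ i < ν, t = B i := by
    intro t ht
    simp only [hT, Finset.mem_image, Finset.mem_range] at ht
    obtain ⟨i, hi, rfl⟩ := ht
    exact ⟨i, hi, rfl⟩
  have hTsub : ∀ t ∈ T, t ⊆ Finset.Ico 1 m := by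
    intro t ht; obtain ⟨i, hi, rfl⟩ := hTmem t ht; exact hBsub i hi
  have hT0 : ∀ t ∈ T, (0:ℕ) ∉ t := by
    intro t ht h
    have := hTsub t ht h; rw [Finset.mem_Ico] at this; omega
  have hTcard : ∀ t ∈ T, t.card = k := by
    intro t ht; obtain ⟨i, -, rfl⟩ := hTmem t ht; exact hBcard i
  -- disjointness between star members and blocks
  have hSTdisj : ∀ s ∈ S, ∀ t ∈ T, Disjoint s t := by
    intro s hs t ht
    obtain ⟨u, hu1, -, rfl⟩ := hSmem s hs
    rw [Finset.disjoint_left]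
    intro x hx hxt
    have hxm := hTsub t ht hxt
    rw [Finset.mem_Ico] at hxm
    rcases Finset.mem_insert.mp hx with rfl | hx
    · omega
    · have := hu1 hx; rw [Finset.mem_Ico] at this; omega
  -- distinct T members are disjoint
  have hTTdisj : ∀ t₁ ∈ T, ∀ t₂ ∈ T, t₁ ≠ t₂ → Disjoint t₁ t₂ := by
    intro t₁ h₁ t₂ h₂ hne
    obtain ⟨i, -, rfl⟩ := hTmem t₁ h₁
    obtain ⟨j, -, rfl⟩ := hTmem t₂ h₂
    exact hBdisj i j (fun h => hne (by rw [h]))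
  have hSTne : Disjoint S T := by
    rw [Finset.disjoint_left]
    intro s hs hsT
    exact hT0 s hsT (hS0 s hs)
  -- cardinalities
  have hTcard' : T.card = ν := by
    rw [hT, Finset.card_image_of_injective _ hBinj, Finset.card_range]
  have hScard' : S.card = Nat.choose (n - k * ν - 1) (k - 1) := by
    rw [hS, Finset.card_image_of_injOn, Finset.card_powersetCard, Nat.card_Ico]
    · have h : n - m = n - k * ν - 1 := by omega
      rw [h]
    · intro t₁ h₁ t₂ h₂ heq
      rw [Finset.mem_coe, Finset.mem_powersetCard] at h₁ h₂
      have h0₁ : (0:ℕ) ∉ t₁ := fun h => by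
        have := h₁.1 h; rw [Finset.mem_Ico] at this; omega
      have h0₂ : (0:ℕ) ∉ t₂ := fun h => by
        have := h₂.1 h; rw [Finset.mem_Ico] at this; omega
      have := congrArg (Finset.erase · 0) heq
      simpa [Finset.erase_insert h0₁, Finset.erase_insert h0₂] using this
  -- a distinguished star member
  set s₀ : Finset ℕ := insert 0 (Finset.Ico m (m + (k - 1))) with hs₀
  have hs₀S : s₀ ∈ S := by
    rw [hS, Finset.mem_image]
    refine ⟨Finset.Ico m (m + (k - 1)), ?_, rfl⟩
    rw [Finset.mem_powersetCard]
    constructor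
    · apply Finset.Ico_subset_Ico le_rfl; omega
    · rw [Nat.card_Ico]; omega
  refine ⟨S ∪ T, ?_, ?_, ?_, ?_⟩
  · -- F ⊆ powersetCard k (range n)
    intro s hs
    rw [Finset.mem_powersetCard]
    rcases Finset.mem_union.mp hs with hs | hs
    · obtain ⟨t, ht1, ht2, rfl⟩ := hSmem s hs
      refine ⟨?_, hScard _ hs⟩
      intro x hx
      rcases Finset.mem_insert.mp hx with rfl | hx
      · rw [Finset.mem_range]; omega
      · have := ht1 hx; rw [Finset.mem_Ico] at this; rw [Finset.mem_range]; omega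
    · refine ⟨?_, hTcard _ hs⟩
      intro x hx
      have := hTsub s hs hx; rw [Finset.mem_Ico] at this; rw [Finset.mem_range]; omega
  · -- cluster-free
    rintro ⟨A, hinj, hmem, hcard, hint⟩
    -- every A i is in S or T
    have hAmem : ∀ i, A i ∈ S ∨ A i ∈ T := fun i => Finset.mem_union.mp (hmem i)
    have hsub : ∀ i, A i ⊆ Finset.univ.sup A := fun i => Finset.le_sup (Finset.mem_univ i)
    by_cases hall : ∀ i, A i ∈ S
    · -- all in star: 0 in the intersection
      have : (0:ℕ) ∈ ⋂ i, (A i : Set ℕ) := by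
        rw [Set.mem_iInter]; intro i
        exact_mod_cast hS0 _ (hall i)
      rw [hint] at this; exact this
    · push_neg at hall
      obtain ⟨j, hj⟩ := hall
      have hjT : A j ∈ T := (hAmem j).resolve_left hj
      -- key: two indices in T lead to contradiction
      have key : ∀ p q r : Fin d, p ≠ q → p ≠ r → q ≠ r → A p ∈ T → A q ∈ T → False := by
        intro p q r hpq hpr hqr hp hq
        have hdisj : Disjoint (A p) (A q) := hTTdisj _ hp _ hq (fun h => hpq (hinj h))
        have hU : A p ∪ A q ⊆ Finset.univ.sup A := Finset.union_subset (hsub p) (hsub q)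
        have hcardU : (A p ∪ A q).card = 2 * k := by
          rw [Finset.card_union_of_disjoint hdisj, hTcard _ hp, hTcard _ hq]; ring
        -- find an element of A r outside A p ∪ A q
        obtain ⟨x, hxr, hxpq⟩ : ∃ x ∈ A r, x ∉ A p ∪ A q := by
          rcases hAmem r with hr | hr
          · refine ⟨0, hS0 _ hr, ?_⟩
            rw [Finset.mem_union]
            rintro (h | h)
            · exact hT0 _ hp h
            · exact hT0 _ hq h
          · have h1 : Disjoint (A r) (A p) := hTTdisj _ hr _ hp (fun h => hpr (hinj h.symm))
            have h2 : Disjoint (A r) (A q) := hTTdisj _ hr _ hq (fun h => hqr (hinj h.symm))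
            have : A r ≠ ∅ := by
              intro h
              have := hTcard _ hr; rw [h] at this; simp at this; omega
            obtain ⟨x, hx⟩ := Finset.nonempty_iff_ne_empty.mpr this
            refine ⟨x, hx, ?_⟩
            rw [Finset.mem_union]
            rintro (h | h)
            · exact Finset.disjoint_left.mp h1 hx h
            · exact Finset.disjoint_left.mp h2 hx h
        have hins : insert x (A p ∪ A q) ⊆ Finset.univ.sup A :=
          Finset.insert_subset (hsub r hxr) hU
        have := Finset.card_le_card hins
        rw [Finset.card_insert_of_notMem hxpq, hcardU] at this
        omega
      -- at most one index is in S
      by_cases h2S : ∃ p q : Fin d, p ≠ q ∧ A p ∈ S ∧ A q ∈ S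
      · -- two stars plus a block
        obtain ⟨p, q, hpq, hp, hq⟩ := h2S
        have hjp : j ≠ p := fun h => hj (h ▸ hp)
        have hjq : j ≠ q := fun h => hj (h ▸ hq)
        have hne : A p ≠ A q := fun h => hpq (hinj h)
        have hssub : A p ⊂ A p ∪ A q := by
          refine Finset.ssubset_iff_subset_ne.mpr ⟨Finset.subset_union_left, ?_⟩
          intro h
          have hsub' : A q ⊆ A p := by
            intro x hx
            have : x ∈ A p ∪ A q := Finset.mem_union_right _ hx
            rwa [← h] at this
          exact hne ((Finset.eq_of_subset_of_card_le hsub'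
            (by rw [hScard _ hp, hScard _ hq])).symm)
        have hc1 : k + 1 ≤ (A p ∪ A q).card := by
          have := Finset.card_lt_card hssub
          rw [hScard _ hp] at this; omega
        have hdisj : Disjoint (A p ∪ A q) (A j) := by
          rw [Finset.disjoint_union_left]
          exact ⟨hSTdisj _ hp _ hjT, hSTdisj _ hq _ hjT⟩
        have hsub' : (A p ∪ A q) ∪ A j ⊆ Finset.univ.sup A :=
          Finset.union_subset (Finset.union_subset (hsub p) (hsub q)) (hsub j)
        have := Finset.card_le_card hsub'
        rw [Finset.card_union_of_disjoint hdisj, hTcard _ hjT] at this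
        omega
      · push_neg at h2S
        -- so at least two of the first three indices are in T
        have h0d : (0:ℕ) < d := by omega
        have h1d : (1:ℕ) < d := by omega
        have h2d : (2:ℕ) < d := by omega
        set a : Fin d := ⟨0, h0d⟩
        set b : Fin d := ⟨1, h1d⟩
        set c : Fin d := ⟨2, h2d⟩
        have hab : a ≠ b := by simp [a, b, Fin.ext_iff]
        have hac : a ≠ c := by simp [a, c, Fin.ext_iff]
        have hbc : b ≠ c := by simp [b, c, Fin.ext_iff]
        rcases hAmem a with ha | ha
        · have hbT : A b ∈ T := (hAmem b).resolve_left (fun h => h2S a b hab ha h)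
          have hcT : A c ∈ T := (hAmem c).resolve_left (fun h => h2S a c hac ha h)
          exact key b c a hbc (Ne.symm hab) (Ne.symm hac) hbT hcT
        · rcases hAmem b with hb | hb
          · have hcT : A c ∈ T := (hAmem c).resolve_left (fun h => h2S b c hbc hb h)
            exact key a c b hac hab (Ne.symm hbc) ha hcT
          · exact key a b c hab hac hbc ha hb
  · -- matching number
    have hMup : ∀ M : Finset (Finset ℕ), M ⊆ S ∪ T →
        (M : Set (Finset ℕ)).PairwiseDisjoint id → M.card ≤ ν + 1 := by
      intro M hMF hMd
      have hsplit : M ⊆ (M ∩ S) ∪ (M \ S) := by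
        intro x hx
        rw [Finset.mem_union, Finset.mem_inter, Finset.mem_sdiff]
        by_cases h : x ∈ S
        · exact Or.inl ⟨hx, h⟩
        · exact Or.inr ⟨hx, h⟩
      have h1 : (M ∩ S).card ≤ 1 := by
        rw [Finset.card_le_one]
        intro x hx y hy
        rw [Finset.mem_inter] at hx hy
        by_contra hne
        have := hMd hx.1 hy.1 hne
        have h0x := hS0 _ hx.2
        have h0y := hS0 _ hy.2
        exact Finset.disjoint_left.mp this h0x h0y
      have h2 : (M \ S).card ≤ ν := by
        have : M \ S ⊆ T := by
          intro x hx
          rw [Finset.mem_sdiff] at hx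
          rcases Finset.mem_union.mp (hMF hx.1) with h | h
          · exact absurd h hx.2
          · exact h
        calc (M \ S).card ≤ T.card := Finset.card_le_card this
          _ = ν := hTcard'
      calc M.card ≤ ((M ∩ S) ∪ (M \ S)).card := Finset.card_le_card hsplit
        _ ≤ (M ∩ S).card + (M \ S).card := Finset.card_union_le _ _
        _ ≤ 1 + ν := by omega
        _ = ν + 1 := by omega
    -- the witness matching
    have hs₀T : s₀ ∉ T := fun h => hT0 _ h (hS0 _ hs₀S)
    set M₀ : Finset (Finset ℕ) := insert s₀ T with hM₀
    have hM₀card : M₀.card = ν + 1 := by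
      rw [hM₀, Finset.card_insert_of_notMem hs₀T, hTcard']
    have hM₀sub : M₀ ⊆ S ∪ T := by
      intro x hx
      rcases Finset.mem_insert.mp hx with rfl | hx
      · exact Finset.mem_union_left _ hs₀S
      · exact Finset.mem_union_right _ hx
    have hM₀disj : (M₀ : Set (Finset ℕ)).PairwiseDisjoint id := by
      intro x hx y hy hne
      rw [Finset.coe_insert, Set.mem_insert_iff] at hx hy
      have : ∀ u v : Finset ℕ, (u = s₀ ∨ u ∈ T) → (v = s₀ ∨ v ∈ T) → u ≠ v →
          Disjoint u v := by
        rintro u v (rfl | hu) (rfl | hv) huv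
        · exact absurd rfl huv
        · exact hSTdisj _ hs₀S _ hv
        · exact (hSTdisj _ hs₀S _ hu).symm
        · exact hTTdisj _ hu _ hv huv
      exact this x y (by simpa using hx) (by simpa using hy) hne
    rw [matchingNumber]
    apply le_antisymm
    · apply Finset.sup_le
      intro M hM
      simp only [Finset.mem_filter, Finset.mem_powerset] at hM
      exact hMup M hM.1 hM.2
    · have hmem : M₀ ∈ (S ∪ T).powerset.filter
          (fun M : Finset (Finset ℕ) => (M : Set (Finset ℕ)).PairwiseDisjoint id) := by
        rw [Finset.mem_filter, Finset.mem_powerset]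
        exact ⟨hM₀sub, hM₀disj⟩
      calc ν + 1 = M₀.card := hM₀card.symm
        _ ≤ _ := Finset.le_sup hmem
  · -- cardinality
    rw [Finset.card_union_of_disjoint hSTne, hScard', hTcard']
end

section
/- Let k ≥ 3 and ν ≥ 1 be fixed integers. For all sufficiently large n there exists a family F ⊆ binom([n],k) that is 3-cluster-free, has matching number exactly ν+1, and satisfies |F| = C(n-kν-1, k-1) + Σ_{i=2}^{k-1} ⌊ν/2⌋·C(2k-2, i-2)·C(n-kν-1, k-1-i) + ν. -/
open Finset

namespace S1
variable (k ν n : ℕ)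

def blk (k j : ℕ) : Finset ℕ := Finset.Ico (j*k) (j*k+k)
def grd (k ν : ℕ) : Finset ℕ := Finset.range (k*ν)
def oc (k ν n : ℕ) : Finset ℕ := Finset.Ico (k*ν+1) n
def pr (k j : ℕ) : Finset ℕ := Finset.Ico (2*j*k) (2*j*k+2*k)
def bb (k j : ℕ) : ℕ := 2*j*k
def cc (k j : ℕ) : ℕ := 2*j*k+k

lemma blk_card : (blk k j).card = k := by simp [blk]
lemma blk_subset_grd (hj : j < ν) : blk k j ⊆ grd k ν := by
  intro x hx
  simp only [blk, mem_Ico] at hx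
  have : j*k + k ≤ k*ν := by
    have : (j+1)*k ≤ ν*k := Nat.mul_le_mul_right k hj
    nlinarith
  simp only [grd, mem_range]; omega

lemma blk_disjoint (hk0 : 0 < k) (h : i ≠ j) : Disjoint (blk k i) (blk k j) := by
  simp only [Finset.disjoint_left, blk, mem_Ico]
  rintro x ⟨h1, h2⟩ ⟨h3, h4⟩
  have hij : i < j + 1 := by nlinarith
  have hji : j < i + 1 := by nlinarith
  omega

lemma pr_disjoint (hk0 : 0 < k) (h : i ≠ j) : Disjoint (pr k i) (pr k j) := by
  simp only [Finset.disjoint_left, pr, mem_Ico]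
  rintro x ⟨h1, h2⟩ ⟨h3, h4⟩
  have hij : i < j + 1 := by nlinarith
  have hji : j < i + 1 := by nlinarith
  omega

lemma blk_pr_cases (hk0 : 0 < k) {l j x : ℕ} (hx : x ∈ blk k l) (hx' : x ∈ pr k j) :
    l = 2*j ∨ l = 2*j+1 := by
  simp only [blk, pr, mem_Ico] at hx hx'
  have h1 : l < 2*j + 2 := by nlinarith
  have h2 : 2*j < l + 1 := by nlinarith
  omega

lemma pr_subset_grd (hj : j < ν/2) : pr k j ⊆ grd k ν := by
  intro x hx
  simp only [pr, mem_Ico] at hx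
  have h2 : 2*j+2 ≤ ν := by omega
  have : (2*j+2)*k ≤ ν*k := Nat.mul_le_mul_right k h2
  simp only [grd, mem_range]; nlinarith

lemma bb_mem_pr (hk0 : 0 < k) : bb k j ∈ pr k j := by simp [bb, pr]; omega
lemma cc_mem_pr (hk0 : 0 < k) : cc k j ∈ pr k j := by simp [cc, pr]; omega
lemma bb_mem_blk (hk0 : 0 < k) : bb k j ∈ blk k (2*j) := by simp [bb, blk]; omega
lemma cc_mem_blk (hk0 : 0 < k) : cc k j ∈ blk k (2*j+1) := by
  simp only [cc, blk, mem_Ico]; constructor <;> nlinarith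

lemma xx_not_mem_grd : k*ν ∉ grd k ν := by simp [grd]
lemma xx_not_mem_oc : k*ν ∉ oc k ν n := by simp [oc]
lemma grd_disj_oc : Disjoint (grd k ν) (oc k ν n) := by
  simp only [Finset.disjoint_left, grd, oc, mem_range, mem_Ico]
  omega
lemma oc_card : (oc k ν n).card = n - k*ν - 1 := by simp [oc]; omega

end S1

namespace S1

def rr (k j : ℕ) : Finset ℕ := ((pr k j).erase (bb k j)).erase (cc k j)

def F0 (k ν n : ℕ) : Finset (Finset ℕ) :=
  (Finset.powersetCard (k-1) (oc k ν n)).image (insert (k*ν))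

def F1 (k ν n j i : ℕ) : Finset (Finset ℕ) :=
  (((rr k j).powersetCard (i-2)) ×ˢ ((oc k ν n).powersetCard (k-1-i))).image
    (fun p => insert (k*ν) (insert (bb k j) (insert (cc k j) (p.1 ∪ p.2))))

def Fstar (k ν n : ℕ) : Finset (Finset ℕ) :=
  F0 k ν n ∪ (Finset.range (ν/2)).biUnion fun j =>
    (Finset.Icc 2 (k-1)).biUnion fun i => F1 k ν n j i

def Fblk (k ν : ℕ) : Finset (Finset ℕ) := (Finset.range ν).image (blk k)

def FF (k ν n : ℕ) : Finset (Finset ℕ) := Fblk k ν ∪ Fstar k ν n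

lemma bb_ne_cc (hk0 : 0 < k) : bb k j ≠ cc k j := by simp [bb, cc]; omega

lemma rr_card (hk0 : 0 < k) : (rr k j).card = 2*k - 2 := by
  rw [rr, Finset.card_erase_of_mem, Finset.card_erase_of_mem (bb_mem_pr k hk0)]
  · simp only [pr, Nat.card_Ico]; omega
  · exact Finset.mem_erase.2 ⟨(bb_ne_cc (k := k) hk0).symm, cc_mem_pr k hk0⟩

lemma rr_subset_pr : rr k j ⊆ pr k j :=
  (Finset.erase_subset _ _).trans (Finset.erase_subset _ _)

lemma bb_not_mem_rr : bb k j ∉ rr k j := by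
  intro h
  exact (Finset.mem_erase.1 (Finset.mem_erase.1 h).2).1 rfl
lemma cc_not_mem_rr : cc k j ∉ rr k j := by simp [rr]

/-- Structure of `F1` members. -/
lemma F1_struct {G : Finset ℕ} (hG : G ∈ F1 k ν n j i) :
    ∃ T S : Finset ℕ, T ⊆ rr k j ∧ S ⊆ oc k ν n ∧ T.card = i-2 ∧ S.card = k-1-i ∧
      G = insert (k*ν) (insert (bb k j) (insert (cc k j) (T ∪ S))) := by
  simp only [F1, mem_image, mem_product, Finset.mem_powersetCard] at hG
  obtain ⟨⟨T, S⟩, ⟨⟨hT, hTc⟩, hS, hSc⟩, rfl⟩ := hG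
  exact ⟨T, S, hT, hS, hTc, hSc, rfl⟩

lemma F0_struct {G : Finset ℕ} (hG : G ∈ F0 k ν n) :
    ∃ S : Finset ℕ, S ⊆ oc k ν n ∧ S.card = k-1 ∧ G = insert (k*ν) S := by
  simp only [F0, mem_image, Finset.mem_powersetCard] at hG
  obtain ⟨S, ⟨hS, hSc⟩, rfl⟩ := hG
  exact ⟨S, hS, hSc, rfl⟩

end S1

namespace S1

variable {k ν n : ℕ}

lemma form_facts (hk3 : 3 ≤ k) {j i : ℕ} (hj : j < ν/2) (hi2 : 2 ≤ i) (hik : i ≤ k-1)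
    {T S : Finset ℕ} (hT : T ⊆ rr k j) (hS : S ⊆ oc k ν n)
    (hTc : T.card = i-2) (hSc : S.card = k-1-i) :
    (insert (k*ν) (insert (bb k j) (insert (cc k j) (T ∪ S))) ∩ rr k j = T) ∧
    (insert (k*ν) (insert (bb k j) (insert (cc k j) (T ∪ S))) ∩ oc k ν n = S) ∧
    (insert (k*ν) (insert (bb k j) (insert (cc k j) (T ∪ S)))).card = k ∧
    (insert (k*ν) (insert (bb k j) (insert (cc k j) (T ∪ S))) ∩ grd k ν ⊆ pr k j) ∧
    (insert (k*ν) (insert (bb k j) (insert (cc k j) (T ∪ S))) ⊆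
      insert (k*ν) (grd k ν ∪ oc k ν n)) := by
  have hk0 : 0 < k := by omega
  have hbg : bb k j ∈ grd k ν := pr_subset_grd k ν hj (bb_mem_pr k hk0)
  have hcg : cc k j ∈ grd k ν := pr_subset_grd k ν hj (cc_mem_pr k hk0)
  have hrg : rr k j ⊆ grd k ν := (rr_subset_pr (k := k) (j := j)).trans (pr_subset_grd k ν hj)
  have hxg : k*ν ∉ grd k ν := xx_not_mem_grd k ν
  have hxo : k*ν ∉ oc k ν n := xx_not_mem_oc k ν n
  have hgo := grd_disj_oc (k := k) (ν := ν) (n := n)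
  have hSg : ∀ x ∈ S, x ∉ grd k ν := fun x hx hg => (Finset.disjoint_right.1 hgo) (hS hx) hg
  have hTo : ∀ x ∈ T, x ∉ oc k ν n := fun x hx ho =>
    (Finset.disjoint_left.1 hgo) (hrg (hT hx)) ho
  have hxb : k*ν ≠ bb k j := fun h => hxg (h ▸ hbg)
  have hxc : k*ν ≠ cc k j := fun h => hxg (h ▸ hcg)
  have hbc : bb k j ≠ cc k j := bb_ne_cc (k := k) hk0
  have hxT : k*ν ∉ T := fun h => hxg (hrg (hT h))
  have hxS : k*ν ∉ S := fun h => hxo (hS h)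
  have hbT : bb k j ∉ T := fun h => bb_not_mem_rr (k := k) (hT h)
  have hcT : cc k j ∉ T := fun h => cc_not_mem_rr (k := k) (j := j) (hT h)
  have hbS : bb k j ∉ S := fun h => (hSg _ h) hbg
  have hcS : cc k j ∉ S := fun h => (hSg _ h) hcg
  refine ⟨?_, ?_, ?_, ?_, ?_⟩
  · ext x
    simp only [Finset.mem_inter, Finset.mem_insert, Finset.mem_union]
    constructor
    · rintro ⟨(rfl | rfl | rfl | hx | hx), hr⟩
      · exact absurd (hrg hr) hxg
      · exact absurd hr (bb_not_mem_rr (k := k))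
      · exact absurd hr (cc_not_mem_rr (k := k) (j := j))
      · exact hx
      · exact absurd (hrg hr) (hSg _ hx)
    · intro hx; exact ⟨Or.inr (Or.inr (Or.inr (Or.inl hx))), hT hx⟩
  · ext x
    simp only [Finset.mem_inter, Finset.mem_insert, Finset.mem_union]
    constructor
    · rintro ⟨(rfl | rfl | rfl | hx | hx), hr⟩
      · exact absurd hr hxo
      · exact absurd hr (Finset.disjoint_left.1 hgo hbg)
      · exact absurd hr (Finset.disjoint_left.1 hgo hcg)
      · exact absurd hr (hTo _ hx)
      · exact hx
    · intro hx; exact ⟨Or.inr (Or.inr (Or.inr (Or.inr hx))), hS hx⟩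
  · have hTS : Disjoint T S := by
      rw [Finset.disjoint_left]; exact fun x hx hx' => hTo _ hx (hS hx')
    rw [Finset.card_insert_of_notMem, Finset.card_insert_of_notMem,
        Finset.card_insert_of_notMem, Finset.card_union_of_disjoint hTS, hTc, hSc]
    · omega
    · simp only [Finset.mem_union]; tauto
    · simp only [Finset.mem_insert, Finset.mem_union]; tauto
    · simp only [Finset.mem_insert, Finset.mem_union]; tauto
  · intro x hx
    simp only [Finset.mem_inter, Finset.mem_insert, Finset.mem_union] at hx
    obtain ⟨(rfl | rfl | rfl | hx1 | hx1), hg⟩ := hx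
    · exact absurd hg hxg
    · exact bb_mem_pr k hk0
    · exact cc_mem_pr k hk0
    · exact rr_subset_pr (k := k) (j := j) (hT hx1)
    · exact absurd hg (hSg _ hx1)
  · intro x hx
    simp only [Finset.mem_insert, Finset.mem_union] at hx ⊢
    rcases hx with rfl | rfl | rfl | hx | hx
    · exact Or.inl rfl
    · exact Or.inr (Or.inl hbg)
    · exact Or.inr (Or.inl hcg)
    · exact Or.inr (Or.inl (hrg (hT hx)))
    · exact Or.inr (Or.inr (hS hx))

lemma star_mem (hk3 : 3 ≤ k) {G : Finset ℕ} (hG : G ∈ Fstar k ν n) :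
    k*ν ∈ G ∧ G.card = k ∧ G ⊆ insert (k*ν) (grd k ν ∪ oc k ν n) ∧
    (G ∩ grd k ν = ∅ ∨
      ∃ j, j < ν/2 ∧ bb k j ∈ G ∧ cc k j ∈ G ∧ G ∩ grd k ν ⊆ pr k j) := by
  have hgo := grd_disj_oc (k := k) (ν := ν) (n := n)
  simp only [Fstar, Finset.mem_union, Finset.mem_biUnion, Finset.mem_range,
    Finset.mem_Icc] at hG
  rcases hG with hG | ⟨j, hj, i, ⟨hi2, hik⟩, hG⟩
  · obtain ⟨S, hS, hSc, rfl⟩ := F0_struct hG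
    have hxS : k*ν ∉ S := fun h => xx_not_mem_oc k ν n (hS h)
    refine ⟨Finset.mem_insert_self _ _, ?_, ?_, Or.inl ?_⟩
    · rw [Finset.card_insert_of_notMem hxS, hSc]; omega
    · intro x hx
      simp only [Finset.mem_insert, Finset.mem_union] at hx ⊢
      rcases hx with rfl | hx
      · exact Or.inl rfl
      · exact Or.inr (Or.inr (hS hx))
    · ext x
      simp only [Finset.mem_inter, Finset.mem_insert, Finset.notMem_empty, iff_false]
      rintro ⟨rfl | hx, hg⟩
      · exact xx_not_mem_grd k ν hg
      · exact Finset.disjoint_right.1 hgo (hS hx) hg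
  · obtain ⟨T, S, hT, hS, hTc, hSc, rfl⟩ := F1_struct hG
    obtain ⟨_, _, hcard, hsub, hsub'⟩ := form_facts hk3 hj hi2 hik hT hS hTc hSc
    refine ⟨Finset.mem_insert_self _ _, hcard, hsub', Or.inr ⟨j, hj, ?_, ?_, hsub⟩⟩
    · exact Finset.mem_insert_of_mem (Finset.mem_insert_self _ _)
    · exact Finset.mem_insert_of_mem (Finset.mem_insert_of_mem (Finset.mem_insert_self _ _))

end S1

namespace S1

lemma F0_card (hk3 : 3 ≤ k) : (F0 k ν n).card = Nat.choose (n - k*ν - 1) (k-1) := by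
  rw [F0, Finset.card_image_of_injOn, Finset.card_powersetCard, oc_card]
  intro S hS S' hS' h
  simp only [Finset.mem_coe, Finset.mem_powersetCard] at hS hS'
  have hxS : k*ν ∉ S := fun hx => xx_not_mem_oc k ν n (hS.1 hx)
  have hxS' : k*ν ∉ S' := fun hx => xx_not_mem_oc k ν n (hS'.1 hx)
  rw [← Finset.erase_insert hxS, ← Finset.erase_insert hxS', h]

lemma F1_mem_facts (hk3 : 3 ≤ k) {j i : ℕ} (hj : j < ν/2) (hi2 : 2 ≤ i) (hik : i ≤ k-1)
    {G : Finset ℕ} (hG : G ∈ F1 k ν n j i) :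
    bb k j ∈ G ∩ grd k ν ∧ G ∩ grd k ν ⊆ pr k j ∧ (G ∩ rr k j).card = i - 2 := by
  have hk0 : 0 < k := by omega
  obtain ⟨T, S, hT, hS, hTc, hSc, rfl⟩ := F1_struct hG
  obtain ⟨h1, _, _, h4, _⟩ := form_facts hk3 hj hi2 hik hT hS hTc hSc
  refine ⟨?_, h4, by rw [h1, hTc]⟩
  exact Finset.mem_inter.2 ⟨Finset.mem_insert_of_mem (Finset.mem_insert_self _ _),
    pr_subset_grd k ν hj (bb_mem_pr k hk0)⟩

lemma F1_card (hk3 : 3 ≤ k) {j i : ℕ} (hj : j < ν/2) (hi2 : 2 ≤ i) (hik : i ≤ k-1) :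
    (F1 k ν n j i).card =
      Nat.choose (2*k-2) (i-2) * Nat.choose (n - k*ν - 1) (k-1-i) := by
  have hk0 : 0 < k := by omega
  rw [F1, Finset.card_image_of_injOn, Finset.card_product, Finset.card_powersetCard,
    Finset.card_powersetCard, rr_card (k := k) hk0, oc_card]
  rintro ⟨T, S⟩ hTS ⟨T', S'⟩ hTS' h
  simp only [Finset.mem_coe, Finset.mem_product, Finset.mem_powersetCard] at hTS hTS'
  obtain ⟨⟨hT, hTc⟩, hS, hSc⟩ := hTS
  obtain ⟨⟨hT', hTc'⟩, hS', hSc'⟩ := hTS'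
  obtain ⟨e1, e2, _, _, _⟩ := form_facts hk3 hj hi2 hik hT hS hTc hSc
  obtain ⟨e1', e2', _, _, _⟩ := form_facts hk3 hj hi2 hik hT' hS' hTc' hSc'
  simp only at h
  have : T = T' := by rw [← e1, ← e1', h]
  have : S = S' := by rw [← e2, ← e2', h]
  simp_all

lemma F1_disjoint (hk3 : 3 ≤ k) {j i j' i' : ℕ} (hj : j < ν/2) (hj' : j' < ν/2)
    (hi : i ∈ Finset.Icc 2 (k-1)) (hi' : i' ∈ Finset.Icc 2 (k-1))
    (hne : (j, i) ≠ (j', i')) : Disjoint (F1 k ν n j i) (F1 k ν n j' i') := by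
  have hk0 : 0 < k := by omega
  simp only [Finset.mem_Icc] at hi hi'
  rw [Finset.disjoint_left]
  intro G hG hG'
  obtain ⟨hb, hsub, hc⟩ := F1_mem_facts hk3 hj hi.1 hi.2 hG
  obtain ⟨hb', hsub', hc'⟩ := F1_mem_facts hk3 hj' hi'.1 hi'.2 hG'
  by_cases hjj : j = j'
  · subst hjj
    have : i = i' := by omega
    exact hne (by simp [this])
  · have h1 : bb k j' ∈ pr k j := hsub hb'
    have h2 : bb k j' ∈ pr k j' := bb_mem_pr k hk0
    exact (Finset.disjoint_left.1 (pr_disjoint k hk0 hjj)) h1 h2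

lemma F0_disj_F1 (hk3 : 3 ≤ k) {j i : ℕ} (hj : j < ν/2) (hi2 : 2 ≤ i) (hik : i ≤ k-1) :
    Disjoint (F0 k ν n) (F1 k ν n j i) := by
  rw [Finset.disjoint_left]
  intro G hG hG'
  obtain ⟨S, hS, hSc, rfl⟩ := F0_struct hG
  obtain ⟨hb, _, _⟩ := F1_mem_facts hk3 hj hi2 hik hG'
  simp only [Finset.mem_inter, Finset.mem_insert] at hb
  obtain ⟨hb1 | hb1, hb2⟩ := hb
  · exact xx_not_mem_grd k ν (hb1 ▸ hb2)
  · exact Finset.disjoint_right.1 (grd_disj_oc k ν n) (hS hb1) hb2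

lemma Fstar_card (hk3 : 3 ≤ k) :
    (Fstar k ν n).card = Nat.choose (n - k*ν - 1) (k-1) +
      ∑ i ∈ Finset.Icc 2 (k-1),
        (ν/2) * Nat.choose (2*k-2) (i-2) * Nat.choose (n - k*ν - 1) (k-1-i) := by
  have hinner : ∀ j, j < ν/2 → ∀ i ∈ Finset.Icc 2 (k-1), ∀ i' ∈ Finset.Icc 2 (k-1),
      i ≠ i' → Disjoint (F1 k ν n j i) (F1 k ν n j i') := by
    intro j hj i hi i' hi' hne
    exact F1_disjoint hk3 hj hj hi hi' (by simp [hne])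
  have hdisj : Disjoint (F0 k ν n) ((Finset.range (ν/2)).biUnion fun j =>
      (Finset.Icc 2 (k-1)).biUnion fun i => F1 k ν n j i) := by
    rw [Finset.disjoint_biUnion_right]
    intro j hj
    rw [Finset.disjoint_biUnion_right]
    intro i hi
    simp only [Finset.mem_range] at hj
    simp only [Finset.mem_Icc] at hi
    exact F0_disj_F1 hk3 hj hi.1 hi.2
  rw [Fstar, Finset.card_union_of_disjoint hdisj, F0_card hk3]
  congr 1
  rw [Finset.card_biUnion]
  · have step : ∀ j ∈ Finset.range (ν/2),
        ((Finset.Icc 2 (k-1)).biUnion fun i => F1 k ν n j i).card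
          = ∑ i ∈ Finset.Icc 2 (k-1),
              Nat.choose (2*k-2) (i-2) * Nat.choose (n - k*ν - 1) (k-1-i) := by
      intro j hj
      simp only [Finset.mem_range] at hj
      rw [Finset.card_biUnion (hinner j hj)]
      refine Finset.sum_congr rfl fun i hi => ?_
      simp only [Finset.mem_Icc] at hi
      exact F1_card hk3 hj hi.1 hi.2
    rw [Finset.sum_congr rfl step, Finset.sum_const, Finset.card_range, smul_eq_mul,
      Finset.mul_sum]
    exact Finset.sum_congr rfl fun i _ => (mul_assoc _ _ _).symm
  · intro j hj j' hj' hne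
    simp only [Finset.mem_coe, Finset.mem_range, Function.onFun] at hj hj' ⊢
    rw [Finset.disjoint_biUnion_right]
    intro i hi
    rw [Finset.disjoint_biUnion_left]
    intro i' hi'
    exact F1_disjoint hk3 hj hj' hi' hi (fun h => hne (congrArg Prod.fst h))

end S1

namespace S1

lemma blk_mem_facts {G : Finset ℕ} (hG : G ∈ Fblk k ν) :
    ∃ l, l < ν ∧ G = blk k l := by
  simp only [Fblk, Finset.mem_image, Finset.mem_range] at hG
  obtain ⟨l, hl, rfl⟩ := hG
  exact ⟨l, hl, rfl⟩

lemma Fblk_card (hk0 : 0 < k) : (Fblk k ν).card = ν := by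
  rw [Fblk, Finset.card_image_of_injOn, Finset.card_range]
  intro j hj j' hj' h
  by_contra hne
  have h1 : j*k ∈ blk k j := by simp [blk]; omega
  rw [h] at h1
  exact (Finset.disjoint_left.1 (blk_disjoint k hk0 hne) (h ▸ h1 : j*k ∈ blk k j)) h1

lemma Fblk_disj_Fstar (hk3 : 3 ≤ k) : Disjoint (Fblk k ν) (Fstar k ν n) := by
  rw [Finset.disjoint_left]
  intro G hG hG'
  obtain ⟨l, hl, rfl⟩ := blk_mem_facts hG
  have hx := (star_mem hk3 hG').1
  exact xx_not_mem_grd k ν (blk_subset_grd k ν hl hx)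

lemma FF_card (hk3 : 3 ≤ k) :
    (FF k ν n).card = Nat.choose (n - k*ν - 1) (k-1) +
      (∑ i ∈ Finset.Icc 2 (k-1),
        (ν/2) * Nat.choose (2*k-2) (i-2) * Nat.choose (n - k*ν - 1) (k-1-i)) + ν := by
  rw [FF, Finset.card_union_of_disjoint (Fblk_disj_Fstar hk3), Fstar_card hk3,
    Fblk_card (by omega)]
  ring

lemma blk_card_k {G : Finset ℕ} (hG : G ∈ Fblk k ν) : G.card = k := by
  obtain ⟨l, _, rfl⟩ := blk_mem_facts hG
  exact blk_card k

lemma FF_subset (hk3 : 3 ≤ k) (hn : k*ν + 1 ≤ n) :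
    FF k ν n ⊆ Finset.powersetCard k (Finset.range n) := by
  intro G hG
  rw [Finset.mem_powersetCard]
  rcases Finset.mem_union.1 hG with hG | hG
  · obtain ⟨l, hl, rfl⟩ := blk_mem_facts hG
    refine ⟨fun x hx => ?_, blk_card k⟩
    have := blk_subset_grd k ν hl hx
    simp only [grd, Finset.mem_range] at this
    simp only [Finset.mem_range]; omega
  · obtain ⟨h1, h2, h3, _⟩ := star_mem hk3 hG
    refine ⟨fun x hx => ?_, h2⟩
    have := h3 hx
    simp only [Finset.mem_insert, Finset.mem_union, grd, oc, Finset.mem_range,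
      Finset.mem_Ico] at this
    simp only [Finset.mem_range]; omega

end S1


namespace S1

lemma matching_FF (hk3 : 3 ≤ k) (hν : 1 ≤ ν) (hn : k*ν + k + 1 ≤ n) :
    matchingNumber (FF k ν n) = ν + 1 := by
  classical
  have hk0 : 0 < k := by omega
  apply le_antisymm
  · apply Finset.sup_le
    intro M hM
    simp only [Finset.mem_filter, Finset.mem_powerset] at hM
    obtain ⟨hMF, hMd⟩ := hM
    have hsplit := Finset.card_inter_add_card_sdiff M (Fblk k ν)
    have h1 : (M ∩ Fblk k ν).card ≤ ν := by
      calc (M ∩ Fblk k ν).card ≤ (Fblk k ν).card :=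
            Finset.card_le_card Finset.inter_subset_right
        _ = ν := Fblk_card (by omega)
    have h2 : (M \ Fblk k ν).card ≤ 1 := by
      rw [Finset.card_le_one]
      intro a ha b hb
      rw [Finset.mem_sdiff] at ha hb
      have haS : a ∈ Fstar k ν n := (Finset.mem_union.1 (hMF ha.1)).resolve_left ha.2
      have hbS : b ∈ Fstar k ν n := (Finset.mem_union.1 (hMF hb.1)).resolve_left hb.2
      by_contra hne
      have hd := hMd ha.1 hb.1 hne
      exact (Finset.disjoint_left.1 hd) (star_mem hk3 haS).1 (star_mem hk3 hbS).1
    omega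
  · have hA0 : insert (k*ν) (Finset.Ico (k*ν+1) (k*ν+k)) ∈ FF k ν n := by
      apply Finset.mem_union_right
      apply Finset.mem_union_left
      simp only [F0, Finset.mem_image]
      refine ⟨Finset.Ico (k*ν+1) (k*ν+k), ?_, rfl⟩
      rw [Finset.mem_powersetCard]
      constructor
      · intro x hx
        simp only [oc, Finset.mem_Ico] at hx ⊢
        omega
      · simp only [Nat.card_Ico]; omega
    set A0 : Finset ℕ := insert (k*ν) (Finset.Ico (k*ν+1) (k*ν+k)) with hA0def
    have hA0g : ∀ x ∈ A0, k*ν ≤ x := by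
      intro x hx
      simp only [hA0def, Finset.mem_insert, Finset.mem_Ico] at hx
      omega
    have hA0nb : A0 ∉ Fblk k ν := by
      intro h
      obtain ⟨l, hl, he⟩ := blk_mem_facts h
      have : k*ν ∈ blk k l := he ▸ Finset.mem_insert_self _ _
      exact xx_not_mem_grd k ν (blk_subset_grd k ν hl this)
    have hM0 : insert A0 (Fblk k ν) ∈ (FF k ν n).powerset.filter
        (fun M : Finset (Finset ℕ) => (M : Set (Finset ℕ)).PairwiseDisjoint id) := by
      rw [Finset.mem_filter, Finset.mem_powerset]
      constructor
      · intro G hG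
        rcases Finset.mem_insert.1 hG with rfl | hG
        · exact hA0
        · exact Finset.mem_union_left _ hG
      · intro a ha b hb hne
        simp only [Finset.coe_insert, Set.mem_insert_iff, Finset.mem_coe] at ha hb
        have hblk_disj_A0 : ∀ c ∈ Fblk k ν, Disjoint A0 c := by
          intro c hc
          obtain ⟨l, hl, rfl⟩ := blk_mem_facts hc
          rw [Finset.disjoint_left]
          intro x hx hx'
          have h1 := hA0g x hx
          have h2 := blk_subset_grd k ν hl hx'
          simp only [grd, Finset.mem_range] at h2
          omega
        rcases ha with rfl | ha <;> rcases hb with rfl | hb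
        · exact absurd rfl hne
        · exact hblk_disj_A0 b hb
        · exact (hblk_disj_A0 a ha).symm
        · obtain ⟨l, hl, rfl⟩ := blk_mem_facts ha
          obtain ⟨l', hl', rfl⟩ := blk_mem_facts hb
          have : l ≠ l' := fun h => hne (by rw [h])
          exact blk_disjoint k hk0 this
    calc ν + 1 = (insert A0 (Fblk k ν)).card := by
          rw [Finset.card_insert_of_notMem hA0nb, Fblk_card (by omega)]
      _ ≤ _ := Finset.le_sup hM0
end S1

namespace S1

lemma meets_blk (hk3 : 3 ≤ k) {G : Finset ℕ} {l : ℕ} (hl : l < ν)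
    (hG : G ∈ Fstar k ν n) (h : ¬ Disjoint G (blk k l)) :
    ∃ j, j < ν/2 ∧ bb k j ∈ G ∧ cc k j ∈ G ∧ G ∩ grd k ν ⊆ pr k j ∧
      (l = 2*j ∨ l = 2*j+1) := by
  have hk0 : 0 < k := by omega
  obtain ⟨x, hxG, hxC⟩ := Finset.not_disjoint_iff.1 h
  have hxg : x ∈ grd k ν := blk_subset_grd k ν hl hxC
  obtain ⟨_, _, _, hstr⟩ := star_mem hk3 hG
  rcases hstr with hplain | ⟨j, hj, hb, hc, hsub⟩
  · exfalso
    have : x ∈ G ∩ grd k ν := Finset.mem_inter.2 ⟨hxG, hxg⟩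
    rw [hplain] at this
    exact Finset.notMem_empty x this
  · have hxpr : x ∈ pr k j := hsub (Finset.mem_inter.2 ⟨hxG, hxg⟩)
    exact ⟨j, hj, hb, hc, hsub, blk_pr_cases k hk0 hxC hxpr⟩

lemma L2' (hk3 : 3 ≤ k) {A B : Finset ℕ} {l : ℕ} (hl : l < ν)
    (hA : A ∈ Fstar k ν n) (hB : B ∈ Fstar k ν n) (hAB : A ≠ B)
    (hBC : Disjoint B (blk k l)) : 2*k < (A ∪ B ∪ blk k l).card := by
  have hk0 : 0 < k := by omega
  obtain ⟨hxA, hAcard, _, _⟩ := star_mem hk3 hA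
  obtain ⟨hxB, hBcard, _, hBstr⟩ := star_mem hk3 hB
  have hCcard : (blk k l).card = k := blk_card k
  have hBCcard : (B ∪ blk k l).card = 2*k := by
    rw [Finset.card_union_of_disjoint hBC, hBcard, hCcard]; ring
  by_cases hAC : Disjoint A (blk k l)
  · have hdisj : Disjoint (A ∪ B) (blk k l) := Finset.disjoint_union_left.2 ⟨hAC, hBC⟩
    rw [Finset.card_union_of_disjoint hdisj, hCcard]
    have h1 : A ⊂ A ∪ B := by
      refine Finset.ssubset_iff_subset_ne.2 ⟨Finset.subset_union_left, fun h => ?_⟩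
      have hBA : B ⊆ A := h ▸ Finset.subset_union_right
      exact hAB (Finset.eq_of_subset_of_card_le hBA (by omega)).symm
    have := Finset.card_lt_card h1
    omega
  · obtain ⟨j, hj, hbA, hcA, hAsub, hcase⟩ := meets_blk hk3 hl hA hAC
    -- pick the witness w ∈ A \ (B ∪ blk k l)
    obtain ⟨w, hwA, hwpr, hwC⟩ : ∃ w, w ∈ A ∧ w ∈ pr k j ∧ w ∉ blk k l := by
      rcases hcase with rfl | rfl
      · refine ⟨cc k j, hcA, cc_mem_pr k hk0, fun h => ?_⟩
        exact (Finset.disjoint_left.1 (blk_disjoint k hk0 (by omega : 2*j+1 ≠ 2*j))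
          (cc_mem_blk k hk0)) h
      · refine ⟨bb k j, hbA, bb_mem_pr k hk0, fun h => ?_⟩
        exact (Finset.disjoint_left.1 (blk_disjoint k hk0 (by omega : 2*j ≠ 2*j+1))
          (bb_mem_blk k hk0)) h
    have hwg : w ∈ grd k ν := pr_subset_grd k ν hj hwpr
    have hwB : w ∉ B := by
      intro hwB
      rcases hBstr with hplainB | ⟨j', hj', hbB, hcB, hBsub⟩
      · have : w ∈ B ∩ grd k ν := Finset.mem_inter.2 ⟨hwB, hwg⟩
        rw [hplainB] at this
        exact Finset.notMem_empty w this
      · have hwpr' : w ∈ pr k j' := hBsub (Finset.mem_inter.2 ⟨hwB, hwg⟩)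
        have hjj : j = j' := by
          by_contra hne
          exact (Finset.disjoint_left.1 (pr_disjoint k hk0 hne) hwpr) hwpr'
        subst hjj
        rcases hcase with rfl | rfl
        · exact (Finset.disjoint_left.1 hBC hbB) (bb_mem_blk k hk0)
        · exact (Finset.disjoint_left.1 hBC hcB) (cc_mem_blk k hk0)
    have hsub2 : insert w (B ∪ blk k l) ⊆ A ∪ B ∪ blk k l := by
      intro x hx
      rcases Finset.mem_insert.1 hx with rfl | hx
      · exact Finset.mem_union_left _ (Finset.mem_union_left _ hwA)
      · rcases Finset.mem_union.1 hx with hx | hx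
        · exact Finset.mem_union_left _ (Finset.mem_union_right _ hx)
        · exact Finset.mem_union_right _ hx
    have hcard2 : (insert w (B ∪ blk k l)).card = 2*k + 1 := by
      rw [Finset.card_insert_of_notMem, hBCcard]
      simp only [Finset.mem_union]
      tauto
    have := Finset.card_le_card hsub2
    omega

lemma L2 (hk3 : 3 ≤ k) {A B : Finset ℕ} {l : ℕ} (hl : l < ν)
    (hA : A ∈ Fstar k ν n) (hB : B ∈ Fstar k ν n) (hAB : A ≠ B)
    (h : A ∩ B ∩ blk k l = ∅) : 2*k < (A ∪ B ∪ blk k l).card := by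
  have hk0 : 0 < k := by omega
  by_cases hBC : Disjoint B (blk k l)
  · exact L2' hk3 hl hA hB hAB hBC
  by_cases hAC : Disjoint A (blk k l)
  · have := L2' hk3 hl hB hA (Ne.symm hAB) hAC
    have he : B ∪ A ∪ blk k l = A ∪ B ∪ blk k l := by
      ext x; simp only [Finset.mem_union]; tauto
    rwa [he] at this
  · obtain ⟨j, hj, hbA, hcA, _, hcase⟩ := meets_blk hk3 hl hA hAC
    obtain ⟨j', hj', hbB, hcB, _, hcase'⟩ := meets_blk hk3 hl hB hBC
    have hjj : j = j' := by omega
    subst hjj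
    exfalso
    rcases hcase with rfl | rfl
    · have : bb k j ∈ A ∩ B ∩ blk k (2*j) :=
        Finset.mem_inter.2 ⟨Finset.mem_inter.2 ⟨hbA, hbB⟩, bb_mem_blk k hk0⟩
      rw [h] at this
      exact Finset.notMem_empty _ this
    · have : cc k j ∈ A ∩ B ∩ blk k (2*j+1) :=
        Finset.mem_inter.2 ⟨Finset.mem_inter.2 ⟨hcA, hcB⟩, cc_mem_blk k hk0⟩
      rw [h] at this
      exact Finset.notMem_empty _ this

lemma L1 (hk3 : 3 ≤ k) {A B C : Finset ℕ} (hA : A ∈ Fstar k ν n) (hB : B ∈ Fblk k ν)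
    (hC : C ∈ Fblk k ν) (hBC : B ≠ C) : 2*k < (A ∪ B ∪ C).card := by
  have hk0 : 0 < k := by omega
  obtain ⟨l, hl, rfl⟩ := blk_mem_facts hB
  obtain ⟨l', hl', rfl⟩ := blk_mem_facts hC
  have hll : l ≠ l' := fun h => hBC (by rw [h])
  have hdisj := blk_disjoint k hk0 hll
  have hBCcard : (blk k l ∪ blk k l').card = 2*k := by
    rw [Finset.card_union_of_disjoint hdisj, blk_card, blk_card]; ring
  obtain ⟨hxA, _, _, _⟩ := star_mem hk3 hA
  have hxnot : k*ν ∉ blk k l ∪ blk k l' := by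
    intro h
    rcases Finset.mem_union.1 h with h | h
    · exact xx_not_mem_grd k ν (blk_subset_grd k ν hl h)
    · exact xx_not_mem_grd k ν (blk_subset_grd k ν hl' h)
  have hsub : insert (k*ν) (blk k l ∪ blk k l') ⊆ A ∪ blk k l ∪ blk k l' := by
    intro x hx
    rcases Finset.mem_insert.1 hx with rfl | hx
    · exact Finset.mem_union_left _ (Finset.mem_union_left _ hxA)
    · rcases Finset.mem_union.1 hx with hx | hx
      · exact Finset.mem_union_left _ (Finset.mem_union_right _ hx)
      · exact Finset.mem_union_right _ hx
  have hc : (insert (k*ν) (blk k l ∪ blk k l')).card = 2*k+1 := by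
    rw [Finset.card_insert_of_notMem hxnot, hBCcard]
  have := Finset.card_le_card hsub
  omega

lemma L3 (hk3 : 3 ≤ k) {A B C : Finset ℕ} (hA : A ∈ Fblk k ν) (hB : B ∈ Fblk k ν)
    (hC : C ∈ Fblk k ν) (hAB : A ≠ B) (hAC : A ≠ C) (hBC : B ≠ C) :
    2*k < (A ∪ B ∪ C).card := by
  have hk0 : 0 < k := by omega
  obtain ⟨l1, hl1, rfl⟩ := blk_mem_facts hA
  obtain ⟨l2, hl2, rfl⟩ := blk_mem_facts hB
  obtain ⟨l3, hl3, rfl⟩ := blk_mem_facts hC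
  have h12 : l1 ≠ l2 := fun h => hAB (by rw [h])
  have h13 : l1 ≠ l3 := fun h => hAC (by rw [h])
  have h23 : l2 ≠ l3 := fun h => hBC (by rw [h])
  have hd12 := blk_disjoint k hk0 h12
  have hd : Disjoint (blk k l1 ∪ blk k l2) (blk k l3) :=
    Finset.disjoint_union_left.2 ⟨blk_disjoint k hk0 h13, blk_disjoint k hk0 h23⟩
  rw [Finset.card_union_of_disjoint hd, Finset.card_union_of_disjoint hd12,
    blk_card, blk_card, blk_card]
  omega

lemma key (hk3 : 3 ≤ k) {A B C : Finset ℕ} (hA : A ∈ FF k ν n) (hB : B ∈ FF k ν n)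
    (hC : C ∈ FF k ν n) (hAB : A ≠ B) (hAC : A ≠ C) (hBC : B ≠ C)
    (h : A ∩ B ∩ C = ∅) : 2*k < (A ∪ B ∪ C).card := by
  have hinter : ∀ X Y Z : Finset ℕ, A ∩ B ∩ C = ∅ →
      ((X = A ∧ Y = B ∧ Z = C) ∨ (X = A ∧ Y = C ∧ Z = B) ∨ (X = B ∧ Y = C ∧ Z = A)) →
      X ∩ Y ∩ Z = ∅ := by
    rintro X Y Z hh (⟨rfl, rfl, rfl⟩ | ⟨rfl, rfl, rfl⟩ | ⟨rfl, rfl, rfl⟩)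
    · exact hh
    all_goals
      rw [Finset.eq_empty_iff_forall_notMem] at hh ⊢
      intro x hx
      apply hh x
      simp only [Finset.mem_inter] at hx ⊢
      tauto
  rcases Finset.mem_union.1 hA with hA | hA <;>
    rcases Finset.mem_union.1 hB with hB | hB <;>
      rcases Finset.mem_union.1 hC with hC | hC
  · exact L3 hk3 hA hB hC hAB hAC hBC
  · -- A blk, B blk, C star
    have he : C ∪ A ∪ B = A ∪ B ∪ C := by
      ext x; simp only [Finset.mem_union]; tauto
    have := L1 hk3 hC hA hB hAB
    rwa [he] at this
  · -- A blk, B star, C blk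
    have he : B ∪ A ∪ C = A ∪ B ∪ C := by
      ext x; simp only [Finset.mem_union]; tauto
    have := L1 hk3 hB hA hC hAC
    rwa [he] at this
  · -- A blk, B star, C star
    obtain ⟨l, hl, rfl⟩ := blk_mem_facts hA
    have he : B ∪ C ∪ blk k l = blk k l ∪ B ∪ C := by
      ext x; simp only [Finset.mem_union]; tauto
    have := L2 hk3 hl hB hC hBC (hinter B C (blk k l) h (Or.inr (Or.inr ⟨rfl, rfl, rfl⟩)))
    rwa [he] at this
  · -- A star, B blk, C blk
    exact L1 hk3 hA hB hC hBC
  · -- A star, B blk, C star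
    obtain ⟨l, hl, rfl⟩ := blk_mem_facts hB
    have he : A ∪ C ∪ blk k l = A ∪ blk k l ∪ C := by
      ext x; simp only [Finset.mem_union]; tauto
    have := L2 hk3 hl hA hC hAC (hinter A C (blk k l) h (Or.inr (Or.inl ⟨rfl, rfl, rfl⟩)))
    rwa [he] at this
  · -- A star, B star, C blk
    obtain ⟨l, hl, rfl⟩ := blk_mem_facts hC
    exact L2 hk3 hl hA hB hAB (hinter A B (blk k l) h (Or.inl ⟨rfl, rfl, rfl⟩))
  · -- all star
    exfalso
    have hx : k*ν ∈ A ∩ B ∩ C := Finset.mem_inter.2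
      ⟨Finset.mem_inter.2 ⟨(star_mem hk3 hA).1, (star_mem hk3 hB).1⟩, (star_mem hk3 hC).1⟩
    rw [h] at hx
    exact Finset.notMem_empty _ hx

lemma no_cluster (hk3 : 3 ≤ k) : ¬ HasCluster 3 k (FF k ν n) := by
  rintro ⟨A, hinj, hmem, hcard, hint⟩
  have h01 : A 0 ≠ A 1 := fun h => absurd (hinj h) (by decide)
  have h02 : A 0 ≠ A 2 := fun h => absurd (hinj h) (by decide)
  have h12 : A 1 ≠ A 2 := fun h => absurd (hinj h) (by decide)
  have hsup : Finset.univ.sup A = A 0 ∪ A 1 ∪ A 2 := by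
    have : (Finset.univ : Finset (Fin 3)) = {0, 1, 2} := by decide
    rw [this]
    simp only [Finset.sup_insert, Finset.sup_singleton, Finset.sup_eq_union]
    ext x; simp only [Finset.mem_union]; tauto
  have hintf : A 0 ∩ A 1 ∩ A 2 = ∅ := by
    rw [Finset.eq_empty_iff_forall_notMem]
    intro x hx
    simp only [Finset.mem_inter] at hx
    have : x ∈ (⋂ i, (A i : Set ℕ)) := by
      rw [Set.mem_iInter]
      intro i
      fin_cases i <;> simp only [Finset.mem_coe] <;> tauto
    rw [hint] at this
    exact this
  have := key hk3 (hmem 0) (hmem 1) (hmem 2) h01 h02 h12 hintf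
  rw [hsup] at hcard
  omega

end S1

theorem stmt1 (k ν : ℕ) (hk : 3 ≤ k) (hν : 1 ≤ ν) :
    ∃ N : ℕ, ∀ n ≥ N, ∃ F : Finset (Finset ℕ),
      F ⊆ Finset.powersetCard k (Finset.range n) ∧
      ¬ HasCluster 3 k F ∧
      matchingNumber F = ν + 1 ∧
      F.card = Nat.choose (n - k * ν - 1) (k - 1) +
        (∑ i ∈ Finset.Icc 2 (k - 1),
          (ν / 2) * Nat.choose (2 * k - 2) (i - 2) * Nat.choose (n - k * ν - 1) (k - 1 - i)) +
        ν := by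
  refine ⟨k*ν + k + 1, fun n hn => ⟨S1.FF k ν n, S1.FF_subset hk (by omega), ?_, ?_, ?_⟩⟩
  · exact S1.no_cluster hk
  · exact S1.matching_FF hk hν hn
  · exact S1.FF_card hk
end

section
/- Let k ≥ 4 and ν ≥ 1 be fixed integers, and let ex(ν, P_2^3) denote the maximum number of edges of a 3-uniform hypergraph on ν vertices in which every 2-element vertex set is contained in at most one edge. For all sufficiently large n there exists a family F ⊆ binom([n],k) that is 3-cluster-free, has matching number exactly ν+1, and satisfies |F| = C(n-kν-1, k-1) + ⌊ν/2⌋·C(n-kν-1, k-3) + (k-1)·ex(ν, P_2^3)·C(n-kν-1, k-4) + ν. -/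
open Finset

open scoped Classical in
/-- `exP2 r m` is the maximum number of edges of an `r`-uniform hypergraph on `m` vertices
(in `Finset.range m`) in which every `(r-1)`-element vertex set is contained in at most one
edge, i.e. the Turán number `ex(m, P₂ʳ)` of the tight path with two edges. -/
noncomputable def exP2 (r m : ℕ) : ℕ :=
  (((Finset.powersetCard r (Finset.range m)).powerset).filter
    (fun G : Finset (Finset ℕ) => ∀ S ⊆ Finset.range m, S.card = r - 1 →
      (G.filter fun E => S ⊆ E).card ≤ 1)).sup Finset.card

namespace S2

/-- vertex at offset `t` in block `i` -/
def w (k i t : ℕ) : ℕ := 1 + i * k + t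
/-- block `i`: an interval of `k` vertices -/
def blk (k i : ℕ) : Finset ℕ := Finset.Ico (1 + i * k) (1 + i * k + k)
/-- the block region -/
def reg (k ν : ℕ) : Finset ℕ := Finset.Ico 1 (k * ν + 1)
/-- the free region -/
def Rg (k ν n : ℕ) : Finset ℕ := Finset.Ico (k * ν + 1) n
/-- pair of representatives for pair `j` -/
def pr (k j : ℕ) : Finset ℕ := {w k (2 * j) 0, w k (2 * j + 1) 0}
/-- triple at offset `t` corresponding to edge `e` -/
def tr (k t : ℕ) (e : Finset ℕ) : Finset ℕ := e.image (fun x => w k x t)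
/-- a "starred" set: `{0} ∪ P ∪ S` -/
def mk (P S : Finset ℕ) : Finset ℕ := insert 0 (P ∪ S)

lemma mul_succ_le {i i' k : ℕ} (h : i < i') : i * k + k ≤ i' * k := by
  calc i * k + k = (i + 1) * k := by ring
    _ ≤ i' * k := Nat.mul_le_mul_right k h

lemma w_inj {k i t i' t' : ℕ} (ht : t < k) (ht' : t' < k)
    (h : w k i t = w k i' t') : i = i' ∧ t = t' := by
  unfold w at h
  have h1 : i * k + t = i' * k + t' := by omega
  have hi : i = i' := by
    rcases Nat.lt_trichotomy i i' with h2 | h2 | h2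
    · have := mul_succ_le (k := k) h2
      omega
    · exact h2
    · have := mul_succ_le (k := k) h2
      omega
  subst hi; omega

lemma mem_blk {k i x : ℕ} : x ∈ blk k i ↔ 1 + i * k ≤ x ∧ x < 1 + i * k + k :=
  Finset.mem_Ico

lemma w_mem_blk_iff {k i p t : ℕ} (ht : t < k) : w k i t ∈ blk k p ↔ i = p := by
  rw [mem_blk]
  unfold w
  constructor
  · rintro ⟨h1, h2⟩
    rcases Nat.lt_trichotomy i p with h3 | h3 | h3
    · have := mul_succ_le (k := k) h3; omega
    · exact h3
    · have := mul_succ_le (k := k) h3; omega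
  · rintro rfl; omega

lemma blk_card {k i : ℕ} : (blk k i).card = k := by
  rw [blk, Nat.card_Ico]; omega

lemma blk_disjoint {k i j : ℕ} (h : i ≠ j) : Disjoint (blk k i) (blk k j) := by
  rw [Finset.disjoint_left]
  intro x hx hx'
  rw [mem_blk] at hx hx'
  rcases Nat.lt_trichotomy i j with h3 | h3 | h3
  · have := mul_succ_le (k := k) h3; omega
  · exact h h3
  · have := mul_succ_le (k := k) h3; omega

lemma zero_notMem_blk {k i : ℕ} : 0 ∉ blk k i := by
  rw [mem_blk]; omega

lemma blk_subset_reg {k ν i : ℕ} (hi : i < ν) : blk k i ⊆ reg k ν := by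
  intro x hx
  rw [mem_blk] at hx
  rw [reg, Finset.mem_Ico]
  have : (i + 1) * k ≤ ν * k := Nat.mul_le_mul_right k hi
  have : ν * k = k * ν := Nat.mul_comm _ _
  constructor <;> nlinarith [Nat.mul_le_mul_right k hi]

lemma reg_disj_Rg {k ν n : ℕ} : Disjoint (reg k ν) (Rg k ν n) := by
  rw [Finset.disjoint_left]
  intro x hx hx'
  rw [reg, Finset.mem_Ico] at hx
  rw [Rg, Finset.mem_Ico] at hx'
  omega

lemma zero_notMem_reg {k ν : ℕ} : 0 ∉ reg k ν := by rw [reg, Finset.mem_Ico]; omega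
lemma zero_notMem_Rg {k ν n : ℕ} : 0 ∉ Rg k ν n := by rw [Rg, Finset.mem_Ico]; omega

lemma w_mem_reg {k ν i t : ℕ} (hi : i < ν) (ht : t < k) : w k i t ∈ reg k ν :=
  blk_subset_reg hi ((w_mem_blk_iff ht).mpr rfl)

lemma pr_subset_reg {k ν j : ℕ} (hk : 1 ≤ k) (hj : 2 * j + 1 < ν) : pr k j ⊆ reg k ν := by
  intro x hx
  rw [pr, Finset.mem_insert, Finset.mem_singleton] at hx
  rcases hx with rfl | rfl
  · exact w_mem_reg (by omega) (by omega)
  · exact w_mem_reg hj (by omega)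

lemma pr_card {k j : ℕ} (hk : 1 ≤ k) : (pr k j).card = 2 := by
  rw [pr, Finset.card_insert_of_notMem, Finset.card_singleton]
  rw [Finset.mem_singleton]
  intro h
  have := w_inj (show 0 < k by omega) (show 0 < k by omega) h
  omega

lemma tr_subset_reg {k ν t : ℕ} {e : Finset ℕ} (he : e ⊆ Finset.range ν) (ht : t < k) :
    tr k t e ⊆ reg k ν := by
  intro x hx
  rw [tr, Finset.mem_image] at hx
  obtain ⟨y, hy, rfl⟩ := hx
  exact w_mem_reg (Finset.mem_range.mp (he hy)) ht

lemma tr_card {k t : ℕ} {e : Finset ℕ} (ht : t < k) : (tr k t e).card = e.card := by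
  rw [tr]
  apply Finset.card_image_of_injOn
  intro a _ b _ h
  exact (w_inj ht ht h).1

lemma zero_mem_mk {P S : Finset ℕ} : 0 ∈ mk P S := Finset.mem_insert_self _ _

lemma mk_card {k ν n : ℕ} {P S : Finset ℕ} (hP : P ⊆ reg k ν) (hS : S ⊆ Rg k ν n) :
    (mk P S).card = 1 + P.card + S.card := by
  rw [mk, Finset.card_insert_of_notMem, Finset.card_union_of_disjoint]
  · omega
  · exact Finset.disjoint_of_subset_left hP (Finset.disjoint_of_subset_right hS reg_disj_Rg)
  · rw [Finset.mem_union]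
    rintro (h | h)
    · exact zero_notMem_reg (hP h)
    · exact zero_notMem_Rg (hS h)

lemma mk_inter_Rg {k ν n : ℕ} {P S : Finset ℕ} (hP : P ⊆ reg k ν) (hS : S ⊆ Rg k ν n) :
    mk P S ∩ Rg k ν n = S := by
  ext x
  simp only [mk, Finset.mem_inter, Finset.mem_insert, Finset.mem_union]
  constructor
  · rintro ⟨rfl | hx | hx, hR⟩
    · exact absurd hR zero_notMem_Rg
    · exact absurd hR (Finset.disjoint_left.mp reg_disj_Rg (hP hx))
    · exact hx
  · intro hx; exact ⟨Or.inr (Or.inr hx), hS hx⟩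

lemma mk_inter_reg {k ν n : ℕ} {P S : Finset ℕ} (hP : P ⊆ reg k ν) (hS : S ⊆ Rg k ν n) :
    mk P S ∩ reg k ν = P := by
  ext x
  simp only [mk, Finset.mem_inter, Finset.mem_insert, Finset.mem_union]
  constructor
  · rintro ⟨rfl | hx | hx, hR⟩
    · exact absurd hR zero_notMem_reg
    · exact hx
    · exact absurd hR (Finset.disjoint_right.mp reg_disj_Rg (hS hx))
  · intro hx; exact ⟨Or.inr (Or.inl hx), hP hx⟩

lemma mk_subset_range {k ν n : ℕ} {P S : Finset ℕ} (hn : k * ν + 1 ≤ n)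
    (hP : P ⊆ reg k ν) (hS : S ⊆ Rg k ν n) : mk P S ⊆ Finset.range n := by
  intro x hx
  rw [mk, Finset.mem_insert, Finset.mem_union] at hx
  rw [Finset.mem_range]
  rcases hx with rfl | hx | hx
  · omega
  · have := hP hx; rw [reg, Finset.mem_Ico] at this; omega
  · have := hS hx; rw [Rg, Finset.mem_Ico] at this; omega

lemma inter_mk_bound {k ν n : ℕ} {P S P' S' : Finset ℕ} (hP : P ⊆ reg k ν)
    (hS : S ⊆ Rg k ν n) (hP' : P' ⊆ reg k ν) (hS' : S' ⊆ Rg k ν n) :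
    (mk P S ∩ mk P' S').card ≤ 1 + (P ∩ P').card + (S ∩ S').card := by
  have hsub : mk P S ∩ mk P' S' ⊆ insert 0 ((P ∩ P') ∪ (S ∩ S')) := by
    intro x hx
    rw [Finset.mem_inter] at hx
    obtain ⟨h1, h2⟩ := hx
    rw [mk, Finset.mem_insert, Finset.mem_union] at h1 h2
    rw [Finset.mem_insert, Finset.mem_union, Finset.mem_inter, Finset.mem_inter]
    rcases h1 with rfl | h1 | h1
    · exact Or.inl rfl
    · rcases h2 with rfl | h2 | h2
      · exact absurd (hP h1) zero_notMem_reg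
      · exact Or.inr (Or.inl ⟨h1, h2⟩)
      · exact absurd (hS' h2) (Finset.disjoint_left.mp reg_disj_Rg (hP h1))
    · rcases h2 with rfl | h2 | h2
      · exact absurd (hS h1) zero_notMem_Rg
      · exact absurd (hP' h2) (Finset.disjoint_right.mp reg_disj_Rg (hS h1))
      · exact Or.inr (Or.inr ⟨h1, h2⟩)
  calc (mk P S ∩ mk P' S').card ≤ (insert 0 ((P ∩ P') ∪ (S ∩ S'))).card :=
        Finset.card_le_card hsub
    _ ≤ 1 + ((P ∩ P') ∪ (S ∩ S')).card := by
        rw [add_comm]; exact Finset.card_insert_le _ _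
    _ ≤ 1 + ((P ∩ P').card + (S ∩ S').card) := by
        have := Finset.card_union_le (P ∩ P') (S ∩ S'); omega
    _ = 1 + (P ∩ P').card + (S ∩ S').card := by omega

lemma blk_inter_mk {k ν n p : ℕ} {P S : Finset ℕ} (hp : p < ν)
    (hS : S ⊆ Rg k ν n) : blk k p ∩ mk P S = blk k p ∩ P := by
  ext x
  simp only [Finset.mem_inter, mk, Finset.mem_insert, Finset.mem_union]
  constructor
  · rintro ⟨hb, rfl | hx | hx⟩
    · exact absurd hb zero_notMem_blk
    · exact ⟨hb, hx⟩
    · exact absurd (hS hx)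
        (Finset.disjoint_left.mp reg_disj_Rg (blk_subset_reg hp hb))
  · rintro ⟨hb, hx⟩; exact ⟨hb, Or.inr (Or.inl hx)⟩


/-- a good witness hypergraph -/
def GoodG (ν : ℕ) (G : Finset (Finset ℕ)) : Prop :=
  (∀ e ∈ G, e.card = 3 ∧ e ⊆ Finset.range ν) ∧
  (∀ e ∈ G, ∀ e' ∈ G, e ≠ e' → (e ∩ e').card ≤ 1)

lemma pr_inter_pr {k j j' : ℕ} (hk : 1 ≤ k) (hjj : j ≠ j') : pr k j ∩ pr k j' = ∅ := by
  rw [Finset.eq_empty_iff_forall_notMem]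
  intro x hx
  simp only [Finset.mem_inter, pr, Finset.mem_insert, Finset.mem_singleton] at hx
  obtain ⟨h1 | h1, h2 | h2⟩ := hx <;>
    (subst h1; have := w_inj (show 0 < k by omega) (show 0 < k by omega) h2; omega)

lemma pr_inter_tr {k j t : ℕ} (ht1 : 1 ≤ t) (ht : t < k) {e : Finset ℕ} :
    pr k j ∩ tr k t e = ∅ := by
  rw [Finset.eq_empty_iff_forall_notMem]
  intro x hx
  rw [Finset.mem_inter, pr, Finset.mem_insert, Finset.mem_singleton, tr,
    Finset.mem_image] at hx
  obtain ⟨h1 | h1, y, _, h2⟩ := hx <;>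
    (subst h1; have := w_inj ht (show 0 < k by omega) h2; omega)

lemma tr_inter_tr_ne {k t t' : ℕ} (ht : t < k) (ht' : t' < k) (htt : t ≠ t')
    {e e' : Finset ℕ} : tr k t e ∩ tr k t' e' = ∅ := by
  rw [Finset.eq_empty_iff_forall_notMem]
  intro x hx
  rw [Finset.mem_inter, tr, Finset.mem_image, tr, Finset.mem_image] at hx
  obtain ⟨⟨y, _, h1⟩, ⟨z, _, h2⟩⟩ := hx
  subst h1
  have := w_inj ht' ht h2
  omega

lemma tr_inter_tr_eq {k t : ℕ} (ht : t < k) {e e' : Finset ℕ} :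
    tr k t e ∩ tr k t e' ⊆ (e ∩ e').image (fun x => w k x t) := by
  intro x hx
  rw [Finset.mem_inter, tr, Finset.mem_image, tr, Finset.mem_image] at hx
  obtain ⟨⟨y, hy, h1⟩, ⟨z, hz, h2⟩⟩ := hx
  subst h1
  obtain ⟨rfl, -⟩ := w_inj ht ht h2.symm
  exact Finset.mem_image_of_mem _ (Finset.mem_inter.mpr ⟨hy, hz⟩)

lemma blk_inter_pr {k p j : ℕ} (hk : 1 ≤ k) : blk k p ∩ pr k j ⊆ {w k p 0} := by
  intro x hx
  rw [Finset.mem_inter, pr, Finset.mem_insert, Finset.mem_singleton] at hx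
  rw [Finset.mem_singleton]
  obtain ⟨h1, h2 | h2⟩ := hx <;>
    (subst h2; rw [w_mem_blk_iff (show 0 < k by omega)] at h1; rw [h1])

lemma blk_inter_tr {k p t : ℕ} (ht : t < k) {e : Finset ℕ} :
    blk k p ∩ tr k t e ⊆ {w k p t} := by
  intro x hx
  rw [Finset.mem_inter, tr, Finset.mem_image] at hx
  rw [Finset.mem_singleton]
  obtain ⟨h1, y, hy, h2⟩ := hx
  subst h2
  rw [w_mem_blk_iff ht] at h1
  rw [h1]

lemma mem_blk_inter_pr {k p j x : ℕ} (hk : 1 ≤ k) (hx : x ∈ blk k p ∩ pr k j) :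
    x = w k p 0 ∧ (p = 2 * j ∨ p = 2 * j + 1) := by
  have h0 := blk_inter_pr (k := k) (p := p) (j := j) hk hx
  rw [Finset.mem_singleton] at h0
  rw [Finset.mem_inter, pr, Finset.mem_insert, Finset.mem_singleton] at hx
  obtain ⟨h1, h2 | h2⟩ := hx <;> subst h2 <;>
    rw [w_mem_blk_iff (show 0 < k by omega)] at h1 <;> exact ⟨h0, by omega⟩

lemma mem_blk_inter_tr {k p t x : ℕ} (ht : t < k) {e : Finset ℕ}
    (hx : x ∈ blk k p ∩ tr k t e) : x = w k p t ∧ p ∈ e := by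
  have h0 := blk_inter_tr ht hx
  rw [Finset.mem_singleton] at h0
  rw [Finset.mem_inter, tr, Finset.mem_image] at hx
  obtain ⟨h1, y, hy, h2⟩ := hx
  subst h2
  rw [w_mem_blk_iff ht] at h1
  subst h1
  exact ⟨h0, hy⟩

/-- distinct finsets of equal size intersect in strictly fewer elements -/
lemma inter_card_lt {S S' : Finset ℕ} (h : S ≠ S') (hc : S.card = S'.card) :
    (S ∩ S').card < S.card := by
  apply Finset.card_lt_card
  refine ⟨Finset.inter_subset_left, fun hsub => h ?_⟩
  exact Finset.eq_of_subset_of_card_le (hsub.trans Finset.inter_subset_right) hc.ge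


section Fam
variable (k ν n : ℕ) (G : Finset (Finset ℕ))

def Fa : Finset (Finset ℕ) := (Finset.powersetCard (k-1) (Rg k ν n)).image (mk ∅)
def Fb : Finset (Finset ℕ) :=
  ((Finset.range (ν/2)) ×ˢ Finset.powersetCard (k-3) (Rg k ν n)).image
    (fun q => mk (pr k q.1) q.2)
def Fc : Finset (Finset ℕ) :=
  (((Finset.Ico 1 k) ×ˢ G) ×ˢ Finset.powersetCard (k-4) (Rg k ν n)).image
    (fun q => mk (tr k q.1.1 q.1.2) q.2)
def Fd : Finset (Finset ℕ) := (Finset.range ν).image (blk k)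
def Fam : Finset (Finset ℕ) := Fa k ν n ∪ Fb k ν n ∪ Fc k ν n G ∪ Fd k ν

def Star (X : Finset ℕ) : Prop :=
  (∃ S ∈ Finset.powersetCard (k-1) (Rg k ν n), X = mk ∅ S) ∨
  (∃ j < ν/2, ∃ S ∈ Finset.powersetCard (k-3) (Rg k ν n), X = mk (pr k j) S) ∨
  (∃ t ∈ Finset.Ico 1 k, ∃ e ∈ G, ∃ S ∈ Finset.powersetCard (k-4) (Rg k ν n),
    X = mk (tr k t e) S)

end Fam

variable {k ν n : ℕ} {G : Finset (Finset ℕ)}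

lemma star_parts (hk : 4 ≤ k) (hν : 1 ≤ ν) (hG : GoodG ν G) {X : Finset ℕ}
    (hX : Star k ν n G X) :
    ∃ P S, X = mk P S ∧ P ⊆ reg k ν ∧ S ⊆ Rg k ν n ∧ P.card + S.card = k - 1 := by
  rcases hX with ⟨S, hS, rfl⟩ | ⟨j, hj, S, hS, rfl⟩ | ⟨t, ht, e, he, S, hS, rfl⟩
  · rw [Finset.mem_powersetCard] at hS
    exact ⟨∅, S, rfl, by simp, hS.1, by simp [hS.2]⟩
  · rw [Finset.mem_powersetCard] at hS
    refine ⟨pr k j, S, rfl, pr_subset_reg (by omega) (by omega), hS.1, ?_⟩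
    rw [pr_card (by omega), hS.2]; omega
  · rw [Finset.mem_powersetCard] at hS
    rw [Finset.mem_Ico] at ht
    refine ⟨tr k t e, S, rfl, tr_subset_reg (hG.1 e he).2 ht.2, hS.1, ?_⟩
    rw [tr_card ht.2, (hG.1 e he).1, hS.2]; omega

lemma star_card (hk : 4 ≤ k) (hν : 1 ≤ ν) (hG : GoodG ν G) {X : Finset ℕ}
    (hX : Star k ν n G X) : X.card = k := by
  obtain ⟨P, S, rfl, hP, hS, hc⟩ := star_parts hk hν hG hX
  rw [mk_card hP hS]; omega

lemma star_zero_mem (hX : Star k ν n G X) : (0 : ℕ) ∈ X := by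
  rcases hX with ⟨S, hS, rfl⟩ | ⟨j, hj, S, hS, rfl⟩ | ⟨t, ht, e, he, S, hS, rfl⟩ <;>
    exact zero_mem_mk

lemma star_subset_range (hk : 4 ≤ k) (hν : 1 ≤ ν) (hG : GoodG ν G)
    (hn : k * ν + 1 ≤ n) {X : Finset ℕ} (hX : Star k ν n G X) :
    X ⊆ Finset.range n := by
  obtain ⟨P, S, rfl, hP, hS, -⟩ := star_parts hk hν hG hX
  exact mk_subset_range hn hP hS

lemma classify {X : Finset ℕ} (hX : X ∈ Fam k ν n G) :
    Star k ν n G X ∨ ∃ p < ν, X = blk k p := by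
  rw [Fam, Finset.mem_union, Finset.mem_union, Finset.mem_union] at hX
  rcases hX with ((h | h) | h) | h
  · rw [Fa, Finset.mem_image] at h
    obtain ⟨S, hS, rfl⟩ := h
    exact Or.inl (Or.inl ⟨S, hS, rfl⟩)
  · rw [Fb, Finset.mem_image] at h
    obtain ⟨⟨j, S⟩, hq, rfl⟩ := h
    rw [Finset.mem_product] at hq
    exact Or.inl (Or.inr (Or.inl ⟨j, Finset.mem_range.mp hq.1, S, hq.2, rfl⟩))
  · rw [Fc, Finset.mem_image] at h
    obtain ⟨⟨⟨t, e⟩, S⟩, hq, rfl⟩ := h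
    rw [Finset.mem_product, Finset.mem_product] at hq
    exact Or.inl (Or.inr (Or.inr ⟨t, hq.1.1, e, hq.1.2, S, hq.2, rfl⟩))
  · rw [Fd, Finset.mem_image] at h
    obtain ⟨p, hp, rfl⟩ := h
    exact Or.inr ⟨p, Finset.mem_range.mp hp, rfl⟩

lemma mem_Fam_of_star (hX : Star k ν n G X) : X ∈ Fam k ν n G := by
  rw [Fam, Finset.mem_union, Finset.mem_union, Finset.mem_union]
  rcases hX with ⟨S, hS, rfl⟩ | ⟨j, hj, S, hS, rfl⟩ | ⟨t, ht, e, he, S, hS, rfl⟩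
  · exact Or.inl (Or.inl (Or.inl (Finset.mem_image_of_mem _ hS)))
  · refine Or.inl (Or.inl (Or.inr ?_))
    rw [Fb, Finset.mem_image]
    exact ⟨(j, S), Finset.mem_product.mpr ⟨Finset.mem_range.mpr hj, hS⟩, rfl⟩
  · refine Or.inl (Or.inr ?_)
    rw [Fc, Finset.mem_image]
    exact ⟨((t, e), S), Finset.mem_product.mpr
      ⟨Finset.mem_product.mpr ⟨ht, he⟩, hS⟩, rfl⟩

lemma blk_mem_Fam (hp : p < ν) : blk k p ∈ Fam k ν n G := by
  rw [Fam, Finset.mem_union]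
  exact Or.inr (Finset.mem_image_of_mem _ (Finset.mem_range.mpr hp))


lemma mem_mk_left {P S : Finset ℕ} {x : ℕ} (h : x ∈ P) : x ∈ mk P S :=
  Finset.mem_insert_of_mem (Finset.mem_union_left _ h)

lemma card_le_one_of_subset_singleton {s : Finset ℕ} {a : ℕ} (h : s ⊆ {a}) :
    s.card ≤ 1 := le_trans (Finset.card_le_card h) (by simp)

/-- The key intersection bound for two distinct starred sets against a block. -/
lemma key_bound (hk : 4 ≤ k) (hν : 1 ≤ ν) (hG : GoodG ν G) {p : ℕ} (hp : p < ν)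
    {A A' : Finset ℕ} (hA : Star k ν n G A) (hA' : Star k ν n G A')
    (hne : A ≠ A')
    (hemp : ∀ x, x ∈ blk k p → x ∈ A → x ∈ A' → False) :
    (A ∩ A').card + (blk k p ∩ A).card + (blk k p ∩ A').card ≤ k - 1 := by
  have hk1 : (1 : ℕ) ≤ k := by omega
  rcases hA with ⟨S, hS, hAe⟩ | ⟨j, hj, S, hS, hAe⟩ | ⟨t, htm, e, he, S, hS, hAe⟩ <;>
    rcases hA' with ⟨S', hS', hAe'⟩ | ⟨j', hj', S', hS', hAe'⟩ |
      ⟨t', htm', e', he', S', hS', hAe'⟩ <;>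
    rw [Finset.mem_powersetCard] at hS hS' <;>
    obtain ⟨hSR, hSc⟩ := hS <;> obtain ⟨hSR', hSc'⟩ := hS' <;>
    subst hAe <;> subst hAe'
  -- case (a,a)
  · have hPreg : (∅ : Finset ℕ) ⊆ reg k ν := by simp
    have h1 := inter_mk_bound (n := n) hPreg hSR hPreg hSR'
    have h2 : blk k p ∩ mk ∅ S = blk k p ∩ ∅ := blk_inter_mk hp hSR
    have h3 : blk k p ∩ mk ∅ S' = blk k p ∩ ∅ := blk_inter_mk hp hSR'
    have h4 : S ≠ S' := by rintro rfl; exact hne rfl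
    have h5 : (S ∩ S').card < S.card := inter_card_lt h4 (by omega)
    simp only [Finset.inter_empty, Finset.card_empty] at h1 h2 h3
    rw [h2, h3]
    simp only [Finset.inter_empty, Finset.card_empty]
    omega
  -- case (a,b)
  · have hPreg : (∅ : Finset ℕ) ⊆ reg k ν := by simp
    have hP'reg : pr k j' ⊆ reg k ν := pr_subset_reg hk1 (by omega)
    have h1 := inter_mk_bound (n := n) hPreg hSR hP'reg hSR'
    have h2 : blk k p ∩ mk ∅ S = blk k p ∩ ∅ := blk_inter_mk hp hSR
    have h3 : blk k p ∩ mk (pr k j') S' = blk k p ∩ pr k j' := blk_inter_mk hp hSR'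
    have h4 : (blk k p ∩ pr k j').card ≤ 1 :=
      card_le_one_of_subset_singleton (blk_inter_pr hk1)
    have h5 : (S ∩ S').card ≤ S'.card := Finset.card_le_card Finset.inter_subset_right
    simp only [Finset.empty_inter, Finset.card_empty] at h1
    rw [h2, h3]
    simp only [Finset.inter_empty, Finset.card_empty]
    omega
  -- case (a,c)
  · rw [Finset.mem_Ico] at htm'
    have hPreg : (∅ : Finset ℕ) ⊆ reg k ν := by simp
    have hP'reg : tr k t' e' ⊆ reg k ν := tr_subset_reg (hG.1 e' he').2 htm'.2
    have h1 := inter_mk_bound (n := n) hPreg hSR hP'reg hSR'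
    have h2 : blk k p ∩ mk ∅ S = blk k p ∩ ∅ := blk_inter_mk hp hSR
    have h3 : blk k p ∩ mk (tr k t' e') S' = blk k p ∩ tr k t' e' :=
      blk_inter_mk hp hSR'
    have h4 : (blk k p ∩ tr k t' e').card ≤ 1 :=
      card_le_one_of_subset_singleton (blk_inter_tr htm'.2)
    have h5 : (S ∩ S').card ≤ S'.card := Finset.card_le_card Finset.inter_subset_right
    simp only [Finset.empty_inter, Finset.card_empty] at h1
    rw [h2, h3]
    simp only [Finset.inter_empty, Finset.card_empty]
    omega
  -- case (b,a)
  · have hPreg : pr k j ⊆ reg k ν := pr_subset_reg hk1 (by omega)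
    have hP'reg : (∅ : Finset ℕ) ⊆ reg k ν := by simp
    have h1 := inter_mk_bound (n := n) hPreg hSR hP'reg hSR'
    have h2 : blk k p ∩ mk (pr k j) S = blk k p ∩ pr k j := blk_inter_mk hp hSR
    have h3 : blk k p ∩ mk ∅ S' = blk k p ∩ ∅ := blk_inter_mk hp hSR'
    have h4 : (blk k p ∩ pr k j).card ≤ 1 :=
      card_le_one_of_subset_singleton (blk_inter_pr hk1)
    have h5 : (S ∩ S').card ≤ S.card := Finset.card_le_card Finset.inter_subset_left
    simp only [Finset.inter_empty, Finset.card_empty] at h1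
    rw [h2, h3]
    simp only [Finset.inter_empty, Finset.card_empty]
    omega
  -- case (b,b)
  · have hPreg : pr k j ⊆ reg k ν := pr_subset_reg hk1 (by omega)
    have hP'reg : pr k j' ⊆ reg k ν := pr_subset_reg hk1 (by omega)
    have h1 := inter_mk_bound (n := n) hPreg hSR hP'reg hSR'
    have h2 : blk k p ∩ mk (pr k j) S = blk k p ∩ pr k j := blk_inter_mk hp hSR
    have h3 : blk k p ∩ mk (pr k j') S' = blk k p ∩ pr k j' := blk_inter_mk hp hSR'
    rw [h2, h3]
    by_cases hjj : j = j'
    · subst hjj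
      have h4 : S ≠ S' := by rintro rfl; exact hne rfl
      have h5 : (S ∩ S').card < S.card := inter_card_lt h4 (by omega)
      have h6 : blk k p ∩ pr k j = ∅ := by
        rw [Finset.eq_empty_iff_forall_notMem]
        intro x hx
        obtain ⟨hx1, -⟩ := mem_blk_inter_pr hk1 hx
        subst hx1
        have hb : w k p 0 ∈ blk k p := (w_mem_blk_iff (by omega)).mpr rfl
        have hprm : w k p 0 ∈ pr k j := (Finset.mem_inter.mp hx).2
        exact hemp _ hb (mem_mk_left hprm) (mem_mk_left hprm)
      rw [h6]
      have h7 : (pr k j ∩ pr k j).card = 2 := by rw [Finset.inter_self, pr_card hk1]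
      simp only [Finset.card_empty]
      omega
    · have h4 : pr k j ∩ pr k j' = ∅ := pr_inter_pr hk1 hjj
      have h5 : (S ∩ S').card ≤ S.card := Finset.card_le_card Finset.inter_subset_left
      have h6 : (blk k p ∩ pr k j).card + (blk k p ∩ pr k j').card ≤ 1 := by
        by_contra hcon
        push_neg at hcon
        have hb1 : (blk k p ∩ pr k j).Nonempty := by
          rw [← Finset.card_pos]
          have := card_le_one_of_subset_singleton
            (blk_inter_pr (k := k) (p := p) (j := j') hk1)
          omega
        have hb2 : (blk k p ∩ pr k j').Nonempty := by
          rw [← Finset.card_pos]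
          have := card_le_one_of_subset_singleton
            (blk_inter_pr (k := k) (p := p) (j := j) hk1)
          omega
        obtain ⟨x, hx⟩ := hb1
        obtain ⟨y, hy⟩ := hb2
        obtain ⟨-, hx2⟩ := mem_blk_inter_pr hk1 hx
        obtain ⟨-, hy2⟩ := mem_blk_inter_pr hk1 hy
        omega
      rw [h4] at h1
      simp only [Finset.card_empty] at h1
      omega
  -- case (b,c)
  · rw [Finset.mem_Ico] at htm'
    have hPreg : pr k j ⊆ reg k ν := pr_subset_reg hk1 (by omega)
    have hP'reg : tr k t' e' ⊆ reg k ν := tr_subset_reg (hG.1 e' he').2 htm'.2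
    have h1 := inter_mk_bound (n := n) hPreg hSR hP'reg hSR'
    have h2 : blk k p ∩ mk (pr k j) S = blk k p ∩ pr k j := blk_inter_mk hp hSR
    have h3 : blk k p ∩ mk (tr k t' e') S' = blk k p ∩ tr k t' e' :=
      blk_inter_mk hp hSR'
    have h4 : pr k j ∩ tr k t' e' = ∅ := pr_inter_tr htm'.1 htm'.2
    have h5 : (blk k p ∩ pr k j).card ≤ 1 :=
      card_le_one_of_subset_singleton (blk_inter_pr hk1)
    have h6 : (blk k p ∩ tr k t' e').card ≤ 1 :=
      card_le_one_of_subset_singleton (blk_inter_tr htm'.2)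
    have h7 : (S ∩ S').card ≤ S'.card := Finset.card_le_card Finset.inter_subset_right
    rw [h4] at h1
    rw [h2, h3]
    simp only [Finset.card_empty] at h1
    omega
  -- case (c,a)
  · rw [Finset.mem_Ico] at htm
    have hPreg : tr k t e ⊆ reg k ν := tr_subset_reg (hG.1 e he).2 htm.2
    have hP'reg : (∅ : Finset ℕ) ⊆ reg k ν := by simp
    have h1 := inter_mk_bound (n := n) hPreg hSR hP'reg hSR'
    have h2 : blk k p ∩ mk (tr k t e) S = blk k p ∩ tr k t e := blk_inter_mk hp hSR
    have h3 : blk k p ∩ mk ∅ S' = blk k p ∩ ∅ := blk_inter_mk hp hSR'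
    have h4 : (blk k p ∩ tr k t e).card ≤ 1 :=
      card_le_one_of_subset_singleton (blk_inter_tr htm.2)
    have h5 : (S ∩ S').card ≤ S.card := Finset.card_le_card Finset.inter_subset_left
    simp only [Finset.inter_empty, Finset.card_empty] at h1
    rw [h2, h3]
    simp only [Finset.inter_empty, Finset.card_empty]
    omega
  -- case (c,b)
  · rw [Finset.mem_Ico] at htm
    have hPreg : tr k t e ⊆ reg k ν := tr_subset_reg (hG.1 e he).2 htm.2
    have hP'reg : pr k j' ⊆ reg k ν := pr_subset_reg hk1 (by omega)
    have h1 := inter_mk_bound (n := n) hPreg hSR hP'reg hSR'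
    have h2 : blk k p ∩ mk (tr k t e) S = blk k p ∩ tr k t e := blk_inter_mk hp hSR
    have h3 : blk k p ∩ mk (pr k j') S' = blk k p ∩ pr k j' := blk_inter_mk hp hSR'
    have h4 : tr k t e ∩ pr k j' = ∅ := by
      rw [Finset.inter_comm]; exact pr_inter_tr htm.1 htm.2
    have h5 : (blk k p ∩ tr k t e).card ≤ 1 :=
      card_le_one_of_subset_singleton (blk_inter_tr htm.2)
    have h6 : (blk k p ∩ pr k j').card ≤ 1 :=
      card_le_one_of_subset_singleton (blk_inter_pr hk1)
    have h7 : (S ∩ S').card ≤ S.card := Finset.card_le_card Finset.inter_subset_left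
    rw [h4] at h1
    rw [h2, h3]
    simp only [Finset.card_empty] at h1 ⊢
    omega
  -- case (c,c)
  · rw [Finset.mem_Ico] at htm htm'
    have hPreg : tr k t e ⊆ reg k ν := tr_subset_reg (hG.1 e he).2 htm.2
    have hP'reg : tr k t' e' ⊆ reg k ν := tr_subset_reg (hG.1 e' he').2 htm'.2
    have h1 := inter_mk_bound (n := n) hPreg hSR hP'reg hSR'
    have h2 : blk k p ∩ mk (tr k t e) S = blk k p ∩ tr k t e := blk_inter_mk hp hSR
    have h3 : blk k p ∩ mk (tr k t' e') S' = blk k p ∩ tr k t' e' :=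
      blk_inter_mk hp hSR'
    rw [h2, h3]
    by_cases htt : t = t'
    · subst htt
      by_cases hee : e = e'
      · subst hee
        have h4 : S ≠ S' := by rintro rfl; exact hne rfl
        have h5 : (S ∩ S').card < S.card := inter_card_lt h4 (by omega)
        have h6 : blk k p ∩ tr k t e = ∅ := by
          rw [Finset.eq_empty_iff_forall_notMem]
          intro x hx
          obtain ⟨hx1, hx2⟩ := mem_blk_inter_tr htm.2 hx
          subst hx1
          have hb : w k p t ∈ blk k p := (w_mem_blk_iff htm.2).mpr rfl
          have htr : w k p t ∈ tr k t e := Finset.mem_image_of_mem _ hx2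
          exact hemp _ hb (mem_mk_left htr) (mem_mk_left htr)
        rw [h6]
        have h7 : (tr k t e ∩ tr k t e).card = e.card := by
          rw [Finset.inter_self, tr_card htm.2]
        have h8 : e.card = 3 := (hG.1 e he).1
        simp only [Finset.card_empty]
        omega
      · have h4 : (tr k t e ∩ tr k t e').card ≤ 1 := by
          calc (tr k t e ∩ tr k t e').card
              ≤ ((e ∩ e').image (fun x => w k x t)).card :=
                Finset.card_le_card (tr_inter_tr_eq htm.2)
            _ ≤ (e ∩ e').card := Finset.card_image_le
            _ ≤ 1 := hG.2 e he e' he' hee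
        have h5 : (S ∩ S').card ≤ S.card := Finset.card_le_card Finset.inter_subset_left
        have h6 : (blk k p ∩ tr k t e).card + (blk k p ∩ tr k t e').card ≤ 1 := by
          by_contra hcon
          push_neg at hcon
          have hb1 : (blk k p ∩ tr k t e).Nonempty := by
            rw [← Finset.card_pos]
            have := card_le_one_of_subset_singleton
              (blk_inter_tr (k := k) (p := p) (e := e') htm.2)
            omega
          have hb2 : (blk k p ∩ tr k t e').Nonempty := by
            rw [← Finset.card_pos]
            have := card_le_one_of_subset_singleton
              (blk_inter_tr (k := k) (p := p) (e := e) htm.2)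
            omega
          obtain ⟨x, hx⟩ := hb1
          obtain ⟨y, hy⟩ := hb2
          obtain ⟨-, hx2⟩ := mem_blk_inter_tr htm.2 hx
          obtain ⟨-, hy2⟩ := mem_blk_inter_tr htm.2 hy
          have hb : w k p t ∈ blk k p := (w_mem_blk_iff htm.2).mpr rfl
          exact hemp _ hb (mem_mk_left (Finset.mem_image_of_mem _ hx2))
            (mem_mk_left (Finset.mem_image_of_mem _ hy2))
        omega
    · have h4 : tr k t e ∩ tr k t' e' = ∅ := tr_inter_tr_ne htm.2 htm'.2 htt
      have h5 : (S ∩ S').card ≤ S.card := Finset.card_le_card Finset.inter_subset_left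
      have h6 : (blk k p ∩ tr k t e).card ≤ 1 :=
        card_le_one_of_subset_singleton (blk_inter_tr htm.2)
      have h7 : (blk k p ∩ tr k t' e').card ≤ 1 :=
        card_le_one_of_subset_singleton (blk_inter_tr htm'.2)
      rw [h4] at h1
      simp only [Finset.card_empty] at h1
      omega


lemma one_block (hk : 4 ≤ k) (hν : 1 ≤ ν) (hG : GoodG ν G) {p : ℕ} (hp : p < ν)
    {A A' : Finset ℕ} (hA : Star k ν n G A) (hA' : Star k ν n G A')
    (hne : A ≠ A')
    (hemp : ∀ x, x ∈ blk k p → x ∈ A → x ∈ A' → False) :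
    2 * k + 1 ≤ (blk k p ∪ A ∪ A').card := by
  have hcB : (blk k p).card = k := blk_card
  have hcA : A.card = k := star_card hk hν hG hA
  have hcA' : A'.card = k := star_card hk hν hG hA'
  have h1 : (blk k p ∪ A ∪ A').card + ((blk k p ∪ A) ∩ A').card = (blk k p ∪ A).card + A'.card :=
    Finset.card_union_add_card_inter _ _
  have h2 : (blk k p ∪ A).card + (blk k p ∩ A).card = (blk k p).card + A.card :=
    Finset.card_union_add_card_inter _ _
  have h3 : ((blk k p ∪ A) ∩ A').card ≤ (blk k p ∩ A').card + (A ∩ A').card := by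
    rw [Finset.union_inter_distrib_right]
    exact Finset.card_union_le _ _
  have hkey := key_bound hk hν hG hp hA hA' hne hemp
  omega

lemma two_blocks (hk : 4 ≤ k) (hν : 1 ≤ ν) (hG : GoodG ν G) {p q : ℕ}
    (hp : p < ν) (hq : q < ν) (hpq : p ≠ q) {Z : Finset ℕ}
    (hZ : Star k ν n G Z ∨ ∃ r < ν, Z = blk k r ∧ r ≠ p ∧ r ≠ q) :
    2 * k + 1 ≤ (blk k p ∪ blk k q ∪ Z).card := by
  have hd : Disjoint (blk k p) (blk k q) := blk_disjoint hpq
  have hc2 : (blk k p ∪ blk k q).card = 2 * k := by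
    rw [Finset.card_union_of_disjoint hd, blk_card, blk_card]; omega
  rcases hZ with hZ | ⟨r, hr, rfl, hrp, hrq⟩
  · have h0 : (0 : ℕ) ∈ Z := star_zero_mem hZ
    have hsub : insert 0 (blk k p ∪ blk k q) ⊆ blk k p ∪ blk k q ∪ Z := by
      intro x hx
      rw [Finset.mem_insert] at hx
      rw [Finset.mem_union]
      rcases hx with rfl | hx
      · exact Or.inr h0
      · exact Or.inl hx
    have hcard : (insert 0 (blk k p ∪ blk k q)).card = 2 * k + 1 := by
      rw [Finset.card_insert_of_notMem, hc2]
      rw [Finset.mem_union]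
      rintro (h | h) <;> exact zero_notMem_blk h
    calc 2 * k + 1 = (insert 0 (blk k p ∪ blk k q)).card := hcard.symm
      _ ≤ _ := Finset.card_le_card hsub
  · have hd2 : Disjoint (blk k p ∪ blk k q) (blk k r) := by
      rw [Finset.disjoint_union_left]
      exact ⟨blk_disjoint (Ne.symm hrp), blk_disjoint (Ne.symm hrq)⟩
    rw [Finset.card_union_of_disjoint hd2, hc2, blk_card]
    omega

lemma fam_cluster_free (hk : 4 ≤ k) (hν : 1 ≤ ν) (hG : GoodG ν G) :
    ¬ HasCluster 3 k (Fam k ν n G) := by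
  rintro ⟨A, hinj, hmem, hcard, hint⟩
  have hunion : Finset.univ.sup A = A 0 ∪ A 1 ∪ A 2 := by
    have : (Finset.univ : Finset (Fin 3)) = {0, 1, 2} := by decide
    rw [this, Finset.sup_insert, Finset.sup_insert, Finset.sup_singleton]
    change A 0 ⊔ (A 1 ⊔ A 2) = _
    rw [← sup_assoc]
    rfl
  rw [hunion] at hcard
  have hint' : ∀ x : ℕ, ¬(x ∈ A 0 ∧ x ∈ A 1 ∧ x ∈ A 2) := by
    intro x hx
    have : x ∈ (⋂ i, (A i : Set ℕ)) := by
      rw [Set.mem_iInter]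
      intro i
      fin_cases i <;> simp only [Finset.coe_sort_coe, Finset.mem_coe] <;> tauto
    rw [hint] at this
    exact this
  have hcl : ∀ i, Star k ν n G (A i) ∨ ∃ p < ν, A i = blk k p :=
    fun i => classify (hmem i)
  -- not all starred
  by_cases hall : ∀ i, Star k ν n G (A i)
  · exact hint' 0 ⟨star_zero_mem (hall 0), star_zero_mem (hall 1),
      star_zero_mem (hall 2)⟩
  push_neg at hall
  obtain ⟨i0, hi0⟩ := hall
  obtain ⟨p, hp, hApb⟩ := (hcl i0).resolve_left hi0
  -- count blocks among others
  have main : ∀ i1 i2 : Fin 3, i0 ≠ i1 → i0 ≠ i2 → i1 ≠ i2 →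
      A i0 ∪ A i1 ∪ A i2 = A 0 ∪ A 1 ∪ A 2 →
      (∀ x : ℕ, ¬(x ∈ A i0 ∧ x ∈ A i1 ∧ x ∈ A i2)) → False := by
    intro i1 i2 h01 h02 h12 hueq hieq
    by_cases hb1 : Star k ν n G (A i1)
    · by_cases hb2 : Star k ν n G (A i2)
      · -- one block, two starred
        have hne12 : A i1 ≠ A i2 := fun h => h12 (hinj h)
        have hemp : ∀ x, x ∈ blk k p → x ∈ A i1 → x ∈ A i2 → False := by
          intro x hx h1 h2
          exact hieq x ⟨hApb ▸ hx, h1, h2⟩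
        have := one_block hk hν hG hp hb1 hb2 hne12 hemp
        rw [← hApb] at this
        rw [hueq] at this
        omega
      · -- A i2 is a block too
        obtain ⟨q, hq, hA2b⟩ := (hcl i2).resolve_left hb2
        have hpq : p ≠ q := by
          rintro rfl
          exact h02 (hinj (hApb.trans hA2b.symm))
        have := two_blocks (n := n) hk hν hG hp hq hpq (Or.inl hb1)
        have heq2 : blk k p ∪ blk k q ∪ A i1 = A i0 ∪ A i1 ∪ A i2 := by
          rw [← hApb, ← hA2b]
          ext x
          simp only [Finset.mem_union]
          tauto
        rw [heq2, hueq] at this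
        omega
    · -- A i1 is a block
      obtain ⟨q, hq, hA1b⟩ := (hcl i1).resolve_left hb1
      have hpq : p ≠ q := by
        rintro rfl
        exact h01 (hinj (hApb.trans hA1b.symm))
      have hZ : Star k ν n G (A i2) ∨ ∃ r < ν, A i2 = blk k r ∧ r ≠ p ∧ r ≠ q := by
        rcases hcl i2 with h | ⟨r, hr, hA2b⟩
        · exact Or.inl h
        · refine Or.inr ⟨r, hr, hA2b, ?_, ?_⟩
          · rintro rfl
            exact h02 (hinj (hApb.trans hA2b.symm))
          · rintro rfl
            exact h12 (hinj (hA1b.trans hA2b.symm))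
      have := two_blocks hk hν hG hp hq hpq hZ
      have heq2 : blk k p ∪ blk k q ∪ A i2 = A i0 ∪ A i1 ∪ A i2 := by
        rw [← hApb, ← hA1b]
      rw [heq2, hueq] at this
      omega
  -- pick the permutation
  fin_cases i0
  · exact main 1 2 (by decide) (by decide) (by decide) rfl (fun x hx => hint' x ⟨hx.1, hx.2.1, hx.2.2⟩)
  · refine main 0 2 (by decide) (by decide) (by decide) ?_ ?_
    · ext x; simp only [Finset.mem_union]; tauto
    · exact fun x hx => hint' x ⟨hx.2.1, hx.1, hx.2.2⟩
  · refine main 0 1 (by decide) (by decide) (by decide) ?_ ?_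
    · ext x; simp only [Finset.mem_union]; tauto
    · exact fun x hx => hint' x ⟨hx.2.1, hx.2.2, hx.1⟩


lemma blk_injOn : ∀ (p : ℕ), 1 ≤ k → ∀ (q : ℕ), blk k p = blk k q → p = q := by
  intro p hk q h
  have : w k p 0 ∈ blk k q := h ▸ (w_mem_blk_iff (by omega)).mpr rfl
  exact (w_mem_blk_iff (by omega)).mp this

lemma Fd_card (hk : 1 ≤ k) : (Fd k ν).card = ν := by
  rw [Fd, Finset.card_image_of_injOn, Finset.card_range]
  intro p _ q _ h
  exact blk_injOn p hk q h

lemma zero_mem_of_mem_star_part (hX : X ∈ Fa k ν n ∪ Fb k ν n ∪ Fc k ν n G) :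
    (0 : ℕ) ∈ X := by
  rw [Finset.mem_union, Finset.mem_union] at hX
  rcases hX with (h | h) | h
  · rw [Fa, Finset.mem_image] at h; obtain ⟨S, _, rfl⟩ := h; exact zero_mem_mk
  · rw [Fb, Finset.mem_image] at h; obtain ⟨q, _, rfl⟩ := h; exact zero_mem_mk
  · rw [Fc, Finset.mem_image] at h; obtain ⟨q, _, rfl⟩ := h; exact zero_mem_mk

lemma fam_matching (hk : 4 ≤ k) (hν : 1 ≤ ν) (hG : GoodG ν G)
    (hn : k * ν + k ≤ n) : matchingNumber (Fam k ν n G) = ν + 1 := by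
  classical
  rw [matchingNumber]
  apply le_antisymm
  · apply Finset.sup_le
    intro M hM
    rw [Finset.mem_filter, Finset.mem_powerset] at hM
    obtain ⟨hMF, hMd⟩ := hM
    have hsplit := Finset.card_filter_add_card_filter_not
      (s := M) (p := fun X => (0 : ℕ) ∈ X)
    have h1 : (M.filter (fun X => (0 : ℕ) ∈ X)).card ≤ 1 := by
      rw [Finset.card_le_one]
      intro a ha b hb
      rw [Finset.mem_filter] at ha hb
      by_contra hab
      have := hMd ha.1 hb.1 hab
      simp only [Function.onFun, id] at this
      exact Finset.disjoint_left.mp this ha.2 hb.2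
    have h2 : (M.filter (fun X => (0 : ℕ) ∉ X)).card ≤ ν := by
      have hsub : M.filter (fun X => (0 : ℕ) ∉ X) ⊆ Fd k ν := by
        intro X hX
        rw [Finset.mem_filter] at hX
        rcases classify (hMF hX.1) with hst | ⟨p, hp, rfl⟩
        · exact absurd (star_zero_mem hst) hX.2
        · rw [Fd]
          exact Finset.mem_image_of_mem _ (Finset.mem_range.mpr hp)
      calc _ ≤ (Fd k ν).card := Finset.card_le_card hsub
        _ = ν := Fd_card (by omega)
    omega
  · -- lower bound: exhibit a matching of size ν + 1
    set S₀ : Finset ℕ := Finset.Ico (k * ν + 1) (k * ν + k) with hS₀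
    have hS₀R : S₀ ⊆ Rg k ν n := by
      intro x hx
      rw [hS₀, Finset.mem_Ico] at hx
      rw [Rg, Finset.mem_Ico]
      omega
    have hS₀c : S₀.card = k - 1 := by rw [hS₀, Nat.card_Ico]; omega
    have hstar : Star k ν n G (mk ∅ S₀) :=
      Or.inl ⟨S₀, Finset.mem_powersetCard.mpr ⟨hS₀R, hS₀c⟩, rfl⟩
    set M₀ : Finset (Finset ℕ) := insert (mk ∅ S₀) (Fd k ν) with hM₀
    have hMF : M₀ ⊆ Fam k ν n G := by
      intro X hX
      rw [hM₀, Finset.mem_insert] at hX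
      rcases hX with rfl | hX
      · exact mem_Fam_of_star hstar
      · rw [Fd, Finset.mem_image] at hX
        obtain ⟨p, hp, rfl⟩ := hX
        exact blk_mem_Fam (Finset.mem_range.mp hp)
    have hdisj_mk_blk : ∀ p, p < ν → Disjoint (mk ∅ S₀) (blk k p) := by
      intro p hp
      rw [Finset.disjoint_left]
      intro x hx hxb
      rw [mk, Finset.mem_insert, Finset.empty_union] at hx
      rcases hx with rfl | hx
      · exact zero_notMem_blk hxb
      · exact Finset.disjoint_right.mp reg_disj_Rg (hS₀R hx) (blk_subset_reg hp hxb)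
    have hpd : (↑M₀ : Set (Finset ℕ)).PairwiseDisjoint id := by
      intro a ha b hb hab
      simp only [Finset.coe_insert, Set.mem_insert_iff, Finset.mem_coe, hM₀] at ha hb
      simp only [Function.onFun, id]
      have hblk : ∀ c, c ∈ Fd k ν → ∃ p < ν, c = blk k p := by
        intro c hc
        rw [Fd, Finset.mem_image] at hc
        obtain ⟨p, hp, rfl⟩ := hc
        exact ⟨p, Finset.mem_range.mp hp, rfl⟩
      rcases ha with rfl | ha
      · rcases hb with rfl | hb
        · exact absurd rfl hab
        · obtain ⟨p, hp, rfl⟩ := hblk b hb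
          exact hdisj_mk_blk p hp
      · rcases hb with rfl | hb
        · obtain ⟨p, hp, rfl⟩ := hblk a ha
          exact (hdisj_mk_blk p hp).symm
        · obtain ⟨p, hp, rfl⟩ := hblk a ha
          obtain ⟨q, hq, rfl⟩ := hblk b hb
          exact blk_disjoint (fun h => hab (by rw [h]))
    have hM₀c : M₀.card = ν + 1 := by
      rw [hM₀, Finset.card_insert_of_notMem, Fd_card (by omega)]
      intro h
      rw [Fd, Finset.mem_image] at h
      obtain ⟨p, _, hp⟩ := h
      exact zero_notMem_blk (hp ▸ zero_mem_mk)
    calc ν + 1 = M₀.card := hM₀c.symm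
      _ ≤ _ := Finset.le_sup (Finset.mem_filter.mpr
          ⟨Finset.mem_powerset.mpr hMF, hpd⟩)


lemma Rg_card : (Rg k ν n).card = n - (k * ν + 1) := by rw [Rg, Nat.card_Ico]

lemma Fa_card (hk : 4 ≤ k) : (Fa k ν n).card = (n - (k * ν + 1)).choose (k - 1) := by
  rw [Fa, Finset.card_image_of_injOn, Finset.card_powersetCard, Rg_card]
  intro S hS S' hS' h
  rw [Finset.mem_coe, Finset.mem_powersetCard] at hS hS'
  have e1 : mk ∅ S ∩ Rg k ν n = S := mk_inter_Rg (by simp) hS.1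
  have e2 : mk ∅ S' ∩ Rg k ν n = S' := mk_inter_Rg (by simp) hS'.1
  rw [← e1, ← e2, h]

lemma Fb_card (hk : 4 ≤ k) :
    (Fb k ν n).card = (ν / 2) * (n - (k * ν + 1)).choose (k - 3) := by
  rw [Fb, Finset.card_image_of_injOn, Finset.card_product, Finset.card_range,
    Finset.card_powersetCard, Rg_card]
  rintro ⟨j, S⟩ hq ⟨j', S'⟩ hq' h
  rw [Finset.mem_coe, Finset.mem_product, Finset.mem_range,
    Finset.mem_powersetCard] at hq hq'
  have hpr : pr k j ⊆ reg k ν := pr_subset_reg (by omega) (by omega)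
  have hpr' : pr k j' ⊆ reg k ν := pr_subset_reg (by omega) (by omega)
  simp only at h
  have eS : S = S' := by
    have e1 : mk (pr k j) S ∩ Rg k ν n = S := mk_inter_Rg hpr hq.2.1
    have e2 : mk (pr k j') S' ∩ Rg k ν n = S' := mk_inter_Rg hpr' hq'.2.1
    rw [← e1, ← e2, h]
  have eP : pr k j = pr k j' := by
    have e1 : mk (pr k j) S ∩ reg k ν = pr k j := mk_inter_reg hpr hq.2.1
    have e2 : mk (pr k j') S' ∩ reg k ν = pr k j' := mk_inter_reg hpr' hq'.2.1
    rw [← e1, ← e2, h]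
  have ej : j = j' := by
    have : w k (2 * j) 0 ∈ pr k j' := by
      rw [← eP, pr]; exact Finset.mem_insert_self _ _
    rw [pr, Finset.mem_insert, Finset.mem_singleton] at this
    rcases this with h' | h' <;>
      (have := w_inj (show 0 < k by omega) (show 0 < k by omega) h'; omega)
  rw [ej, eS]

lemma Fc_card (hk : 4 ≤ k) (hG : GoodG ν G) :
    (Fc k ν n G).card = (k - 1) * G.card * (n - (k * ν + 1)).choose (k - 4) := by
  rw [Fc, Finset.card_image_of_injOn, Finset.card_product, Finset.card_product,
    Nat.card_Ico, Finset.card_powersetCard, Rg_card]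
  rintro ⟨⟨t, e⟩, S⟩ hq ⟨⟨t', e'⟩, S'⟩ hq' h
  rw [Finset.mem_coe, Finset.mem_product, Finset.mem_product, Finset.mem_Ico] at hq hq'
  obtain ⟨⟨⟨ht1, ht2⟩, he⟩, hS⟩ := hq
  obtain ⟨⟨⟨ht1', ht2'⟩, he'⟩, hS'⟩ := hq'
  rw [Finset.mem_powersetCard] at hS hS'
  have htr : tr k t e ⊆ reg k ν := tr_subset_reg (hG.1 e he).2 ht2
  have htr' : tr k t' e' ⊆ reg k ν := tr_subset_reg (hG.1 e' he').2 ht2'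
  simp only at h
  have eS : S = S' := by
    have e1 : mk (tr k t e) S ∩ Rg k ν n = S := mk_inter_Rg htr hS.1
    have e2 : mk (tr k t' e') S' ∩ Rg k ν n = S' := mk_inter_Rg htr' hS'.1
    rw [← e1, ← e2, h]
  have eP : tr k t e = tr k t' e' := by
    have e1 : mk (tr k t e) S ∩ reg k ν = tr k t e := mk_inter_reg htr hS.1
    have e2 : mk (tr k t' e') S' ∩ reg k ν = tr k t' e' := mk_inter_reg htr' hS'.1
    rw [← e1, ← e2, h]
  have hene : e.Nonempty := by
    rw [← Finset.card_pos, (hG.1 e he).1]; omega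
  obtain ⟨x, hx⟩ := hene
  have hxmem : w k x t ∈ tr k t' e' := by
    rw [← eP, tr]; exact Finset.mem_image_of_mem _ hx
  rw [tr, Finset.mem_image] at hxmem
  obtain ⟨y, hy, hxy⟩ := hxmem
  have htt : t = t' := ((w_inj ht2' ht2 hxy).2).symm
  subst htt
  have ee : e = e' := by
    ext z
    constructor
    · intro hz
      have : w k z t ∈ tr k t e' := by
        rw [← eP, tr]; exact Finset.mem_image_of_mem _ hz
      rw [tr, Finset.mem_image] at this
      obtain ⟨u, hu, huz⟩ := this
      rwa [(w_inj ht2 ht2 huz).1] at hu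
    · intro hz
      have : w k z t ∈ tr k t e := by
        rw [eP, tr]; exact Finset.mem_image_of_mem _ hz
      rw [tr, Finset.mem_image] at this
      obtain ⟨u, hu, huz⟩ := this
      rwa [(w_inj ht2 ht2 huz).1] at hu
  rw [ee, eS]

lemma inter_reg_invariants (hk : 4 ≤ k) (hG : GoodG ν G) :
    (∀ X ∈ Fa k ν n, X ∩ reg k ν = ∅) ∧
    (∀ X ∈ Fb k ν n, (X ∩ reg k ν).card = 2) ∧
    (∀ X ∈ Fc k ν n G, (X ∩ reg k ν).card = 3) := by
  refine ⟨?_, ?_, ?_⟩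
  · intro X hX
    rw [Fa, Finset.mem_image] at hX
    obtain ⟨S, hS, rfl⟩ := hX
    rw [Finset.mem_powersetCard] at hS
    exact mk_inter_reg (by simp) hS.1
  · intro X hX
    rw [Fb, Finset.mem_image] at hX
    obtain ⟨⟨j, S⟩, hq, rfl⟩ := hX
    rw [Finset.mem_product, Finset.mem_range, Finset.mem_powersetCard] at hq
    rw [mk_inter_reg (pr_subset_reg (by omega) (by omega)) hq.2.1, pr_card (by omega)]
  · intro X hX
    rw [Fc, Finset.mem_image] at hX
    obtain ⟨⟨⟨t, e⟩, S⟩, hq, rfl⟩ := hX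
    rw [Finset.mem_product, Finset.mem_product, Finset.mem_Ico,
      Finset.mem_powersetCard] at hq
    rw [mk_inter_reg (tr_subset_reg (hG.1 e hq.1.2).2 hq.1.1.2) hq.2.1,
      tr_card hq.1.1.2, (hG.1 e hq.1.2).1]

lemma fam_card (hk : 4 ≤ k) (hν : 1 ≤ ν) (hG : GoodG ν G) :
    (Fam k ν n G).card = (n - (k * ν + 1)).choose (k - 1) +
      (ν / 2) * (n - (k * ν + 1)).choose (k - 3) +
      (k - 1) * G.card * (n - (k * ν + 1)).choose (k - 4) + ν := by
  obtain ⟨ia, ib, ic⟩ := inter_reg_invariants (n := n) hk hG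
  have dab : Disjoint (Fa k ν n) (Fb k ν n) := by
    rw [Finset.disjoint_left]
    intro X h1 h2
    have := ia X h1
    have := ib X h2
    rw [‹X ∩ reg k ν = ∅›] at this
    simp at this
  have dac : Disjoint (Fa k ν n) (Fc k ν n G) := by
    rw [Finset.disjoint_left]
    intro X h1 h2
    have := ia X h1
    have := ic X h2
    rw [‹X ∩ reg k ν = ∅›] at this
    simp at this
  have dbc : Disjoint (Fb k ν n) (Fc k ν n G) := by
    rw [Finset.disjoint_left]
    intro X h1 h2
    have h3 := ib X h1
    have h4 := ic X h2
    omega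
  have dd : Disjoint (Fa k ν n ∪ Fb k ν n ∪ Fc k ν n G) (Fd k ν) := by
    rw [Finset.disjoint_left]
    intro X h1 h2
    rw [Fd, Finset.mem_image] at h2
    obtain ⟨p, _, rfl⟩ := h2
    exact zero_notMem_blk (zero_mem_of_mem_star_part h1)
  rw [Fam, Finset.card_union_of_disjoint dd,
    Finset.card_union_of_disjoint (Finset.disjoint_union_left.mpr ⟨dac, dbc⟩),
    Finset.card_union_of_disjoint dab, Fa_card hk, Fb_card hk, Fc_card hk hG,
    Fd_card (by omega)]


lemma blk_subset_range {p : ℕ} (hp : p < ν) (hn : k * ν + 1 ≤ n) :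
    blk k p ⊆ Finset.range n := by
  intro x hx
  rw [mem_blk] at hx
  rw [Finset.mem_range]
  have h1 := mul_succ_le (k := k) hp
  have h2 : ν * k = k * ν := Nat.mul_comm _ _
  omega

lemma exists_goodG (ν : ℕ) : ∃ G : Finset (Finset ℕ), GoodG ν G ∧ G.card = exP2 3 ν := by
  classical
  set Fset := (((Finset.powersetCard 3 (Finset.range ν)).powerset).filter
    (fun G : Finset (Finset ℕ) => ∀ S ⊆ Finset.range ν, S.card = 3 - 1 →
      (G.filter fun E => S ⊆ E).card ≤ 1)) with hFset
  have hne : Fset.Nonempty := by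
    refine ⟨∅, ?_⟩
    rw [hFset, Finset.mem_filter, Finset.mem_powerset]
    exact ⟨Finset.empty_subset _, fun S _ _ => by simp⟩
  obtain ⟨Gw, hGw, hsup⟩ := Finset.exists_mem_eq_sup Fset hne Finset.card
  have hex : exP2 3 ν = Gw.card := by rw [exP2]; exact hsup
  rw [hFset, Finset.mem_filter, Finset.mem_powerset] at hGw
  refine ⟨Gw, ⟨?_, ?_⟩, hex.symm⟩
  · intro e he
    have h := hGw.1 he
    rw [Finset.mem_powersetCard] at h
    exact ⟨h.2, h.1⟩
  · intro e he e' he' hee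
    by_contra hcon
    push_neg at hcon
    obtain ⟨x, hx, y, hy, hxy⟩ := Finset.one_lt_card.mp hcon
    rw [Finset.mem_inter] at hx hy
    have heR := hGw.1 he
    rw [Finset.mem_powersetCard] at heR
    have hsub : ({x, y} : Finset ℕ) ⊆ Finset.range ν := by
      intro z hz
      rw [Finset.mem_insert, Finset.mem_singleton] at hz
      rcases hz with rfl | rfl
      · exact heR.1 hx.1
      · exact heR.1 hy.1
    have hcard2 : ({x, y} : Finset ℕ).card = 3 - 1 := by
      rw [Finset.card_insert_of_notMem (by simpa using hxy), Finset.card_singleton]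
    have hle := hGw.2 {x, y} hsub hcard2
    have hxe : ({x, y} : Finset ℕ) ⊆ e :=
      Finset.insert_subset hx.1 (Finset.singleton_subset_iff.mpr hy.1)
    have hxe' : ({x, y} : Finset ℕ) ⊆ e' :=
      Finset.insert_subset hx.2 (Finset.singleton_subset_iff.mpr hy.2)
    have h2 : 1 < (Gw.filter (fun E => ({x, y} : Finset ℕ) ⊆ E)).card :=
      Finset.one_lt_card.mpr ⟨e, Finset.mem_filter.mpr ⟨he, hxe⟩,
        e', Finset.mem_filter.mpr ⟨he', hxe'⟩, hee⟩
    omega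

end S2

theorem stmt2 (k ν : ℕ) (hk : 4 ≤ k) (hν : 1 ≤ ν) :
    ∃ N : ℕ, ∀ n ≥ N, ∃ F : Finset (Finset ℕ),
      F ⊆ Finset.powersetCard k (Finset.range n) ∧
      ¬ HasCluster 3 k F ∧
      matchingNumber F = ν + 1 ∧
      F.card = Nat.choose (n - k * ν - 1) (k - 1) +
        (ν / 2) * Nat.choose (n - k * ν - 1) (k - 3) +
        (k - 1) * exP2 3 ν * Nat.choose (n - k * ν - 1) (k - 4) + ν := by
  obtain ⟨G, hG, hGcard⟩ := S2.exists_goodG ν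
  refine ⟨k * ν + k + 1, fun n hn => ?_⟩
  have hn1 : k * ν + 1 ≤ n := by omega
  refine ⟨S2.Fam k ν n G, ?_, S2.fam_cluster_free hk hν hG,
    S2.fam_matching hk hν hG (by omega), ?_⟩
  · intro X hX
    rw [Finset.mem_powersetCard]
    rcases S2.classify hX with hst | ⟨p, hp, rfl⟩
    · exact ⟨S2.star_subset_range hk hν hG hn1 hst, S2.star_card hk hν hG hst⟩
    · exact ⟨S2.blk_subset_range hp hn1, S2.blk_card⟩
  · rw [S2.fam_card hk hν hG, hGcard]
    have heq : n - (k * ν + 1) = n - k * ν - 1 := by omega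
    rw [heq]
end

section
/- Let k ≥ 4 be a fixed integer, and let ex(m, P_2^{k-2}) denote the maximum number of edges of a (k-2)-uniform hypergraph on m vertices in which every (k-3)-element vertex set is contained in at most one edge. For all sufficiently large n there exists a family F ⊆ binom([n],k) that is 4-cluster-free, has matching number exactly 2 (in particular is not intersecting), and satisfies |F| = C(n-k-1, k-1) + ex(n-k-1, P_2^{k-2}) + 1. -/
open Finset

/-- A family is intersecting if every two members have nonempty intersection. -/
def Intersecting' (F : Finset (Finset ℕ)) : Prop :=
  ∀ A ∈ F, ∀ B ∈ F, (A ∩ B).Nonempty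

theorem stmt5 (k : ℕ) (hk : 4 ≤ k) :
    ∃ N : ℕ, ∀ n ≥ N, ∃ F : Finset (Finset ℕ),
      F ⊆ Finset.powersetCard k (Finset.range n) ∧
      ¬ HasCluster 4 k F ∧
      matchingNumber F = 2 ∧
      ¬ Intersecting' F ∧
      F.card = Nat.choose (n - k - 1) (k - 1) + exP2 (k - 2) (n - k - 1) + 1 := by
  classical
  refine ⟨3 * k, fun n hn => ?_⟩
  set m := n - k - 1 with hm
  have hmn : m + (k + 1) = n := by omega
  set f : ℕ → ℕ := fun x => x + (k + 1) with hf
  have hfinj : Function.Injective f := fun a b h => by simpa [hf] using h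
  set V : Finset ℕ := (range m).image f with hV
  have hVcard : V.card = m := by rw [hV, card_image_of_injective _ hfinj, card_range]
  have hVmem : ∀ y ∈ V, k + 1 ≤ y ∧ y < n := by
    intro y hy
    rw [hV, mem_image] at hy
    obtain ⟨x, hx, rfl⟩ := hy
    rw [mem_range] at hx
    simp only [hf]
    omega
  set B : Finset ℕ := Finset.Icc 1 k with hB
  have hBcard : B.card = k := by simp [hB]
  have hBmem : ∀ x, x ∈ B ↔ 1 ≤ x ∧ x ≤ k := by simp [hB]
  have hVB : ∀ y ∈ V, y ∉ B := by
    intro y hy hyB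
    have h1 := hVmem y hy; rw [hBmem] at hyB; omega
  have h0B : (0:ℕ) ∉ B := by rw [hBmem]; omega
  have h1B : (1:ℕ) ∈ B := by rw [hBmem]; omega
  have h0V : (0:ℕ) ∉ V := fun h => by have := hVmem 0 h; omega
  have h1V : (1:ℕ) ∉ V := fun h => by have := hVmem 1 h; omega
  have hBsub : B ⊆ range n := by
    intro x hx; rw [hBmem] at hx; rw [mem_range]; omega
  -- extremal P2-free graph
  obtain ⟨G, hGP, hGsup⟩ := Finset.exists_mem_eq_sup
    (((Finset.powersetCard (k-2) (Finset.range m)).powerset).filter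
      (fun G : Finset (Finset ℕ) => ∀ S ⊆ Finset.range m, S.card = (k-2) - 1 →
        (G.filter fun E => S ⊆ E).card ≤ 1))
    ⟨∅, by simp⟩ Finset.card
  rw [mem_filter, mem_powerset] at hGP
  have hGcard : G.card = exP2 (k-2) m := by rw [exP2]; exact hGsup.symm
  have hGedge : ∀ E ∈ G, E ⊆ range m ∧ E.card = k - 2 := by
    intro E hE
    have := hGP.1 hE
    rwa [mem_powersetCard] at this
  have hGP2 : ∀ S ⊆ range m, S.card = k - 3 → (G.filter fun E => S ⊆ E).card ≤ 1 := by
    intro S hS hcard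
    exact hGP.2 S hS (by omega)
  -- the families
  set lay : Finset ℕ → Finset ℕ := fun E => insert 0 (insert 1 (E.image f)) with hlay
  set Pure : Finset (Finset ℕ) := (powersetCard (k-1) V).image (insert 0) with hPure
  set Layer : Finset (Finset ℕ) := G.image lay with hLayer
  set F : Finset (Finset ℕ) := insert B (Pure ∪ Layer) with hF
  -- basic facts about layer sets
  have hlayf : ∀ E ∈ G, ∀ y ∈ E.image f, k + 1 ≤ y ∧ y < n := by
    intro E hE y hy
    refine hVmem y ?_
    rw [mem_image] at hy
    obtain ⟨x, hx, rfl⟩ := hy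
    rw [hV]
    exact mem_image_of_mem f ((hGedge E hE).1 hx)
  have h1layE : ∀ E ∈ G, (1:ℕ) ∉ E.image f := by
    intro E hE h
    have := hlayf E hE 1 h; omega
  have h0layE : ∀ E ∈ G, (0:ℕ) ∉ insert 1 (E.image f) := by
    intro E hE h
    rcases mem_insert.mp h with h | h
    · omega
    · have := hlayf E hE 0 h; omega
  have hlaycard : ∀ E ∈ G, (lay E).card = k := by
    intro E hE
    rw [hlay]
    rw [card_insert_of_notMem (h0layE E hE), card_insert_of_notMem (h1layE E hE),
      card_image_of_injective _ hfinj, (hGedge E hE).2]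
    omega
  have hpure1 : ∀ S ⊆ V, (1:ℕ) ∉ insert 0 S := by
    intro S hS h
    rcases mem_insert.mp h with h | h
    · omega
    · exact h1V (hS h)
  have hpurecard : ∀ S, S ⊆ V → S.card = k - 1 → (insert 0 S).card = k := by
    intro S hS hc
    rw [card_insert_of_notMem (fun h => h0V (hS h)), hc]
    omega
  have hmemF : ∀ A ∈ F, A = B ∨ (∃ S, S ⊆ V ∧ S.card = k-1 ∧ A = insert 0 S) ∨
      (∃ E ∈ G, A = lay E) := by
    intro A hA
    rw [hF, mem_insert, mem_union] at hA
    rcases hA with h | h | h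
    · exact Or.inl h
    · rw [hPure, mem_image] at h
      obtain ⟨S, hS, rfl⟩ := h
      rw [mem_powersetCard] at hS
      exact Or.inr (Or.inl ⟨S, hS.1, hS.2, rfl⟩)
    · rw [hLayer, mem_image] at h
      obtain ⟨E, hE, rfl⟩ := h
      exact Or.inr (Or.inr ⟨E, hE, rfl⟩)
  have h0memF : ∀ A ∈ F, A ≠ B → (0:ℕ) ∈ A := by
    intro A hA hAB
    rcases hmemF A hA with h | ⟨S, _, _, rfl⟩ | ⟨E, hE, rfl⟩
    · exact absurd h hAB
    · exact mem_insert_self 0 S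
    · rw [hlay]; exact mem_insert_self _ _
  -- a fixed pure set
  obtain ⟨S0, hS0V, hS0card⟩ := Finset.exists_subset_card_eq (s := V) (n := k-1) (by rw [hVcard]; omega)
  have hP0F : insert 0 S0 ∈ F := by
    rw [hF, mem_insert, mem_union, hPure, mem_image]
    exact Or.inr (Or.inl ⟨S0, mem_powersetCard.mpr ⟨hS0V, hS0card⟩, rfl⟩)
  have hBF : B ∈ F := mem_insert_self _ _
  have hBP0disj : Disjoint B (insert 0 S0) := by
    rw [disjoint_left]
    intro a haB ha
    rcases mem_insert.mp ha with rfl | ha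
    · exact h0B haB
    · exact hVB a (hS0V ha) haB
  have hBneP0 : B ≠ insert 0 S0 := by
    intro h
    exact h0B (h ▸ mem_insert_self 0 S0)
  refine ⟨F, ?_, ?_, ?_, ?_, ?_⟩
  · -- F ⊆ powersetCard k (range n)
    intro A hA
    rw [mem_powersetCard]
    rcases hmemF A hA with rfl | ⟨S, hSV, hSc, rfl⟩ | ⟨E, hE, rfl⟩
    · exact ⟨hBsub, hBcard⟩
    · constructor
      · intro x hx
        rcases mem_insert.mp hx with rfl | hx
        · rw [mem_range]; omega
        · have := hVmem x (hSV hx); rw [mem_range]; omega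
      · exact hpurecard S hSV hSc
    · constructor
      · intro x hx
        rw [hlay] at hx
        rcases mem_insert.mp hx with rfl | hx
        · rw [mem_range]; omega
        rcases mem_insert.mp hx with rfl | hx
        · rw [mem_range]; omega
        · have := hlayf E hE x hx; rw [mem_range]; omega
      · exact hlaycard E hE
  · -- cluster-free
    rintro ⟨A, hAinj, hAF, hAcard, hAint⟩
    -- some A i = B
    have hB0 : ∃ i, A i = B := by
      by_contra h
      push_neg at h
      have h0 : (0:ℕ) ∈ ⋂ i, (A i : Set ℕ) :=
        Set.mem_iInter.mpr fun i => h0memF (A i) (hAF i) (h i)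
      rw [hAint] at h0
      exact h0
    obtain ⟨i0, hi0⟩ := hB0
    -- some A i misses 1
    have h1ex : ∃ i, (1:ℕ) ∉ A i := by
      by_contra h
      push_neg at h
      have h1 : (1:ℕ) ∈ ⋂ i, (A i : Set ℕ) := Set.mem_iInter.mpr fun i => h i
      rw [hAint] at h1
      exact h1
    obtain ⟨i1, hi1⟩ := h1ex
    have hi10 : i1 ≠ i0 := by
      intro h; rw [h, hi0] at hi1; exact hi1 h1B
    -- A i1 is pure
    obtain ⟨S, hSV, hScard, hAi1⟩ :
        ∃ S, S ⊆ V ∧ S.card = k-1 ∧ A i1 = insert 0 S := by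
      rcases hmemF _ (hAF i1) with h | h | ⟨E, hE, h⟩
      · exact absurd (h ▸ h1B) hi1
      · exact h
      · exfalso; apply hi1; rw [h, hlay]
        exact mem_insert_of_mem (mem_insert_self _ _)
    -- two remaining indices
    have hcompl2 : ({i0, i1}ᶜ : Finset (Fin 4)).card = 2 := by
      rw [card_compl]
      rw [card_insert_of_notMem (by simpa using (Ne.symm hi10)), card_singleton]
      simp
    obtain ⟨j1, hj1, j2, hj2, hj12⟩ := Finset.one_lt_card.mp (by omega : 1 < ({i0, i1}ᶜ : Finset (Fin 4)).card)
    rw [mem_compl, mem_insert, mem_singleton] at hj1 hj2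
    push_neg at hj1 hj2
    -- helpers
    have hsubU : ∀ i, A i ⊆ univ.sup A := fun i => Finset.le_sup (mem_univ i)
    -- two pure sets is impossible
    have hpure2 : ∀ j, j ≠ i0 → j ≠ i1 →
        ¬ (∃ S', S' ⊆ V ∧ S'.card = k-1 ∧ A j = insert 0 S') := by
      rintro j hj0 hj1' ⟨S', hS'V, hS'card, hAj⟩
      have hSS' : S ≠ S' := by
        intro h
        exact hj1' (hAinj (by rw [hAj, hAi1, h]))
      have hScup : k ≤ (S ∪ S').card := by
        by_contra hlt
        push_neg at hlt
        have hsub : S ⊆ S ∪ S' := subset_union_left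
        have := Finset.eq_of_subset_of_card_le hsub (by omega)
        have hS'S : S' ⊆ S := by
          rw [this]; exact subset_union_right
        exact hSS' (Finset.eq_of_subset_of_card_le hS'S (by omega)).symm
      have hdisjB : Disjoint B (insert 0 (S ∪ S')) := by
        rw [disjoint_left]
        intro a haB ha
        rcases mem_insert.mp ha with rfl | ha
        · exact h0B haB
        rcases mem_union.mp ha with ha | ha
        · exact hVB a (hSV ha) haB
        · exact hVB a (hS'V ha) haB
      have hWsub : B ∪ insert 0 (S ∪ S') ⊆ univ.sup A := by
        apply union_subset
        · rw [← hi0]; exact hsubU i0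
        · rw [insert_union_distrib]
          apply union_subset
          · rw [← hAi1]; exact hsubU i1
          · rw [← hAj]; exact hsubU j
      have hWcard : (B ∪ insert 0 (S ∪ S')).card = k + (insert 0 (S ∪ S')).card :=
        by rw [card_union_of_disjoint hdisjB, hBcard]
      have h0cup : (0:ℕ) ∉ S ∪ S' := by
        intro h
        rcases mem_union.mp h with h | h
        · exact h0V (hSV h)
        · exact h0V (hS'V h)
      have hc2 : (insert 0 (S ∪ S')).card = (S ∪ S').card + 1 := card_insert_of_notMem h0cup
      have hle := card_le_card hWsub
      omega
    -- classify A j1 and A j2 : neither can be B, neither can be pure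
    have hclass : ∀ j, j ≠ i0 → j ≠ i1 → ∃ E ∈ G, A j = lay E := by
      intro j hj0 hj1'
      rcases hmemF _ (hAF j) with h | h | h
      · exact absurd (hAinj (h.trans hi0.symm)) hj0
      · exact absurd h (hpure2 j hj0 hj1')
      · exact h
    obtain ⟨E1, hE1, hAj1⟩ := hclass j1 hj1.1 hj1.2
    obtain ⟨E2, hE2, hAj2⟩ := hclass j2 hj2.1 hj2.2
    have hE12 : E1 ≠ E2 := by
      intro h
      exact hj12 (hAinj (by rw [hAj1, hAj2, h]))
    -- U = B ∪ insert 0 S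
    have hdisjBS : Disjoint B (insert 0 S) := by
      rw [disjoint_left]
      intro a haB ha
      rcases mem_insert.mp ha with rfl | ha
      · exact h0B haB
      · exact hVB a (hSV ha) haB
    have hWsub : B ∪ insert 0 S ⊆ univ.sup A := by
      apply union_subset
      · rw [← hi0]; exact hsubU i0
      · rw [← hAi1]; exact hsubU i1
    have hWcard : (B ∪ insert 0 S).card = 2 * k := by
      rw [card_union_of_disjoint hdisjBS, hBcard, hpurecard S hSV hScard]
      omega
    have hUW : univ.sup A = B ∪ insert 0 S := by
      refine (Finset.eq_of_subset_of_card_le hWsub ?_).symm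
      omega
    -- shifted edges are inside S
    have himg : ∀ E, E ∈ G → A ((fun _ => j1) 0) = lay E ∨ True := fun _ _ => Or.inr trivial
    have hEsub : ∀ E ∈ G, ∀ j, A j = lay E → E.image f ⊆ S := by
      intro E hE j hAj x hx
      have hxU : x ∈ univ.sup A := by
        apply hsubU j
        rw [hAj, hlay]
        exact mem_insert_of_mem (mem_insert_of_mem hx)
      rw [hUW] at hxU
      have hxn := hlayf E hE x hx
      rcases mem_union.mp hxU with h | h
      · exfalso; rw [hBmem] at h; omega
      rcases mem_insert.mp h with rfl | h
      · omega
      · exact h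
    have hE1S : E1.image f ⊆ S := hEsub E1 hE1 j1 hAj1
    have hE2S : E2.image f ⊆ S := hEsub E2 hE2 j2 hAj2
    -- intersection of E1 E2 is large
    have hunle : ((E1.image f) ∪ (E2.image f)).card ≤ k - 1 := by
      rw [← hScard]
      exact card_le_card (union_subset hE1S hE2S)
    have hia : ((E1.image f) ∩ (E2.image f)).card + ((E1.image f) ∪ (E2.image f)).card
        = (E1.image f).card + (E2.image f).card := card_inter_add_card_union _ _
    have hc1 : (E1.image f).card = k - 2 := by
      rw [card_image_of_injective _ hfinj, (hGedge E1 hE1).2]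
    have hc2 : (E2.image f).card = k - 2 := by
      rw [card_image_of_injective _ hfinj, (hGedge E2 hE2).2]
    have hintim : (E1.image f) ∩ (E2.image f) = (E1 ∩ E2).image f :=
      (Finset.image_inter E1 E2 hfinj).symm
    have hintcard : k - 3 ≤ (E1 ∩ E2).card := by
      have := card_image_of_injective (E1 ∩ E2) hfinj
      rw [hintim, this] at hia
      omega
    obtain ⟨T, hTsub, hTcard⟩ := Finset.exists_subset_card_eq (s := E1 ∩ E2) (n := k-3) hintcard
    have hTrange : T ⊆ range m := fun x hx => (hGedge E1 hE1).1 (mem_inter.mp (hTsub hx)).1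
    have hfil := hGP2 T hTrange hTcard
    have h2le : 2 ≤ (G.filter fun E => T ⊆ E).card := by
      apply Finset.one_lt_card.mpr
      refine ⟨E1, ?_, E2, ?_, hE12⟩
      · rw [mem_filter]
        exact ⟨hE1, fun x hx => (mem_inter.mp (hTsub hx)).1⟩
      · rw [mem_filter]
        exact ⟨hE2, fun x hx => (mem_inter.mp (hTsub hx)).2⟩
    omega
  · -- matching number = 2
    apply le_antisymm
    · -- ≤ 2
      apply Finset.sup_le
      intro M hM
      rw [mem_filter, mem_powerset] at hM
      obtain ⟨hMF, hMdisj⟩ := hM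
      by_contra hlt
      push_neg at hlt
      obtain ⟨T, hTsub, hTcard⟩ := Finset.exists_subset_card_eq (s := M) (n := 3) (by omega)
      obtain ⟨a, b, c, hab, hac, hbc, rfl⟩ := Finset.card_eq_three.mp hTcard
      have haM : a ∈ M := hTsub (by simp)
      have hbM : b ∈ M := hTsub (by simp)
      have hcM : c ∈ M := hTsub (by simp)
      obtain ⟨X, Y, hXM, hYM, hXY, hXB, hYB⟩ :
          ∃ X Y, X ∈ M ∧ Y ∈ M ∧ X ≠ Y ∧ X ≠ B ∧ Y ≠ B := by
        by_cases ha : a = B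
        · refine ⟨b, c, hbM, hcM, hbc, ?_, ?_⟩
          · intro h; exact hab (ha.trans h.symm)
          · intro h; exact hac (ha.trans h.symm)
        · by_cases hb : b = B
          · refine ⟨a, c, haM, hcM, hac, ha, ?_⟩
            intro h; exact hbc (hb.trans h.symm)
          · exact ⟨a, b, haM, hbM, hab, ha, hb⟩
      have h0X : (0:ℕ) ∈ X := h0memF X (hMF hXM) hXB
      have h0Y : (0:ℕ) ∈ Y := h0memF Y (hMF hYM) hYB
      have hdisj := hMdisj (Finset.mem_coe.mpr hXM) (Finset.mem_coe.mpr hYM) hXY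
      rw [Function.onFun, id, id] at hdisj
      exact (Finset.disjoint_left.mp hdisj h0X) h0Y
    · -- ≥ 2
      have hM0F : ({B, insert 0 S0} : Finset (Finset ℕ)) ∈ F.powerset.filter
          (fun M : Finset (Finset ℕ) => (M : Set (Finset ℕ)).PairwiseDisjoint id) := by
        rw [mem_filter, mem_powerset]
        constructor
        · intro X hX
          rcases mem_insert.mp hX with rfl | hX
          · exact hBF
          · rw [mem_singleton] at hX; rw [hX]; exact hP0F
        · intro X hX Y hY hXY
          simp only [coe_insert, coe_singleton, Set.mem_insert_iff, Set.mem_singleton_iff] at hX hY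
          rw [Function.onFun, id, id]
          rcases hX with rfl | rfl <;> rcases hY with rfl | rfl
          · exact absurd rfl hXY
          · exact hBP0disj
          · exact hBP0disj.symm
          · exact absurd rfl hXY
      have hM0card : ({B, insert 0 S0} : Finset (Finset ℕ)).card = 2 := by
        rw [card_insert_of_notMem (by simpa using hBneP0), card_singleton]
      calc (2:ℕ) = ({B, insert 0 S0} : Finset (Finset ℕ)).card := hM0card.symm
        _ ≤ _ := Finset.le_sup hM0F
  · -- not intersecting
    intro hInt
    obtain ⟨x, hx⟩ := hInt B hBF (insert 0 S0) hP0F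
    rw [mem_inter] at hx
    exact (Finset.disjoint_left.mp hBP0disj hx.1) hx.2
  · -- cardinality
    have hBnotPL : B ∉ Pure ∪ Layer := by
      intro h
      rw [mem_union] at h
      rcases h with h | h
      · rw [hPure, mem_image] at h
        obtain ⟨S, hS, hSB⟩ := h
        exact h0B (hSB ▸ mem_insert_self 0 S)
      · rw [hLayer, mem_image] at h
        obtain ⟨E, hE, hEB⟩ := h
        apply h0B
        rw [← hEB, hlay]
        exact mem_insert_self _ _
    have hPLdisj : Disjoint Pure Layer := by
      rw [disjoint_left]
      intro X hXP hXL
      rw [hPure, mem_image] at hXP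
      obtain ⟨S, hS, rfl⟩ := hXP
      rw [mem_powersetCard] at hS
      rw [hLayer, mem_image] at hXL
      obtain ⟨E, hE, hEX⟩ := hXL
      apply hpure1 S hS.1
      rw [← hEX, hlay]
      exact mem_insert_of_mem (mem_insert_self _ _)
    have hPcard : Pure.card = Nat.choose m (k-1) := by
      rw [hPure]
      rw [Finset.card_image_of_injOn]
      · rw [card_powersetCard, hVcard]
      · intro S1 hS1 S2 hS2 h
        rw [mem_coe, mem_powersetCard] at hS1 hS2
        have h01 : (0:ℕ) ∉ S1 := fun hx => h0V (hS1.1 hx)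
        have h02 : (0:ℕ) ∉ S2 := fun hx => h0V (hS2.1 hx)
        rw [← Finset.erase_insert h01, ← Finset.erase_insert h02, h]
    have hLcard : Layer.card = exP2 (k-2) m := by
      rw [hLayer, ← hGcard]
      apply Finset.card_image_of_injOn
      intro E1 hE1 E2 hE2 h
      rw [mem_coe] at hE1 hE2
      rw [hlay] at h
      simp only at h
      have h1 : insert 1 (E1.image f) = insert 1 (E2.image f) := by
        have := congrArg (Finset.erase · 0) h
        simpa [Finset.erase_insert (h0layE E1 hE1), Finset.erase_insert (h0layE E2 hE2)]
          using this
      have h2 : E1.image f = E2.image f := by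
        have := congrArg (Finset.erase · 1) h1
        simpa [Finset.erase_insert (h1layE E1 hE1), Finset.erase_insert (h1layE E2 hE2)]
          using this
      exact Finset.image_injective hfinj h2
    rw [hF, card_insert_of_notMem hBnotPL, card_union_of_disjoint hPLdisj, hPcard, hLcard]
end

section
/- Let k ≥ 3 and ν ≥ 2 be fixed integers. For all sufficiently large n there exists a family F ⊆ binom([n],k) that is 4-cluster-free, has matching number exactly ν+1, and satisfies |F| = C(n-kν-1, k-1) + k·⌊ν²/4⌋·C(n-kν-1, k-3) + ν. -/
open Finset

namespace Stmt6Aux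

/-- element `s` of block `i` -/
def ee (k m i s : ℕ) : ℕ := m + 1 + i * k + s

/-- block `c` -/
def DB (k m c : ℕ) : Finset ℕ := Finset.Ico (m+1+c*k) (m+1+c*k+k)

def SFam (k m : ℕ) : Finset (Finset ℕ) :=
  (Finset.powersetCard (k-1) (Finset.range m)).image (insert m)

def BIdx (k ν m : ℕ) : Finset ((ℕ × ℕ × ℕ) × Finset ℕ) :=
  ((Finset.range (ν/2)) ×ˢ (Finset.range (ν - ν/2)) ×ˢ (Finset.range k)) ×ˢ
    Finset.powersetCard (k-3) (Finset.range m)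

def bset (k ν m : ℕ) (q : (ℕ × ℕ × ℕ) × Finset ℕ) : Finset ℕ :=
  insert m (insert (ee k m q.1.1 q.1.2.2) (insert (ee k m (ν/2 + q.1.2.1) q.1.2.2) q.2))

def BFam (k ν m : ℕ) : Finset (Finset ℕ) := (BIdx k ν m).image (bset k ν m)

def MFam (k ν m : ℕ) : Finset (Finset ℕ) := (Finset.range ν).image (DB k m)

def Fam (k ν m : ℕ) : Finset (Finset ℕ) := SFam k m ∪ BFam k ν m ∪ MFam k ν m

lemma mul_succ_le {i j k : ℕ} (h : i < j) : i*k + k ≤ j*k := by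
  have := Nat.mul_le_mul_right k (Nat.succ_le_of_lt h)
  simpa [Nat.succ_mul] using this

lemma ee_ge (k m i s : ℕ) : m + 1 ≤ ee k m i s :=
  le_trans (Nat.le_add_right (m+1) (i*k)) (Nat.le_add_right _ s)

lemma ee_inj {k m i s i' s' : ℕ} (hs : s < k) (hs' : s' < k)
    (h : ee k m i s = ee k m i' s') : i = i' ∧ s = s' := by
  unfold ee at h
  have hii : i = i' := by
    by_contra hne
    rcases Nat.lt_or_ge i i' with h1 | h1
    · have h2 := mul_succ_le (k := k) h1
      linarith
    · have h2 : i' < i := lt_of_le_of_ne h1 (Ne.symm hne)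
      have h3 := mul_succ_le (k := k) h2
      linarith
  subst hii
  exact ⟨rfl, Nat.add_left_cancel h⟩

lemma mem_DB_iff {k m c y : ℕ} : y ∈ DB k m c ↔ m+1+c*k ≤ y ∧ y < m+1+c*k+k :=
  Finset.mem_Ico

lemma DB_lb {k m c y : ℕ} (h : y ∈ DB k m c) : m + 1 ≤ y := by
  have := (mem_DB_iff.mp h).1
  have h2 : m + 1 ≤ m + 1 + c*k := Nat.le_add_right _ _
  linarith

lemma ee_mem_DB {k m c g s : ℕ} (hs : s < k) : ee k m g s ∈ DB k m c ↔ g = c := by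
  rw [mem_DB_iff]; unfold ee
  constructor
  · rintro ⟨h1, h2⟩
    by_contra hne
    rcases Nat.lt_or_ge g c with h | h
    · have h3 := mul_succ_le (k := k) h
      linarith
    · have hgc : c < g := lt_of_le_of_ne h (Ne.symm hne)
      have h3 := mul_succ_le (k := k) hgc
      linarith
  · rintro rfl
    constructor <;> linarith [Nat.zero_le s]

lemma DB_card {k m c : ℕ} : (DB k m c).card = k := by
  rw [DB, Nat.card_Ico, Nat.add_sub_cancel_left]

lemma DB_disjoint {k m c c' : ℕ} (h : c ≠ c') : Disjoint (DB k m c) (DB k m c') := by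
  rw [Finset.disjoint_left]
  intro y hy hy'
  rw [mem_DB_iff] at hy hy'
  rcases Nat.lt_or_ge c c' with h1 | h1
  · have := mul_succ_le (k := k) h1
    linarith [hy.1, hy.2, hy'.1, hy'.2]
  · have h2 : c' < c := lt_of_le_of_ne h1 (Ne.symm h)
    have := mul_succ_le (k := k) h2
    linarith [hy.1, hy.2, hy'.1, hy'.2]


/-! ### Shape lemmas -/

lemma SFam_shape {k m Y} (h : Y ∈ SFam k m) :
    ∃ P : Finset ℕ, P ⊆ Finset.range m ∧ P.card = k-1 ∧ Y = insert m P := by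
  rw [SFam, Finset.mem_image] at h
  obtain ⟨P, hP, rfl⟩ := h
  rw [Finset.mem_powersetCard] at hP
  exact ⟨P, hP.1, hP.2, rfl⟩

lemma BFam_shape {k ν m Y} (h : Y ∈ BFam k ν m) :
    ∃ a b s P, a < ν/2 ∧ ν/2 ≤ b ∧ b < ν ∧ s < k ∧
      (P : Finset ℕ) ⊆ Finset.range m ∧ P.card = k-3 ∧
      Y = insert m (insert (ee k m a s) (insert (ee k m b s) P)) := by
  rw [BFam, Finset.mem_image] at h
  obtain ⟨⟨⟨a, j, s⟩, P⟩, hq, rfl⟩ := h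
  rw [BIdx, Finset.mem_product, Finset.mem_product, Finset.mem_product] at hq
  dsimp only at hq ⊢
  obtain ⟨⟨ha, hj, hs⟩, hP⟩ := hq
  rw [Finset.mem_range] at ha hj hs
  rw [Finset.mem_powersetCard] at hP
  exact ⟨a, ν/2 + j, s, P, ha, Nat.le_add_right _ _, by omega, hs, hP.1, hP.2, rfl⟩

lemma MFam_shape {k ν m Y} (h : Y ∈ MFam k ν m) : ∃ c < ν, Y = DB k m c := by
  rw [MFam, Finset.mem_image] at h
  obtain ⟨c, hc, rfl⟩ := h
  exact ⟨c, Finset.mem_range.mp hc, rfl⟩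

lemma Fam_cases {k ν m Y} (h : Y ∈ Fam k ν m) :
    Y ∈ SFam k m ∨ Y ∈ BFam k ν m ∨ Y ∈ MFam k ν m := by
  rw [Fam, Finset.mem_union, Finset.mem_union] at h
  tauto

lemma mem_of_SB {k ν m Y} (h : Y ∈ SFam k m ∨ Y ∈ BFam k ν m) : m ∈ Y := by
  rcases h with h | h
  · obtain ⟨P, _, _, rfl⟩ := SFam_shape h
    exact Finset.mem_insert_self _ _
  · obtain ⟨a, b, s, P, _, _, _, _, _, _, rfl⟩ := BFam_shape h
    exact Finset.mem_insert_self _ _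

lemma notMem_DB_self {k m c : ℕ} : m ∉ DB k m c := fun h => by
  have := DB_lb h; omega

/-- a member of `Fam` not containing `m` is a block -/
lemma block_of_notMem {k ν m Y} (hY : Y ∈ Fam k ν m) (hm : m ∉ Y) :
    ∃ c < ν, Y = DB k m c := by
  rcases Fam_cases hY with h | h | h
  · exact absurd (mem_of_SB (ν := ν) (Or.inl h)) hm
  · exact absurd (mem_of_SB (k := k) (ν := ν) (Or.inr h)) hm
  · exact MFam_shape h

/-- a member of `Fam` containing `m` is in SFam ∪ BFam -/
lemma sb_of_mem {k ν m Y} (hY : Y ∈ Fam k ν m) (hm : m ∈ Y) :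
    Y ∈ SFam k m ∨ Y ∈ BFam k ν m := by
  rcases Fam_cases hY with h | h | h
  · exact Or.inl h
  · exact Or.inr h
  · obtain ⟨c, hc, rfl⟩ := MFam_shape h
    exact absurd hm notMem_DB_self

lemma DB_inj {k m c c' : ℕ} (hk : 0 < k) (h : DB k m c = DB k m c') : c = c' := by
  have h0 : ee k m c 0 ∈ DB k m c := (ee_mem_DB hk).mpr rfl
  rw [h] at h0
  exact (ee_mem_DB hk).mp h0


/-! ### Splitting a B-set into high and low parts -/

lemma high_part {m u v : ℕ} {P : Finset ℕ} (hu : m < u) (hv : m < v)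
    (hP : P ⊆ Finset.range m) :
    (insert m (insert u (insert v P))).filter (fun y => m < y) = {u, v} := by
  ext y
  simp only [Finset.mem_filter, Finset.mem_insert, Finset.mem_singleton]
  constructor
  · rintro ⟨rfl | rfl | rfl | hy, hlt⟩
    · omega
    · exact Or.inl rfl
    · exact Or.inr rfl
    · have := Finset.mem_range.mp (hP hy); omega
  · rintro (rfl | rfl)
    · exact ⟨Or.inr (Or.inl rfl), hu⟩
    · exact ⟨Or.inr (Or.inr (Or.inl rfl)), hv⟩

lemma low_part {m u v : ℕ} {P : Finset ℕ} (hu : m < u) (hv : m < v)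
    (hP : P ⊆ Finset.range m) :
    (insert m (insert u (insert v P))).filter (fun y => y < m) = P := by
  ext y
  simp only [Finset.mem_filter, Finset.mem_insert]
  constructor
  · rintro ⟨rfl | rfl | rfl | hy, hlt⟩
    · omega
    · omega
    · omega
    · exact hy
  · intro hy
    have := Finset.mem_range.mp (hP hy)
    exact ⟨Or.inr (Or.inr (Or.inr hy)), this⟩

/-! ### Cardinalities -/

lemma SFam_card {k m : ℕ} : (SFam k m).card = Nat.choose m (k-1) := by
  rw [SFam, Finset.card_image_of_injOn, Finset.card_powersetCard, Finset.card_range]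
  intro P hP Q hQ h
  rw [Finset.mem_coe, Finset.mem_powersetCard] at hP hQ
  have hmP : m ∉ P := fun hc => by have := Finset.mem_range.mp (hP.1 hc); omega
  have hmQ : m ∉ Q := fun hc => by have := Finset.mem_range.mp (hQ.1 hc); omega
  rw [← Finset.erase_insert hmP, ← Finset.erase_insert hmQ, h]

lemma MFam_card {k ν m : ℕ} (hk : 0 < k) : (MFam k ν m).card = ν := by
  rw [MFam, Finset.card_image_of_injOn, Finset.card_range]
  intro c _ c' _ h
  exact DB_inj hk h

lemma bset_injOn {k ν m : ℕ} : Set.InjOn (bset k ν m) (BIdx k ν m) := by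
  rintro ⟨⟨a, j, s⟩, P⟩ hq ⟨⟨a', j', s'⟩, P'⟩ hq' heq
  rw [BIdx, Finset.mem_coe, Finset.mem_product, Finset.mem_product, Finset.mem_product] at hq hq'
  dsimp only at hq hq'
  obtain ⟨⟨ha, hj, hs⟩, hP⟩ := hq
  obtain ⟨⟨ha', hj', hs'⟩, hP'⟩ := hq'
  rw [Finset.mem_range] at ha hj hs ha' hj' hs'
  rw [Finset.mem_powersetCard] at hP hP'
  unfold bset at heq
  dsimp only at heq
  have hu : m < ee k m a s := ee_ge k m a s
  have hv : m < ee k m (ν/2 + j) s := ee_ge k m _ s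
  have hu' : m < ee k m a' s' := ee_ge k m a' s'
  have hv' : m < ee k m (ν/2 + j') s' := ee_ge k m _ s'
  have hhigh : ({ee k m a s, ee k m (ν/2 + j) s} : Finset ℕ)
      = {ee k m a' s', ee k m (ν/2 + j') s'} := by
    rw [← high_part hu hv hP.1, ← high_part hu' hv' hP'.1, heq]
  have hlow : P = P' := by
    rw [← low_part hu hv hP.1, ← low_part hu' hv' hP'.1, heq]
  have humem : ee k m a s ∈ ({ee k m a' s', ee k m (ν/2 + j') s'} : Finset ℕ) := by
    rw [← hhigh]; exact Finset.mem_insert_self _ _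
  have has : a = a' ∧ s = s' := by
    rcases Finset.mem_insert.mp humem with h | h
    · exact ee_inj hs hs' h
    · rw [Finset.mem_singleton] at h
      have := ee_inj hs hs' h
      omega
  obtain ⟨rfl, rfl⟩ := has
  have hvmem : ee k m (ν/2 + j) s ∈ ({ee k m a s, ee k m (ν/2 + j') s} : Finset ℕ) := by
    rw [← hhigh]; exact Finset.mem_insert_of_mem (Finset.mem_singleton.mpr rfl)
  have hjj : j = j' := by
    rcases Finset.mem_insert.mp hvmem with h | h
    · have := ee_inj hs hs h
      omega
    · rw [Finset.mem_singleton] at h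
      have := ee_inj hs hs h
      omega
  subst hjj
  rw [hlow]

lemma BFam_card {k ν m : ℕ} : (BFam k ν m).card
    = ν/2 * ((ν - ν/2) * k) * Nat.choose m (k-3) := by
  rw [BFam, Finset.card_image_of_injOn bset_injOn, BIdx]
  simp [Finset.card_product, Finset.card_powersetCard, Finset.card_range, Nat.mul_assoc]

lemma S_B_disjoint {k ν m : ℕ} : Disjoint (SFam k m) (BFam k ν m) := by
  rw [Finset.disjoint_left]
  intro Y hS hB
  obtain ⟨P, hP, hPc, rfl⟩ := SFam_shape hS
  obtain ⟨a, b, s, Q, _, _, _, _, hQ, _, hEq⟩ := BFam_shape hB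
  have : ee k m a s ∈ insert m P := by
    rw [hEq]
    exact Finset.mem_insert_of_mem (Finset.mem_insert_self _ _)
  have hge := ee_ge k m a s
  rcases Finset.mem_insert.mp this with h | h
  · omega
  · have := Finset.mem_range.mp (hP h); omega

lemma SB_M_disjoint {k ν m : ℕ} : Disjoint (SFam k m ∪ BFam k ν m) (MFam k ν m) := by
  rw [Finset.disjoint_left]
  intro Y hSB hM
  obtain ⟨c, hc, rfl⟩ := MFam_shape hM
  exact notMem_DB_self (mem_of_SB (Finset.mem_union.mp hSB))

lemma Fam_card {k ν m : ℕ} (hk : 0 < k) : (Fam k ν m).card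
    = Nat.choose m (k-1) + ν/2 * ((ν - ν/2) * k) * Nat.choose m (k-3) + ν := by
  rw [Fam, Finset.card_union_of_disjoint SB_M_disjoint,
    Finset.card_union_of_disjoint S_B_disjoint, SFam_card, BFam_card, MFam_card hk]

lemma parity {ν : ℕ} : ν/2 * (ν - ν/2) = ν^2/4 := by
  have h := Nat.div_add_mod ν 2
  set q := ν / 2 with hq
  set r := ν % 2 with hr
  have hr2 : r < 2 := Nat.mod_lt _ (by norm_num)
  have hsq : ν^2 = 4*(q*q + q*r) + r*r := by
    have : ν = 2*q + r := by omega
    rw [this]; ring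
  have h2 : ν - q = q + r := by omega
  rw [h2]
  have : q * (q + r) = q*q + q*r := by ring
  rw [this]
  interval_cases r <;> omega


/-! ### membership in powersetCard -/

lemma bset_card {k ν m a b s : ℕ} {P : Finset ℕ} (hk : 3 ≤ k)
    (ha : a < ν/2) (hb : ν/2 ≤ b) (hs : s < k)
    (hP : P ⊆ Finset.range m) (hPc : P.card = k-3) :
    (insert m (insert (ee k m a s) (insert (ee k m b s) P))).card = k := by
  have hlow : ∀ p ∈ P, p < m := fun p hp => Finset.mem_range.mp (hP hp)
  have hab : a ≠ b := by omega
  have huv : ee k m a s ≠ ee k m b s := fun h => hab (ee_inj hs hs h).1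
  have hu := ee_ge k m a s
  have hv := ee_ge k m b s
  have h1 : ee k m b s ∉ P := fun h => by have := hlow _ h; omega
  have h2 : ee k m a s ∉ insert (ee k m b s) P := by
    rw [Finset.mem_insert]
    rintro (h | h)
    · exact huv h
    · have := hlow _ h; omega
  have h3 : m ∉ insert (ee k m a s) (insert (ee k m b s) P) := by
    rw [Finset.mem_insert, Finset.mem_insert]
    rintro (h | h | h)
    · omega
    · omega
    · have := hlow _ h; omega
  rw [Finset.card_insert_of_notMem h3, Finset.card_insert_of_notMem h2,
    Finset.card_insert_of_notMem h1, hPc]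
  omega

lemma Fam_subset_powersetCard {k ν m n : ℕ} (hk : 3 ≤ k) (hn : m + ν * k + 1 = n) :
    Fam k ν m ⊆ Finset.powersetCard k (Finset.range n) := by
  intro Y hY
  rw [Finset.mem_powersetCard]
  have hee : ∀ g t, g < ν → t < k → ee k m g t < n := by
    intro g t hg ht
    have := mul_succ_le (k := k) hg
    unfold ee
    linarith
  rcases Fam_cases hY with h | h | h
  · obtain ⟨P, hP, hPc, rfl⟩ := SFam_shape h
    constructor
    · intro y hy
      rw [Finset.mem_range]
      rcases Finset.mem_insert.mp hy with rfl | hy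
      · have : 0 ≤ ν * k := Nat.zero_le _
        omega
      · have := Finset.mem_range.mp (hP hy)
        have : 0 ≤ ν * k := Nat.zero_le _
        omega
    · have hmP : m ∉ P := fun hc => by have := Finset.mem_range.mp (hP hc); omega
      rw [Finset.card_insert_of_notMem hmP, hPc]
      omega
  · obtain ⟨a, b, s, P, ha, hb1, hb2, hs, hP, hPc, rfl⟩ := BFam_shape h
    have hν2 : ν/2 ≤ ν := Nat.div_le_self _ _
    constructor
    · intro y hy
      rw [Finset.mem_range]
      have hzn : 0 ≤ ν * k := Nat.zero_le _
      rcases Finset.mem_insert.mp hy with rfl | hy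
      · omega
      rcases Finset.mem_insert.mp hy with rfl | hy
      · exact hee a s (by omega) hs
      rcases Finset.mem_insert.mp hy with rfl | hy
      · exact hee b s hb2 hs
      · have := Finset.mem_range.mp (hP hy); omega
    · exact bset_card hk ha hb1 hs hP hPc
  · obtain ⟨c, hc, rfl⟩ := MFam_shape h
    constructor
    · intro y hy
      rw [mem_DB_iff] at hy
      rw [Finset.mem_range]
      have := mul_succ_le (k := k) hc
      linarith [hy.2]
    · exact DB_card

/-! ### matching number -/

lemma DB_mem_MFam {k ν m c : ℕ} (hc : c < ν) : DB k m c ∈ MFam k ν m := by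
  rw [MFam, Finset.mem_image]
  exact ⟨c, Finset.mem_range.mpr hc, rfl⟩

lemma matching_upper {k ν m : ℕ} (hk : 0 < k) :
    matchingNumber (Fam k ν m) ≤ ν + 1 := by
  classical
  apply Finset.sup_le
  intro M hM
  rw [Finset.mem_filter, Finset.mem_powerset] at hM
  obtain ⟨hMF, hdisj⟩ := hM
  have hsplit := Finset.card_filter_add_card_filter_not
    (s := M) (p := fun Y => m ∈ Y)
  have h1 : (M.filter (fun Y => m ∈ Y)).card ≤ 1 := by
    rw [Finset.card_le_one]
    intro a ha b hb
    rw [Finset.mem_filter] at ha hb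
    by_contra hne
    have hd := hdisj (Finset.mem_coe.mpr ha.1) (Finset.mem_coe.mpr hb.1) hne
    exact (Finset.disjoint_left.mp hd ha.2) hb.2
  have h2 : M.filter (fun Y => ¬ m ∈ Y) ⊆ MFam k ν m := by
    intro Y hY
    rw [Finset.mem_filter] at hY
    obtain ⟨c, hc, rfl⟩ := block_of_notMem (hMF hY.1) hY.2
    exact DB_mem_MFam hc
  have h3 := Finset.card_le_card h2
  rw [MFam_card hk] at h3
  omega

lemma matching_lower {k ν m : ℕ} (hk : 3 ≤ k) (hmk : k ≤ m) :
    ν + 1 ≤ matchingNumber (Fam k ν m) := by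
  classical
  set S0 : Finset ℕ := insert m (Finset.range (k-1)) with hS0def
  have hS0 : S0 ∈ SFam k m := by
    rw [SFam, Finset.mem_image]
    refine ⟨Finset.range (k-1), ?_, rfl⟩
    rw [Finset.mem_powersetCard]
    exact ⟨Finset.range_subset_range.mpr (by omega), Finset.card_range _⟩
  set W := insert S0 (MFam k ν m) with hWdef
  have hS0low : ∀ y ∈ S0, y ≤ m := by
    intro y hy
    rcases Finset.mem_insert.mp hy with rfl | hy
    · omega
    · have := Finset.mem_range.mp hy; omega
  have hS0M : S0 ∉ MFam k ν m := by
    intro h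
    obtain ⟨c, hc, hEq⟩ := MFam_shape h
    have : m ∈ DB k m c := hEq ▸ Finset.mem_insert_self _ _
    exact notMem_DB_self this
  have hWsub : W ⊆ Fam k ν m := by
    intro Y hY
    rcases Finset.mem_insert.mp hY with rfl | hY
    · exact Finset.mem_union.mpr (Or.inl (Finset.mem_union.mpr (Or.inl hS0)))
    · exact Finset.mem_union.mpr (Or.inr hY)
  have hdisj : (↑W : Set (Finset ℕ)).PairwiseDisjoint id := by
    intro a ha b hb hne
    rw [Finset.mem_coe, hWdef, Finset.mem_insert] at ha hb
    have hblock : ∀ c, c < ν → Disjoint S0 (DB k m c) := by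
      intro c _
      rw [Finset.disjoint_left]
      intro y hy hy'
      have := hS0low y hy
      have := DB_lb hy'
      omega
    rcases ha with rfl | ha <;> rcases hb with rfl | hb
    · exact absurd rfl hne
    · obtain ⟨c, hc, rfl⟩ := MFam_shape hb
      exact hblock c hc
    · obtain ⟨c, hc, rfl⟩ := MFam_shape ha
      exact (hblock c hc).symm
    · obtain ⟨c, hc, rfl⟩ := MFam_shape ha
      obtain ⟨c', hc', rfl⟩ := MFam_shape hb
      have hcc : c ≠ c' := fun h => hne (by rw [h])
      exact DB_disjoint hcc
  have hWcard : W.card = ν + 1 := by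
    rw [hWdef, Finset.card_insert_of_notMem hS0M, MFam_card (by omega)]
  have hWmem : W ∈ (Fam k ν m).powerset.filter
      (fun M : Finset (Finset ℕ) => (M : Set (Finset ℕ)).PairwiseDisjoint id) := by
    rw [Finset.mem_filter, Finset.mem_powerset]
    exact ⟨hWsub, hdisj⟩
  calc ν + 1 = W.card := hWcard.symm
    _ ≤ _ := Finset.le_sup hWmem


/-! ### cluster-freeness: the star contradiction -/

lemma star_contra {k ν m c : ℕ} {U P : Finset ℕ} {z : ℕ} (hk : 1 ≤ k)
    (hP : P ⊆ Finset.range m) (hPc : P.card = k-1)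
    (hsub : insert m P ⊆ U) (hzU : z ∈ U) (hzD : z ∉ DB k m c)
    (hzP : z ∉ insert m P)
    (hU : (U \ DB k m c).card ≤ k) : False := by
  have hss : insert z (insert m P) ⊆ U \ DB k m c := by
    intro y hy
    rw [Finset.mem_sdiff]
    rcases Finset.mem_insert.mp hy with rfl | hy
    · exact ⟨hzU, hzD⟩
    · refine ⟨hsub hy, ?_⟩
      rcases Finset.mem_insert.mp hy with rfl | hy2
      · exact notMem_DB_self
      · intro hc2
        have := DB_lb hc2
        have := Finset.mem_range.mp (hP hy2)
        omega
  have hmP : m ∉ P := fun h => by have := Finset.mem_range.mp (hP h); omega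
  have hcard : (insert z (insert m P)).card = k + 1 := by
    rw [Finset.card_insert_of_notMem hzP, Finset.card_insert_of_notMem hmP, hPc]
    omega
  have := Finset.card_le_card hss
  omega

/-- If one of three distinct sets (all of S/B shape, contained in `U`) is an S-set,
the budget is violated. -/
lemma s_mixed_contra {k ν m c : ℕ} {U X X' : Finset ℕ} (hk : 3 ≤ k)
    (hX : X ∈ SFam k m) (hX' : X' ∈ SFam k m ∨ X' ∈ BFam k ν m) (hne : X ≠ X')
    (hXU : X ⊆ U) (hX'U : X' ⊆ U)
    (hU : (U \ DB k m c).card ≤ k) : False := by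
  obtain ⟨P, hP, hPc, rfl⟩ := SFam_shape hX
  rcases hX' with h | h
  · obtain ⟨P', hP', hP'c, rfl⟩ := SFam_shape h
    have hPP : P ≠ P' := fun h2 => hne (by rw [h2])
    have hnsub : ¬ P' ⊆ P := by
      intro hsub
      exact hPP (Finset.eq_of_subset_of_card_le hsub (by omega)).symm
    obtain ⟨z, hz1, hz2⟩ := Finset.not_subset.mp hnsub
    have hzm := Finset.mem_range.mp (hP' hz1)
    refine star_contra (ν := ν) (by omega) hP hPc hXU
      (hX'U (Finset.mem_insert_of_mem hz1)) ?_ ?_ hU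
    · intro hcon; have := DB_lb hcon; omega
    · rw [Finset.mem_insert]
      rintro (rfl | h2)
      · omega
      · exact hz2 h2
  · obtain ⟨a, b, s, Q, ha, hb1, hb2, hs, hQ, hQc, rfl⟩ := BFam_shape h
    by_cases hac : a = c
    · -- use z = ee b s, which is outside the block since b ≠ c
      have hbc : b ≠ c := by omega
      refine star_contra (ν := ν) (by omega) hP hPc hXU
        (hX'U (Finset.mem_insert_of_mem (Finset.mem_insert_of_mem
          (Finset.mem_insert_self _ _)))) ?_ ?_ hU
      · intro hcon; exact hbc ((ee_mem_DB hs).mp hcon)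
      · rw [Finset.mem_insert]
        have := ee_ge k m b s
        rintro (h2 | h2)
        · omega
        · have := Finset.mem_range.mp (hP h2); omega
    · refine star_contra (ν := ν) (by omega) hP hPc hXU
        (hX'U (Finset.mem_insert_of_mem (Finset.mem_insert_self _ _))) ?_ ?_ hU
      · intro hcon; exact hac ((ee_mem_DB hs).mp hcon)
      · rw [Finset.mem_insert]
        have := ee_ge k m a s
        rintro (h2 | h2)
        · omega
        · have := Finset.mem_range.mp (hP h2); omega


set_option maxHeartbeats 1000000 in
/-- The heart: one block plus three S/B-sets within budget have a common element. -/
lemma heart {k ν m c : ℕ} {X1 X2 X3 : Finset ℕ} (hk : 3 ≤ k)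
    (h1 : X1 ∈ SFam k m ∨ X1 ∈ BFam k ν m)
    (h2 : X2 ∈ SFam k m ∨ X2 ∈ BFam k ν m)
    (h3 : X3 ∈ SFam k m ∨ X3 ∈ BFam k ν m)
    (h12 : X1 ≠ X2) (h13 : X1 ≠ X3) (h23 : X2 ≠ X3)
    (hU : ((X1 ∪ X2 ∪ X3) \ DB k m c).card ≤ k) :
    ∃ w, w ∈ DB k m c ∧ w ∈ X1 ∧ w ∈ X2 ∧ w ∈ X3 := by
  set U := X1 ∪ X2 ∪ X3 with hUdef
  have hU1 : X1 ⊆ U := fun y hy => Finset.mem_union.mpr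
    (Or.inl (Finset.mem_union.mpr (Or.inl hy)))
  have hU2 : X2 ⊆ U := fun y hy => Finset.mem_union.mpr
    (Or.inl (Finset.mem_union.mpr (Or.inr hy)))
  have hU3 : X3 ⊆ U := fun y hy => Finset.mem_union.mpr (Or.inr hy)
  -- dispose of cases involving an S-set
  rcases h1 with h1 | h1
  · exact absurd (s_mixed_contra hk h1 h2 h12 hU1 hU2 hU) not_false
  rcases h2 with h2 | h2
  · exact absurd (s_mixed_contra hk h2 (Or.inr h1) (Ne.symm h12) hU2 hU1 hU) not_false
  rcases h3 with h3 | h3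
  · exact absurd (s_mixed_contra hk h3 (Or.inr h1) (Ne.symm h13) hU3 hU1 hU) not_false
  -- all three are B-sets
  obtain ⟨a1, b1, s1, P1, ha1, hb11, hb12, hs1, hP1, hP1c, hX1⟩ := BFam_shape h1
  obtain ⟨a2, b2, s2, P2, ha2, hb21, hb22, hs2, hP2, hP2c, hX2⟩ := BFam_shape h2
  obtain ⟨a3, b3, s3, P3, ha3, hb31, hb32, hs3, hP3, hP3c, hX3⟩ := BFam_shape h3
  set B6 : Finset ℕ := {ee k m a1 s1, ee k m b1 s1, ee k m a2 s2,
    ee k m b2 s2, ee k m a3 s3, ee k m b3 s3} with hB6def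
  set Z : Finset ℕ := B6 \ DB k m c with hZdef
  set PU : Finset ℕ := P1 ∪ P2 ∪ P3 with hPUdef
  -- membership facts
  have hu1X : ee k m a1 s1 ∈ X1 := by
    rw [hX1]; exact Finset.mem_insert_of_mem (Finset.mem_insert_self _ _)
  have hv1X : ee k m b1 s1 ∈ X1 := by
    rw [hX1]
    exact Finset.mem_insert_of_mem (Finset.mem_insert_of_mem (Finset.mem_insert_self _ _))
  have hu2X : ee k m a2 s2 ∈ X2 := by
    rw [hX2]; exact Finset.mem_insert_of_mem (Finset.mem_insert_self _ _)
  have hv2X : ee k m b2 s2 ∈ X2 := by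
    rw [hX2]
    exact Finset.mem_insert_of_mem (Finset.mem_insert_of_mem (Finset.mem_insert_self _ _))
  have hu3X : ee k m a3 s3 ∈ X3 := by
    rw [hX3]; exact Finset.mem_insert_of_mem (Finset.mem_insert_self _ _)
  have hv3X : ee k m b3 s3 ∈ X3 := by
    rw [hX3]
    exact Finset.mem_insert_of_mem (Finset.mem_insert_of_mem (Finset.mem_insert_self _ _))
  have hP1X : P1 ⊆ X1 := by
    rw [hX1]
    exact fun y hy => Finset.mem_insert_of_mem (Finset.mem_insert_of_mem
      (Finset.mem_insert_of_mem hy))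
  have hP2X : P2 ⊆ X2 := by
    rw [hX2]
    exact fun y hy => Finset.mem_insert_of_mem (Finset.mem_insert_of_mem
      (Finset.mem_insert_of_mem hy))
  have hP3X : P3 ⊆ X3 := by
    rw [hX3]
    exact fun y hy => Finset.mem_insert_of_mem (Finset.mem_insert_of_mem
      (Finset.mem_insert_of_mem hy))
  have hB6U : B6 ⊆ U := by
    intro y hy
    rw [hB6def] at hy
    simp only [Finset.mem_insert, Finset.mem_singleton] at hy
    rcases hy with rfl | rfl | rfl | rfl | rfl | rfl
    · exact hU1 hu1X
    · exact hU1 hv1X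
    · exact hU2 hu2X
    · exact hU2 hv2X
    · exact hU3 hu3X
    · exact hU3 hv3X
  have hB6hi : ∀ y ∈ B6, m + 1 ≤ y := by
    intro y hy
    rw [hB6def] at hy
    simp only [Finset.mem_insert, Finset.mem_singleton] at hy
    rcases hy with rfl | rfl | rfl | rfl | rfl | rfl <;> exact ee_ge k m _ _
  have hPUlow : ∀ y ∈ PU, y < m := by
    intro y hy
    rw [hPUdef] at hy
    rcases Finset.mem_union.mp hy with hy | hy
    · rcases Finset.mem_union.mp hy with hy | hy
      · exact Finset.mem_range.mp (hP1 hy)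
      · exact Finset.mem_range.mp (hP2 hy)
    · exact Finset.mem_range.mp (hP3 hy)
  have hPUU : PU ⊆ U := by
    intro y hy
    rw [hPUdef] at hy
    rcases Finset.mem_union.mp hy with hy | hy
    · rcases Finset.mem_union.mp hy with hy | hy
      · exact hU1 (hP1X hy)
      · exact hU2 (hP2X hy)
    · exact hU3 (hP3X hy)
  -- budget inequality : 1 + |PU| + |Z| ≤ k
  have hbudget : 1 + PU.card + Z.card ≤ k := by
    have hss : insert m (PU ∪ Z) ⊆ U \ DB k m c := by
      intro y hy
      rw [Finset.mem_sdiff]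
      rcases Finset.mem_insert.mp hy with rfl | hy
      · refine ⟨hU1 ?_, notMem_DB_self⟩
        rw [hX1]; exact Finset.mem_insert_self _ _
      rcases Finset.mem_union.mp hy with hy | hy
      · refine ⟨hPUU hy, fun hcon => ?_⟩
        have := DB_lb hcon
        have := hPUlow y hy
        omega
      · rw [hZdef, Finset.mem_sdiff] at hy
        exact ⟨hB6U hy.1, hy.2⟩
    have hcZ : (insert m (PU ∪ Z)).card = 1 + PU.card + Z.card := by
      have hd : Disjoint PU Z := by
        rw [Finset.disjoint_left]
        intro y hy hz
        have := hPUlow y hy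
        have := hB6hi y (Finset.mem_sdiff.mp (hZdef ▸ hz)).1
        omega
      have hm : m ∉ PU ∪ Z := by
        rw [Finset.mem_union]
        rintro (h | h)
        · have := hPUlow m h; omega
        · have := hB6hi m (Finset.mem_sdiff.mp (hZdef ▸ h)).1; omega
      rw [Finset.card_insert_of_notMem hm, Finset.card_union_of_disjoint hd]
      omega
    have := Finset.card_le_card hss
    omega
  have hP1PU : P1 ⊆ PU := fun y hy => Finset.mem_union.mpr
    (Or.inl (Finset.mem_union.mpr (Or.inl hy)))
  have hP2PU : P2 ⊆ PU := fun y hy => Finset.mem_union.mpr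
    (Or.inl (Finset.mem_union.mpr (Or.inr hy)))
  have hP3PU : P3 ⊆ PU := fun y hy => Finset.mem_union.mpr (Or.inr hy)
  have hPUcard : k - 3 ≤ PU.card := hP1c ▸ Finset.card_le_card hP1PU
  have hZle : Z.card ≤ 2 := by omega
  -- Z is nonempty
  have hZne : Z.Nonempty := by
    by_cases hac : a1 = c
    · refine ⟨ee k m b1 s1, ?_⟩
      rw [hZdef, Finset.mem_sdiff]
      constructor
      · rw [hB6def]
        simp only [Finset.mem_insert, Finset.mem_singleton]
        tauto
      · intro hcon
        have := (ee_mem_DB hs1).mp hcon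
        omega
    · refine ⟨ee k m a1 s1, ?_⟩
      rw [hZdef, Finset.mem_sdiff]
      constructor
      · rw [hB6def]
        simp only [Finset.mem_insert, Finset.mem_singleton]
        tauto
      · intro hcon
        exact hac ((ee_mem_DB hs1).mp hcon)
  have hZ1 : 1 ≤ Z.card := Finset.card_pos.mpr hZne
  -- helper: membership of the pair elements in Z
  have huZ : ∀ (a s : ℕ), s < k → a ≠ c → ee k m a s ∈ B6 → ee k m a s ∈ Z := by
    intro a s hs hac hmem
    rw [hZdef, Finset.mem_sdiff]
    exact ⟨hmem, fun hcon => hac ((ee_mem_DB hs).mp hcon)⟩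
  have hmem1u : ee k m a1 s1 ∈ B6 := by
    rw [hB6def]; simp only [Finset.mem_insert, Finset.mem_singleton]; tauto
  have hmem1v : ee k m b1 s1 ∈ B6 := by
    rw [hB6def]; simp only [Finset.mem_insert, Finset.mem_singleton]; tauto
  have hmem2u : ee k m a2 s2 ∈ B6 := by
    rw [hB6def]; simp only [Finset.mem_insert, Finset.mem_singleton]; tauto
  have hmem2v : ee k m b2 s2 ∈ B6 := by
    rw [hB6def]; simp only [Finset.mem_insert, Finset.mem_singleton]; tauto
  have hmem3u : ee k m a3 s3 ∈ B6 := by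
    rw [hB6def]; simp only [Finset.mem_insert, Finset.mem_singleton]; tauto
  have hmem3v : ee k m b3 s3 ∈ B6 := by
    rw [hB6def]; simp only [Finset.mem_insert, Finset.mem_singleton]; tauto
  have hZcases : Z.card = 1 ∨ Z.card = 2 := by omega
  rcases hZcases with hZc | hZc
  · -- |Z| = 1
    obtain ⟨z, hz⟩ := Finset.card_eq_one.mp hZc
    -- each pair hits the block; extract data
    have hgen : ∀ (a b s : ℕ), a < ν/2 → ν/2 ≤ b → s < k →
        ee k m a s ∈ B6 → ee k m b s ∈ B6 →
        ∃ g, ee k m c s ∈ ({ee k m a s, ee k m b s} : Finset ℕ) ∧ z = ee k m g s := by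
      intro a b s ha hb hs hmu hmv
      by_cases hac : a = c
      · have hbc : b ≠ c := by omega
        have := huZ b s hs hbc hmv
        rw [hz, Finset.mem_singleton] at this
        exact ⟨b, by rw [hac]; exact Finset.mem_insert_self _ _, this.symm⟩
      · by_cases hbc : b = c
        · have := huZ a s hs hac hmu
          rw [hz, Finset.mem_singleton] at this
          refine ⟨a, ?_, this.symm⟩
          rw [hbc]
          exact Finset.mem_insert_of_mem (Finset.mem_singleton.mpr rfl)
        · have h1' := huZ a s hs hac hmu
          have h2' := huZ b s hs hbc hmv
          rw [hz, Finset.mem_singleton] at h1' h2'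
          have := ee_inj hs hs (h1'.trans h2'.symm)
          omega
    obtain ⟨g1, hc1, hz1⟩ := hgen a1 b1 s1 ha1 hb11 hs1 hmem1u hmem1v
    obtain ⟨g2, hc2, hz2⟩ := hgen a2 b2 s2 ha2 hb21 hs2 hmem2u hmem2v
    obtain ⟨g3, hc3, hz3⟩ := hgen a3 b3 s3 ha3 hb31 hs3 hmem3u hmem3v
    have hs12 : s1 = s2 := (ee_inj hs1 hs2 (hz1 ▸ hz2 ▸ rfl : ee k m g1 s1 = ee k m g2 s2)).2
    have hs13 : s1 = s3 := (ee_inj hs1 hs3 (hz1 ▸ hz3 ▸ rfl : ee k m g1 s1 = ee k m g3 s3)).2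
    refine ⟨ee k m c s1, (ee_mem_DB hs1).mpr rfl, ?_, ?_, ?_⟩
    · rcases Finset.mem_insert.mp hc1 with h | h
      · rw [h]; exact hu1X
      · rw [Finset.mem_singleton] at h; rw [h]; exact hv1X
    · rw [hs12]
      rcases Finset.mem_insert.mp hc2 with h | h
      · rw [h]; exact hu2X
      · rw [Finset.mem_singleton] at h; rw [h]; exact hv2X
    · rw [hs13]
      rcases Finset.mem_insert.mp hc3 with h | h
      · rw [h]; exact hu3X
      · rw [Finset.mem_singleton] at h; rw [h]; exact hv3X
  · -- |Z| = 2 : derive a contradiction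
    exfalso
    obtain ⟨z1, z2, hz12, hZeq⟩ := Finset.card_eq_two.mp hZc
    -- all the P's coincide
    have hPUle : PU.card ≤ k - 3 := by omega
    have hP1e : P1 = PU := Finset.eq_of_subset_of_card_le hP1PU (by omega)
    have hP2e : P2 = PU := Finset.eq_of_subset_of_card_le hP2PU (by omega)
    have hP3e : P3 = PU := Finset.eq_of_subset_of_card_le hP3PU (by omega)
    -- if the pair data agree, the sets agree
    have eq12 : a1 = a2 ∧ b1 = b2 ∧ s1 = s2 → False := by
      rintro ⟨e1, e2, e3⟩
      exact h12 (by rw [hX1, hX2, e1, e2, e3, hP1e, hP2e])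
    have eq13 : a1 = a3 ∧ b1 = b3 ∧ s1 = s3 → False := by
      rintro ⟨e1, e2, e3⟩
      exact h13 (by rw [hX1, hX3, e1, e2, e3, hP1e, hP3e])
    have eq23 : a2 = a3 ∧ b2 = b3 ∧ s2 = s3 → False := by
      rintro ⟨e1, e2, e3⟩
      exact h23 (by rw [hX2, hX3, e1, e2, e3, hP2e, hP3e])
    -- classification of each pair
    have cls : ∀ (a b s : ℕ), a < ν/2 → ν/2 ≤ b → s < k →
        ee k m a s ∈ B6 → ee k m b s ∈ B6 →
        ((ee k m a s = z1 ∧ ee k m b s = z2) ∨ (ee k m a s = z2 ∧ ee k m b s = z1)) ∨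
        ((a = c ∧ ee k m b s = z1) ∨ (b = c ∧ ee k m a s = z1)) ∨
        ((a = c ∧ ee k m b s = z2) ∨ (b = c ∧ ee k m a s = z2)) := by
      intro a b s ha hb hs hmu hmv
      by_cases hac : a = c
      · have hbc : b ≠ c := by omega
        have := huZ b s hs hbc hmv
        rw [hZeq, Finset.mem_insert, Finset.mem_singleton] at this
        rcases this with h | h
        · exact Or.inr (Or.inl (Or.inl ⟨hac, h⟩))
        · exact Or.inr (Or.inr (Or.inl ⟨hac, h⟩))
      · by_cases hbc : b = c
        · have := huZ a s hs hac hmu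
          rw [hZeq, Finset.mem_insert, Finset.mem_singleton] at this
          rcases this with h | h
          · exact Or.inr (Or.inl (Or.inr ⟨hbc, h⟩))
          · exact Or.inr (Or.inr (Or.inr ⟨hbc, h⟩))
        · have h1' := huZ a s hs hac hmu
          have h2' := huZ b s hs hbc hmv
          rw [hZeq, Finset.mem_insert, Finset.mem_singleton] at h1' h2'
          have hne : ee k m a s ≠ ee k m b s := by
            intro h
            have := ee_inj hs hs h
            omega
          rcases h1' with h1' | h1' <;> rcases h2' with h2' | h2'
          · exact absurd (h1'.trans h2'.symm) hne
          · exact Or.inl (Or.inl ⟨h1', h2'⟩)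
          · exact Or.inl (Or.inr ⟨h1', h2'⟩)
          · exact absurd (h1'.trans h2'.symm) hne
    -- helpers for the case bash
    have hithit : ∀ {a b s a' b' s' z : ℕ}, a < ν/2 → ν/2 ≤ b → a' < ν/2 → ν/2 ≤ b' →
        s < k → s' < k →
        ((a = c ∧ ee k m b s = z) ∨ (b = c ∧ ee k m a s = z)) →
        ((a' = c ∧ ee k m b' s' = z) ∨ (b' = c ∧ ee k m a' s' = z)) →
        a = a' ∧ b = b' ∧ s = s' := by
      rintro a b s a' b' s' z ha hb ha' hb' hs hs'
        (⟨e1, e2⟩ | ⟨e1, e2⟩) (⟨e3, e4⟩ | ⟨e3, e4⟩)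
      · obtain ⟨f1, f2⟩ := ee_inj hs hs' (e2.trans e4.symm); omega
      · obtain ⟨f1, f2⟩ := ee_inj hs hs' (e2.trans e4.symm); omega
      · obtain ⟨f1, f2⟩ := ee_inj hs hs' (e2.trans e4.symm); omega
      · obtain ⟨f1, f2⟩ := ee_inj hs hs' (e2.trans e4.symm); omega
    have fullfull : ∀ {a b s a' b' s' : ℕ}, a < ν/2 → ν/2 ≤ b → a' < ν/2 → ν/2 ≤ b' →
        s < k → s' < k →
        ((ee k m a s = z1 ∧ ee k m b s = z2) ∨ (ee k m a s = z2 ∧ ee k m b s = z1)) →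
        ((ee k m a' s' = z1 ∧ ee k m b' s' = z2) ∨ (ee k m a' s' = z2 ∧ ee k m b' s' = z1)) →
        a = a' ∧ b = b' ∧ s = s' := by
      rintro a b s a' b' s' ha hb ha' hb' hs hs'
        (⟨e1, e2⟩ | ⟨e1, e2⟩) (⟨e3, e4⟩ | ⟨e3, e4⟩)
      · obtain ⟨f1, f2⟩ := ee_inj hs hs' (e1.trans e3.symm)
        obtain ⟨f3, f4⟩ := ee_inj hs hs' (e2.trans e4.symm)
        omega
      · obtain ⟨f1, f2⟩ := ee_inj hs hs' (e1.trans e4.symm)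
        obtain ⟨f3, f4⟩ := ee_inj hs hs' (e2.trans e3.symm)
        omega
      · obtain ⟨f1, f2⟩ := ee_inj hs hs' (e1.trans e4.symm)
        obtain ⟨f3, f4⟩ := ee_inj hs hs' (e2.trans e3.symm)
        omega
      · obtain ⟨f1, f2⟩ := ee_inj hs hs' (e1.trans e3.symm)
        obtain ⟨f3, f4⟩ := ee_inj hs hs' (e2.trans e4.symm)
        omega
    have finalC : ∀ {pa pb ps qa qb qs ra rb rs : ℕ},
        pa < ν/2 → ν/2 ≤ pb → qa < ν/2 → ν/2 ≤ qb → ra < ν/2 → ν/2 ≤ rb →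
        ps < k → qs < k → rs < k →
        ((ee k m pa ps = z1 ∧ ee k m pb ps = z2) ∨
          (ee k m pa ps = z2 ∧ ee k m pb ps = z1)) →
        ((qa = c ∧ ee k m qb qs = z1) ∨ (qb = c ∧ ee k m qa qs = z1)) →
        ((ra = c ∧ ee k m rb rs = z2) ∨ (rb = c ∧ ee k m ra rs = z2)) → False := by
      rintro pa pb ps qa qb qs ra rb rs hpa hpb hqa hqb hra hrb hps hqs hrs
        (⟨e1, e2⟩ | ⟨e1, e2⟩) (⟨f1, f2⟩ | ⟨f1, f2⟩) (⟨g1, g2⟩ | ⟨g1, g2⟩)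
      · obtain ⟨x1, x2⟩ := ee_inj hqs hps (f2.trans e1.symm); omega
      · obtain ⟨x1, x2⟩ := ee_inj hqs hps (f2.trans e1.symm); omega
      · obtain ⟨x1, x2⟩ := ee_inj hqs hps (f2.trans e1.symm)
        obtain ⟨y1, y2⟩ := ee_inj hrs hps (g2.trans e2.symm)
        omega
      · obtain ⟨x1, x2⟩ := ee_inj hqs hps (f2.trans e1.symm)
        obtain ⟨y1, y2⟩ := ee_inj hrs hps (g2.trans e2.symm)
        omega
      · obtain ⟨x1, x2⟩ := ee_inj hqs hps (f2.trans e2.symm)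
        obtain ⟨y1, y2⟩ := ee_inj hrs hps (g2.trans e1.symm)
        omega
      · obtain ⟨x1, x2⟩ := ee_inj hqs hps (f2.trans e2.symm)
        obtain ⟨y1, y2⟩ := ee_inj hrs hps (g2.trans e1.symm)
        omega
      · obtain ⟨x1, x2⟩ := ee_inj hqs hps (f2.trans e2.symm); omega
      · obtain ⟨x1, x2⟩ := ee_inj hqs hps (f2.trans e2.symm); omega
    have cls1 := cls a1 b1 s1 ha1 hb11 hs1 hmem1u hmem1v
    have cls2 := cls a2 b2 s2 ha2 hb21 hs2 hmem2u hmem2v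
    have cls3 := cls a3 b3 s3 ha3 hb31 hs3 hmem3u hmem3v
    rcases cls1 with L1 | L1 | L1 <;> rcases cls2 with L2 | L2 | L2 <;>
      rcases cls3 with L3 | L3 | L3 <;>
      first
        | exact eq12 (fullfull ha1 hb11 ha2 hb21 hs1 hs2 L1 L2)
        | exact eq13 (fullfull ha1 hb11 ha3 hb31 hs1 hs3 L1 L3)
        | exact eq23 (fullfull ha2 hb21 ha3 hb31 hs2 hs3 L2 L3)
        | exact eq12 (hithit ha1 hb11 ha2 hb21 hs1 hs2 L1 L2)
        | exact eq13 (hithit ha1 hb11 ha3 hb31 hs1 hs3 L1 L3)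
        | exact eq23 (hithit ha2 hb21 ha3 hb31 hs2 hs3 L2 L3)
        | exact finalC ha1 hb11 ha2 hb21 ha3 hb31 hs1 hs2 hs3 L1 L2 L3
        | exact finalC ha1 hb11 ha3 hb31 ha2 hb21 hs1 hs3 hs2 L1 L3 L2
        | exact finalC ha2 hb21 ha1 hb11 ha3 hb31 hs2 hs1 hs3 L2 L1 L3
        | exact finalC ha2 hb21 ha3 hb31 ha1 hb11 hs2 hs3 hs1 L2 L3 L1
        | exact finalC ha3 hb31 ha1 hb11 ha2 hb21 hs3 hs1 hs2 L3 L1 L2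
        | exact finalC ha3 hb31 ha2 hb21 ha1 hb11 hs3 hs2 hs1 L3 L2 L1


lemma no_cluster {k ν m : ℕ} (hk : 3 ≤ k) : ¬ HasCluster 4 k (Fam k ν m) := by
  rintro ⟨A, hinj, hmem, hcard, hempty⟩
  have hex : ∃ i, m ∉ A i := by
    by_contra h
    push_neg at h
    have : (m : ℕ) ∈ ⋂ i, (A i : Set ℕ) := Set.mem_iInter.mpr (fun i => h i)
    rw [hempty] at this
    exact this
  obtain ⟨i0, hi0⟩ := hex
  obtain ⟨c, hc, hDc⟩ := block_of_notMem (hmem i0) hi0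
  have hsup : ∀ i, A i ⊆ Finset.univ.sup A := fun i => Finset.le_sup (Finset.mem_univ i)
  by_cases hone : ∀ i, i ≠ i0 → m ∈ A i
  · -- exactly one block
    have hne0 : ∀ j : Fin 3, i0.succAbove j ≠ i0 := fun j => Fin.succAbove_ne i0 j
    set X1 := A (i0.succAbove 0) with hX1d
    set X2 := A (i0.succAbove 1) with hX2d
    set X3 := A (i0.succAbove 2) with hX3d
    have hsb : ∀ j : Fin 3, A (i0.succAbove j) ∈ SFam k m ∨ A (i0.succAbove j) ∈ BFam k ν m :=
      fun j => sb_of_mem (hmem _) (hone _ (hne0 j))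
    have hd : ∀ j j' : Fin 3, j ≠ j' → A (i0.succAbove j) ≠ A (i0.succAbove j') :=
      fun j j' hjj => hinj.ne (fun h => hjj (Fin.succAbove_right_injective h))
    have hUsub : (X1 ∪ X2 ∪ X3) ∪ DB k m c ⊆ Finset.univ.sup A := by
      apply Finset.union_subset
      · apply Finset.union_subset
        · exact Finset.union_subset (hsup _) (hsup _)
        · exact hsup _
      · rw [← hDc]; exact hsup i0
    have hUk : ((X1 ∪ X2 ∪ X3) \ DB k m c).card ≤ k := by
      have h1 := Finset.card_le_card hUsub
      have h2 := Finset.card_sdiff_add_card (s := X1 ∪ X2 ∪ X3) (t := DB k m c)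
      have h3 : (DB k m c).card = k := DB_card
      omega
    obtain ⟨w, hwD, hw1, hw2, hw3⟩ := heart hk (hsb 0) (hsb 1) (hsb 2)
      (hd 0 1 (by decide)) (hd 0 2 (by decide)) (hd 1 2 (by decide)) hUk
    have : (w : ℕ) ∈ ⋂ i, (A i : Set ℕ) := by
      apply Set.mem_iInter.mpr
      intro i
      by_cases h : i = i0
      · subst h
        rw [hDc]
        exact_mod_cast hwD
      · obtain ⟨j, hj⟩ := Fin.exists_succAbove_eq h
        rw [← hj]
        fin_cases j
        · exact_mod_cast hw1
        · exact_mod_cast hw2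
        · exact_mod_cast hw3
    rw [hempty] at this
    exact this
  · -- at least two blocks
    push_neg at hone
    obtain ⟨i1, hi1ne, hi1⟩ := hone
    obtain ⟨c', hc', hDc'⟩ := block_of_notMem (hmem i1) hi1
    have hcc : c ≠ c' := by
      intro h
      exact hi1ne (hinj (by rw [hDc, hDc', h]))
    have hdisj := DB_disjoint (k := k) (m := m) hcc
    have hex2 : ∃ i2 : Fin 4, i2 ≠ i0 ∧ i2 ≠ i1 := by
      by_cases h0 : i0.succAbove 0 = i1
      · refine ⟨i0.succAbove 1, Fin.succAbove_ne i0 1, fun h => ?_⟩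
        have := Fin.succAbove_right_injective (p := i0) (h.trans h0.symm)
        exact absurd this (by decide)
      · exact ⟨i0.succAbove 0, Fin.succAbove_ne i0 0, h0⟩
    obtain ⟨i2, h20, h21⟩ := hex2
    have hDD : DB k m c ∪ DB k m c' ⊆ Finset.univ.sup A := by
      apply Finset.union_subset
      · rw [← hDc]; exact hsup i0
      · rw [← hDc']; exact hsup i1
    have hDDcard : (DB k m c ∪ DB k m c').card = 2*k := by
      rw [Finset.card_union_of_disjoint hdisj, DB_card, DB_card]
      omega
    by_cases hm2 : m ∈ A i2
    · have hss : insert m (DB k m c ∪ DB k m c') ⊆ Finset.univ.sup A := by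
        intro y hy
        rcases Finset.mem_insert.mp hy with rfl | hy
        · exact hsup i2 hm2
        · exact hDD hy
      have hic : (insert m (DB k m c ∪ DB k m c')).card = 2*k + 1 := by
        rw [Finset.card_insert_of_notMem, hDDcard]
        rw [Finset.mem_union]
        rintro (h | h) <;> exact notMem_DB_self h
      have := Finset.card_le_card hss
      omega
    · obtain ⟨c'', hc'', hDc''⟩ := block_of_notMem (hmem i2) hm2
      have hcc2 : c ≠ c'' := fun h => h20 (hinj (by rw [hDc, hDc'', h])).symm
      have hcc3 : c' ≠ c'' := fun h => h21 (hinj (by rw [hDc', hDc'', h])).symm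
      have hdisj2 : Disjoint (DB k m c ∪ DB k m c') (DB k m c'') := by
        rw [Finset.disjoint_union_left]
        exact ⟨DB_disjoint hcc2, DB_disjoint hcc3⟩
      have hss : (DB k m c ∪ DB k m c') ∪ DB k m c'' ⊆ Finset.univ.sup A := by
        apply Finset.union_subset hDD
        rw [← hDc'']
        exact hsup i2
      have hic : ((DB k m c ∪ DB k m c') ∪ DB k m c'').card = 3*k := by
        rw [Finset.card_union_of_disjoint hdisj2, hDDcard, DB_card]
        omega
      have := Finset.card_le_card hss
      omega

end Stmt6Aux

theorem stmt6 (k ν : ℕ) (hk : 3 ≤ k) (hν : 2 ≤ ν) :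
    ∃ N : ℕ, ∀ n ≥ N, ∃ F : Finset (Finset ℕ),
      F ⊆ Finset.powersetCard k (Finset.range n) ∧
      ¬ HasCluster 4 k F ∧
      matchingNumber F = ν + 1 ∧
      F.card = Nat.choose (n - k * ν - 1) (k - 1) +
        k * (ν ^ 2 / 4) * Nat.choose (n - k * ν - 1) (k - 3) + ν := by
  refine ⟨k * ν + k + 1, fun n hn => ?_⟩
  obtain ⟨t, ht⟩ : ∃ t, t = k * ν := ⟨_, rfl⟩
  set m := n - k * ν - 1 with hmdef
  have hm2 : m = n - t - 1 := by rw [ht, hmdef]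
  have hn2 : n ≥ t + k + 1 := by rw [ht]; omega
  have hmk : k ≤ m := by omega
  have hn' : m + ν * k + 1 = n := by
    have : ν * k = t := by rw [ht, Nat.mul_comm]
    omega
  refine ⟨Stmt6Aux.Fam k ν m, Stmt6Aux.Fam_subset_powersetCard hk hn',
    Stmt6Aux.no_cluster hk, le_antisymm (Stmt6Aux.matching_upper (by omega))
      (Stmt6Aux.matching_lower hk hmk), ?_⟩
  rw [Stmt6Aux.Fam_card (by omega : 0 < k)]
  congr 2
  rw [← Stmt6Aux.parity]
  ring
end
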